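/- arXiv:2507.01488 — 11 statements merged into one kernel-verified Lean document; each statement's English description precedes it below -/
import Mathlib

section
/- For a > 0, set b = (√2/a)^a and define z(r) = log(2a²b / (r^{2-a}(1 + b·r^a)²)) for r > 0. Then z satisfies the ODE −z''(r) − (1/r)·z'(r) = e^{z(r)} for all r > 0. -/
open Real Set

theorem stmt_2 (a : ℝ) (ha : 0 < a) (b : ℝ) (hb : b = (Real.sqrt 2 / a) ^ a)
    (z : ℝ → ℝ)
    (hz : ∀ r : ℝ, z r = Real.log (2 * a ^ 2 * b / (r ^ (2 - a) * (1 + b * r ^ a) ^ 2))) :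
    ∀ r : ℝ, 0 < r → -(deriv (deriv z) r) - (1 / r) * deriv z r = Real.exp (z r) := by
  have hb0 : 0 < b := by
    rw [hb]; exact Real.rpow_pos_of_pos (div_pos (Real.sqrt_pos.mpr two_pos) ha) a
  set g : ℝ → ℝ := fun x => (a - 2) / x - 2 * a * b * x ^ a / (x * (1 + b * x ^ a)) with hg
  have hD : ∀ x : ℝ, 0 < x → 0 < 1 + b * x ^ a := by
    intro x hx
    have : (0:ℝ) < x ^ a := Real.rpow_pos_of_pos hx a
    positivity
  have hzw : ∀ x : ℝ, 0 < x →
      z x = Real.log (2 * a ^ 2 * b) - (2 - a) * Real.log x - 2 * Real.log (1 + b * x ^ a) := by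
    intro x hx
    have hxa : (0:ℝ) < x ^ a := Real.rpow_pos_of_pos hx a
    have h2a : (0:ℝ) < x ^ (2 - a) := Real.rpow_pos_of_pos hx _
    have hDx := hD x hx
    rw [hz, Real.log_div (by positivity) (by positivity),
      Real.log_mul (ne_of_gt h2a) (by positivity), Real.log_pow, Real.log_rpow hx]
    push_cast
    ring
  have key : ∀ x : ℝ, 0 < x → HasDerivAt z (g x) x := by
    intro x hx
    have hx0 : x ≠ 0 := ne_of_gt hx
    have hDx := hD x hx
    have h1 : HasDerivAt (fun y : ℝ => Real.log y) (1 / x) x := by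
      simpa [one_div] using Real.hasDerivAt_log hx0
    have h2 : HasDerivAt (fun y : ℝ => y ^ a) (a * x ^ (a - 1)) x :=
      Real.hasDerivAt_rpow_const (Or.inl hx0)
    have h3 : HasDerivAt (fun y : ℝ => 1 + b * y ^ a) (b * (a * x ^ (a - 1))) x :=
      (h2.const_mul b).const_add 1
    have h4 : HasDerivAt (fun y : ℝ => Real.log (1 + b * y ^ a))
        (b * (a * x ^ (a - 1)) / (1 + b * x ^ a)) x := h3.log (ne_of_gt hDx)
    have hw : HasDerivAt
        (fun y => Real.log (2 * a ^ 2 * b) - (2 - a) * Real.log y - 2 * Real.log (1 + b * y ^ a))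
        ((0 : ℝ) - (2 - a) * (1 / x) - 2 * (b * (a * x ^ (a - 1)) / (1 + b * x ^ a))) x :=
      ((hasDerivAt_const x _).sub (h1.const_mul (2 - a))).sub (h4.const_mul 2)
    have hxa1 : x ^ (a - 1) = x ^ a / x := by
      rw [Real.rpow_sub hx, Real.rpow_one]
    have heq : (0 : ℝ) - (2 - a) * (1 / x) - 2 * (b * (a * x ^ (a - 1)) / (1 + b * x ^ a)) = g x := by
      rw [hg]
      simp only [hxa1]
      field_simp
      ring
    rw [heq] at hw
    apply hw.congr_of_eventuallyEq
    filter_upwards [Ioi_mem_nhds hx] with y hy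
    exact hzw y hy
  intro r hr
  have hr0 : r ≠ 0 := ne_of_gt hr
  have hDr := hD r hr
  have hra : (0:ℝ) < r ^ a := Real.rpow_pos_of_pos hr a
  have hra1 : r ^ (a - 1) = r ^ a / r := by rw [Real.rpow_sub hr, Real.rpow_one]
  -- first derivative value
  have hd1 : deriv z r = g r := (key r hr).deriv
  -- second derivative: deriv z agrees with g near r
  have hev : deriv z =ᶠ[nhds r] g := by
    filter_upwards [Ioi_mem_nhds hr] with y hy
    exact (key y hy).deriv
  -- HasDerivAt g G r
  have hM : r * (1 + b * r ^ a) ≠ 0 := by positivity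
  have h2 : HasDerivAt (fun y : ℝ => y ^ a) (a * r ^ (a - 1)) r :=
    Real.hasDerivAt_rpow_const (Or.inl hr0)
  have hN : HasDerivAt (fun y : ℝ => 2 * a * b * y ^ a) (2 * a * b * (a * r ^ (a - 1))) r :=
    h2.const_mul _
  have hMd : HasDerivAt (fun y : ℝ => y * (1 + b * y ^ a))
      (1 * (1 + b * r ^ a) + r * (b * (a * r ^ (a - 1)))) r :=
    (hasDerivAt_id r).mul ((h2.const_mul b).const_add 1)
  have hinv : HasDerivAt (fun y : ℝ => (a - 2) / y) (-((a - 2) / r ^ 2)) r := by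
    have := (hasDerivAt_id r).div_const (1:ℝ)
    have h := (hasDerivAt_inv hr0).const_mul (a - 2)
    simpa [div_eq_mul_inv, sq, mul_comm, mul_left_comm, mul_assoc] using h
  have hG : HasDerivAt g (-((a - 2) / r ^ 2) -
      (2 * a * b * (a * r ^ (a - 1)) * (r * (1 + b * r ^ a)) -
        2 * a * b * r ^ a * (1 * (1 + b * r ^ a) + r * (b * (a * r ^ (a - 1))))) /
        (r * (1 + b * r ^ a)) ^ 2) r := by
    exact hinv.sub (hN.div hMd hM)
  have hd2 : deriv (deriv z) r = -((a - 2) / r ^ 2) -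
      (2 * a * b * (a * r ^ (a - 1)) * (r * (1 + b * r ^ a)) -
        2 * a * b * r ^ a * (1 * (1 + b * r ^ a) + r * (b * (a * r ^ (a - 1))))) /
        (r * (1 + b * r ^ a)) ^ 2 := by
    rw [hev.deriv_eq]
    exact hG.deriv
  have hexp : Real.exp (z r) = 2 * a ^ 2 * b / (r ^ (2 - a) * (1 + b * r ^ a) ^ 2) := by
    rw [hz]
    apply Real.exp_log
    have h2a : (0:ℝ) < r ^ (2 - a) := Real.rpow_pos_of_pos hr _
    positivity
  have hsplit : r ^ (2 - a) * r ^ a = r ^ 2 := by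
    rw [← Real.rpow_natCast r 2, ← Real.rpow_add hr]
    norm_num
  have h2a : (0:ℝ) < r ^ (2 - a) := Real.rpow_pos_of_pos hr _
  have hr2a : r ^ (2 - a) = r ^ 2 / r ^ a := by
    rw [eq_div_iff (ne_of_gt hra)]; exact hsplit
  rw [hd1, hd2, hexp, hg]
  simp only [hra1, hr2a]
  field_simp
  ring
end

section
/- Let a ∈ (0,2), η > 0, and η' ∈ (0,η) satisfy (2/(2+a))·log(η/η') − 1 + η'/η = 0. Define α(x) = 2(x/η) / (1 − (2/(2+a))·log(η/x)) for x ∈ [η', η]. Then α(η) = α(η') = 2, α has a unique minimum point x* = e^{−a/2}·η in (η', η), the minimum value is α(x*) = (2+a)·e^{−a/2} ∈ (0,2), and α is strictly decreasing on (η', x*) and strictly increasing on (x*, η). -/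
open Real Set

set_option maxHeartbeats 1000000 in
theorem stmt_7 (a η η' : ℝ) (ha : a ∈ Ioo (0 : ℝ) 2) (hη : 0 < η)
    (hη' : η' ∈ Ioo 0 η)
    (hrec : (2 / (2 + a)) * Real.log (η / η') - 1 + η' / η = 0)
    (α : ℝ → ℝ)
    (hα : ∀ x, α x = 2 * (x / η) / (1 - (2 / (2 + a)) * Real.log (η / x))) :
    α η = 2 ∧ α η' = 2 ∧
    Real.exp (-a / 2) * η ∈ Ioo η' η ∧
    α (Real.exp (-a / 2) * η) = (2 + a) * Real.exp (-a / 2) ∧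
    (2 + a) * Real.exp (-a / 2) ∈ Ioo (0 : ℝ) 2 ∧
    (∀ x ∈ Icc η' η, x ≠ Real.exp (-a / 2) * η →
      α (Real.exp (-a / 2) * η) < α x) ∧
    StrictAntiOn α (Ioo η' (Real.exp (-a / 2) * η)) ∧
    StrictMonoOn α (Ioo (Real.exp (-a / 2) * η) η) := by
  obtain ⟨ha0, ha2⟩ := ha
  obtain ⟨hη'0, hη'η⟩ := hη'
  have h2a : (0:ℝ) < 2 + a := by linarith
  set c : ℝ := 2 / (2 + a) with hc
  have hc0 : 0 < c := by positivity
  have hc1 : c < 1 := by rw [hc, div_lt_one h2a]; linarith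
  set t : ℝ := η' / η with ht
  have ht0 : 0 < t := div_pos hη'0 hη
  have ht1 : t < 1 := (div_lt_one hη).2 hη'η
  -- rewrite the recurrence
  have hlogdiv : Real.log (η / η') = Real.log η - Real.log η' :=
    Real.log_div hη.ne' hη'0.ne'
  have hrec' : c * (Real.log η - Real.log η') = 1 - t := by
    rw [← hlogdiv]; linarith [hrec]
  -- t < c
  have htc : t < c := by
    by_contra hct
    push_neg at hct
    have h1t : (1:ℝ)/t ≠ 1 := by
      intro h
      have : t = 1 := by field_simp at h; linarith
      linarith
    have hlt : Real.log (1/t) < 1/t - 1 :=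
      Real.log_lt_sub_one_of_pos (by positivity) h1t
    have hlog1t : Real.log (1/t) = Real.log η - Real.log η' := by
      rw [one_div, Real.log_inv, ht, Real.log_div hη'0.ne' hη.ne']; ring
    have h1 : c * (1/t - 1) ≤ 1 - t := by
      have : c * (1/t - 1) ≤ t * (1/t - 1) := by
        apply mul_le_mul_of_nonneg_right hct
        have h5 : 1 < 1/t := by rw [lt_div_iff₀ ht0]; linarith
        linarith
      have ht' : t * (1/t - 1) = 1 - t := by field_simp
      linarith
    nlinarith [hc0]
  -- t < exp(-a/2)
  have h1c : (1 - c)/c = a/2 := by rw [hc]; field_simp; ring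
  have hlogt : Real.log t = Real.log η' - Real.log η := by
    rw [ht, Real.log_div hη'0.ne' hη.ne']
  have htexp : t < Real.exp (-a/2) := by
    have h2 : Real.log η - Real.log η' = (1-t)/c := by
      field_simp at hrec' ⊢; linarith
    have h3 : (1-c)/c < (1-t)/c := (div_lt_div_iff_of_pos_right hc0).2 (by linarith)
    have h1 : Real.log t < -a/2 := by
      rw [h1c] at h3; rw [hlogt]; linarith
    calc t = Real.exp (Real.log t) := (Real.exp_log ht0).symm
    _ < Real.exp (-a/2) := Real.exp_lt_exp.2 h1
  have hexp0 : 0 < Real.exp (-a/2) := Real.exp_pos _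
  have hexp1 : Real.exp (-a/2) < 1 := by
    rw [Real.exp_lt_one_iff]; linarith
  have hmul1 : Real.exp (-a/2) * Real.exp (a/2) = 1 := by
    have h0 : -a/2 + a/2 = 0 := by ring
    rw [← Real.exp_add, h0, Real.exp_zero]
  have hx₀mem : Real.exp (-a/2) * η ∈ Ioo η' η := by
    constructor
    · have h1 : η' = t * η := by rw [ht]; field_simp
      rw [h1]; exact mul_lt_mul_of_pos_right htexp hη
    · nlinarith
  set x₀ := Real.exp (-a/2) * η with hx₀
  have hx₀pos : 0 < x₀ := by positivity
  set D : ℝ → ℝ := fun x => 1 - c * Real.log η + c * Real.log x with hD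
  have hDη' : D η' = t := by
    simp only [hD]; linear_combination -hrec'
  have hlogx₀ : Real.log x₀ = -a/2 + Real.log η := by
    rw [hx₀, Real.log_mul (Real.exp_ne_zero _) hη.ne', Real.log_exp]
  have hDx₀ : D x₀ = c := by
    simp only [hD, hlogx₀]; rw [hc]; field_simp; ring
  have hDmono : ∀ x y, 0 < x → x < y → D x < D y := by
    intro x y hx hxy
    simp only [hD]
    have := Real.log_lt_log hx hxy
    nlinarith
  have hDpos : ∀ x, η' ≤ x → 0 < D x := by
    intro x hx
    rcases eq_or_lt_of_le hx with h|h
    · rw [← h, hDη']; exact ht0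
    · have := hDmono η' x hη'0 h; rw [hDη'] at this; linarith
  set g : ℝ → ℝ := fun x => 2/η * x / D x with hg
  have hαg : ∀ x, 0 < x → α x = g x := by
    intro x hx
    rw [hα, hg]
    simp only [hD]
    rw [Real.log_div hη.ne' hx.ne']
    congr 1 <;> ring
  have hderiv : ∀ x, 0 < x → D x ≠ 0 → HasDerivAt g (2/η * (D x - c) / (D x)^2) x := by
    intro x hx hDx
    have h1 : HasDerivAt (fun y : ℝ => 2/η * y) (2/η) x := by
      simpa using (hasDerivAt_id x).const_mul (2/η)
    have h2 : HasDerivAt (fun y => 1 - c * Real.log η + c * Real.log y) (c * x⁻¹) x :=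
      ((Real.hasDerivAt_log hx.ne').const_mul c).const_add _
    have h3 : HasDerivAt g _ x := h1.div h2 hDx
    convert h3 using 1
    simp only [hD] at hDx ⊢
    field_simp
  have hcont : ∀ s : Set ℝ, s ⊆ Icc η' η → ContinuousOn g s := by
    intro s hs x hx
    have hx1 : η' ≤ x := (hs hx).1
    have hx0 : 0 < x := lt_of_lt_of_le hη'0 hx1
    exact ((hderiv x hx0 (hDpos x hx1).ne').continuousAt).continuousWithinAt
  have hanti : StrictAntiOn g (Icc η' x₀) := by
    apply strictAntiOn_of_deriv_neg (convex_Icc _ _)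
      (hcont _ (fun y hy => ⟨hy.1, le_trans hy.2 hx₀mem.2.le⟩))
    intro x hx
    rw [interior_Icc] at hx
    have hx0 : 0 < x := lt_trans hη'0 hx.1
    have hxD : 0 < D x := hDpos x hx.1.le
    rw [(hderiv x hx0 hxD.ne').deriv]
    have hDc : D x < c := by rw [← hDx₀]; exact hDmono x x₀ hx0 hx.2
    apply div_neg_of_neg_of_pos
    · exact mul_neg_of_pos_of_neg (by positivity) (by linarith)
    · positivity
  have hmono : StrictMonoOn g (Icc x₀ η) := by
    apply strictMonoOn_of_deriv_pos (convex_Icc _ _)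
      (hcont _ (fun y hy => ⟨le_trans hx₀mem.1.le hy.1, hy.2⟩))
    intro x hx
    rw [interior_Icc] at hx
    have hx0 : 0 < x := lt_trans hx₀pos hx.1
    have hxD : 0 < D x := hDpos x (le_trans hx₀mem.1.le hx.1.le)
    rw [(hderiv x hx0 hxD.ne').deriv]
    have hDc : c < D x := by rw [← hDx₀]; exact hDmono x₀ x hx₀pos hx.1
    apply div_pos
    · exact mul_pos (by positivity) (by linarith)
    · positivity
  have hαanti : StrictAntiOn α (Icc η' x₀) := by
    intro x hx y hy hxy
    rw [hαg x (lt_of_lt_of_le hη'0 hx.1), hαg y (lt_of_lt_of_le hη'0 hy.1)]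
    exact hanti hx hy hxy
  have hαmono : StrictMonoOn α (Icc x₀ η) := by
    intro x hx y hy hxy
    rw [hαg x (lt_of_lt_of_le hx₀pos hx.1), hαg y (lt_of_lt_of_le hx₀pos hy.1)]
    exact hmono hx hy hxy
  have hαη : α η = 2 := by
    rw [hα, div_self hη.ne', Real.log_one]; norm_num
  have hαη' : α η' = 2 := by
    rw [hα]
    have hden : 1 - c * Real.log (η/η') = t := by linarith
    rw [hden, ← ht, mul_div_assoc, div_self ht0.ne', mul_one]
  have hηx₀ : η / x₀ = Real.exp (a/2) := by
    rw [hx₀, div_eq_iff (by positivity)]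
    linear_combination (-η) * hmul1
  have hden2 : 1 - c * (a/2) = c := by rw [hc]; field_simp; ring
  have hαx₀ : α x₀ = (2 + a) * Real.exp (-a/2) := by
    rw [hα, hηx₀, Real.log_exp, hden2, hx₀, hc]
    field_simp
  have hvmem : (2 + a) * Real.exp (-a/2) ∈ Ioo (0:ℝ) 2 := by
    constructor
    · positivity
    · have h1 : a/2 + 1 < Real.exp (a/2) := Real.add_one_lt_exp (by positivity : (0:ℝ) < a/2).ne'
      have h2 : 0 < (Real.exp (a/2) - (a/2+1)) * Real.exp (-a/2) :=
        mul_pos (by linarith) hexp0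
      nlinarith [hmul1, h2]
  refine ⟨hαη, hαη', hx₀mem, hαx₀, hvmem, ?_, hαanti.mono Ioo_subset_Icc_self,
    hαmono.mono Ioo_subset_Icc_self⟩
  intro x hx hne
  rcases lt_or_gt_of_ne hne with h|h
  · exact hαanti ⟨hx.1, h.le⟩ ⟨le_trans hx.1 h.le, le_refl _⟩ h
  · exact hαmono ⟨le_refl _, hx₀mem.2.le⟩ ⟨h.le, hx.2⟩ h
end

section
/- Define sequences (a_k) and (η_k) by a_1 = 2, η_1 = 1, and for each k: η_{k+1} ∈ (0, η_k) is the unique solution of (2/(2+a_k))·log(η_k/η_{k+1}) − 1 + η_{k+1}/η_k = 0, and a_{k+1} = 2 − (η_{k+1}/η_k)(2+a_k). Then (a_k) ⊂ (0,2] and (η_k) ⊂ (0,1] are strictly decreasing, a_k → 0, η_k → 0, and Σ_{k=1}^∞ a_k = ∞. -/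
open Real Set Filter


lemma log1p_le (u : ℝ) (hu : 0 ≤ u) : Real.log (1 + u) ≤ u - u^2/2 + u^3/3 := by
  have key : MonotoneOn (fun x : ℝ => (x - x^2/2 + x^3/3) - Real.log (1 + x)) (Ici 0) := by
    apply monotoneOn_of_hasDerivWithinAt_nonneg (convex_Ici 0)
      (f' := fun x => (1 - x + x^2) - 1/(1 + x))
    · apply ContinuousOn.sub (by fun_prop)
      exact ContinuousOn.log (by fun_prop) (fun x hx => by simp only [mem_Ici] at hx; intro h; linarith)
    · intro x hx
      rw [interior_Ici] at hx
      have hx' : (0:ℝ) < x := hx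
      have h1 : (1:ℝ) + x ≠ 0 := by linarith
      have hp : HasDerivAt (fun x : ℝ => x - x^2/2 + x^3/3) (1 - x + x^2) x := by
        have := ((hasDerivAt_id' x).sub ((hasDerivAt_pow 2 x).div_const 2)).add
          ((hasDerivAt_pow 3 x).div_const 3)
        refine this.congr_deriv ?_; push_cast; ring
      have hl : HasDerivAt (fun x : ℝ => Real.log (1 + x)) (1/(1 + x)) x := by
        have := ((hasDerivAt_id' x).const_add 1).log h1
        simpa using this
      exact (hp.sub hl).hasDerivWithinAt
    · intro x hx
      rw [interior_Ici] at hx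
      have hx' : (0:ℝ) < x := hx
      have h1 : (0:ℝ) < 1 + x := by linarith
      have : (1 - x + x^2) - 1/(1 + x) = x^3/(1+x) := by field_simp; ring
      rw [this]; positivity
  have h := key (self_mem_Ici) (mem_Ici.2 hu) hu
  simp only [Real.log_one] at h
  norm_num at h
  linarith

lemma log1p_ge (u : ℝ) (hu : 0 ≤ u) : u - u^2/2 + u^3/3 - u^4/4 ≤ Real.log (1 + u) := by
  have key : MonotoneOn (fun x : ℝ => Real.log (1 + x) - (x - x^2/2 + x^3/3 - x^4/4)) (Ici 0) := by
    apply monotoneOn_of_hasDerivWithinAt_nonneg (convex_Ici 0)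
      (f' := fun x => 1/(1 + x) - (1 - x + x^2 - x^3))
    · apply ContinuousOn.sub _ (by fun_prop)
      exact ContinuousOn.log (by fun_prop) (fun x hx => by simp only [mem_Ici] at hx; intro h; linarith)
    · intro x hx
      rw [interior_Ici] at hx
      have hx' : (0:ℝ) < x := hx
      have h1 : (1:ℝ) + x ≠ 0 := by linarith
      have hp : HasDerivAt (fun x : ℝ => x - x^2/2 + x^3/3 - x^4/4) (1 - x + x^2 - x^3) x := by
        have := (((hasDerivAt_id' x).sub ((hasDerivAt_pow 2 x).div_const 2)).add
          ((hasDerivAt_pow 3 x).div_const 3)).sub ((hasDerivAt_pow 4 x).div_const 4)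
        refine this.congr_deriv ?_; push_cast; ring
      have hl : HasDerivAt (fun x : ℝ => Real.log (1 + x)) (1/(1 + x)) x := by
        have := ((hasDerivAt_id' x).const_add 1).log h1
        simpa using this
      exact (hl.sub hp).hasDerivWithinAt
    · intro x hx
      rw [interior_Ici] at hx
      have hx' : (0:ℝ) < x := hx
      have h1 : (0:ℝ) < 1 + x := by linarith
      have : 1/(1 + x) - (1 - x + x^2 - x^3) = x^4/(1+x) := by field_simp; ring
      rw [this]; positivity
  have h := key (self_mem_Ici) (mem_Ici.2 hu) hu
  simp only [Real.log_one] at h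
  norm_num at h
  linarith

lemma log1m_le (s : ℝ) (h0 : 0 ≤ s) (h1 : s < 1) : Real.log (1 - s) ≤ -s - s^2/2 := by
  have key : MonotoneOn (fun x : ℝ => (-x - x^2/2) - Real.log (1 - x)) (Ico 0 1) := by
    apply monotoneOn_of_hasDerivWithinAt_nonneg (convex_Ico 0 1)
      (f' := fun x => (-1 - x) + 1/(1 - x))
    · apply ContinuousOn.sub (by fun_prop)
      exact ContinuousOn.log (by fun_prop)
        (fun x hx => by obtain ⟨hx0, hx1⟩ := hx; intro h; linarith)
    · intro x hx
      rw [interior_Ico] at hx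
      obtain ⟨hx0, hx1⟩ := hx
      have h1' : (1:ℝ) - x ≠ 0 := by intro h; linarith
      have hp : HasDerivAt (fun x : ℝ => -x - x^2/2) (-1 - x) x := by
        have := ((hasDerivAt_id' x).neg).sub ((hasDerivAt_pow 2 x).div_const 2)
        refine this.congr_deriv ?_; push_cast; ring
      have hl : HasDerivAt (fun x : ℝ => Real.log (1 - x)) (-(1/(1 - x))) x := by
        have := ((hasDerivAt_id' x).const_sub 1).log h1'
        convert this using 1; field_simp
      have := hp.sub hl
      refine this.hasDerivWithinAt.congr_deriv ?_; ring
    · intro x hx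
      rw [interior_Ico] at hx
      obtain ⟨hx0, hx1⟩ := hx
      have h1' : (0:ℝ) < 1 - x := by linarith
      have : (-1 - x) + 1/(1 - x) = x^2/(1-x) := by field_simp; ring
      rw [this]; positivity
  have h := key (left_mem_Ico.2 one_pos) (mem_Ico.2 ⟨h0, h1⟩) h0
  simp only [sub_zero, Real.log_one] at h
  norm_num at h
  linarith

lemma log1m_ge (t : ℝ) (h0 : 0 ≤ t) (h1 : t ≤ 2/3) : -t - t^2/2 - t^3 ≤ Real.log (1 - t) := by
  have key : MonotoneOn (fun x : ℝ => Real.log (1 - x) - (-x - x^2/2 - x^3)) (Icc 0 (2/3)) := by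
    apply monotoneOn_of_hasDerivWithinAt_nonneg (convex_Icc 0 (2/3))
      (f' := fun x => -(1/(1 - x)) + (1 + x + 3*x^2))
    · apply ContinuousOn.sub _ (by fun_prop)
      exact ContinuousOn.log (by fun_prop)
        (fun x hx => by obtain ⟨hx0, hx1⟩ := hx; intro h; linarith)
    · intro x hx
      rw [interior_Icc] at hx
      obtain ⟨hx0, hx1⟩ := hx
      have h1' : (1:ℝ) - x ≠ 0 := by intro h; linarith
      have hp : HasDerivAt (fun x : ℝ => -x - x^2/2 - x^3) (-1 - x - 3*x^2) x := by
        have := (((hasDerivAt_id' x).neg).sub ((hasDerivAt_pow 2 x).div_const 2)).sub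
          (hasDerivAt_pow 3 x)
        refine this.congr_deriv ?_; push_cast; ring
      have hl : HasDerivAt (fun x : ℝ => Real.log (1 - x)) (-(1/(1 - x))) x := by
        have := ((hasDerivAt_id' x).const_sub 1).log h1'
        convert this using 1; field_simp
      have := hl.sub hp
      refine this.hasDerivWithinAt.congr_deriv ?_; ring
    · intro x hx
      rw [interior_Icc] at hx
      obtain ⟨hx0, hx1⟩ := hx
      have h1' : (0:ℝ) < 1 - x := by linarith
      have : -(1/(1 - x)) + (1 + x + 3*x^2) = x^2*(2 - 3*x)/(1-x) := by field_simp; ring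
      rw [this]
      apply div_nonneg (by nlinarith) (by linarith)
  have h := key (left_mem_Icc.2 (by norm_num)) (mem_Icc.2 ⟨h0, h1⟩) h0
  simp only [sub_zero, Real.log_one] at h
  norm_num at h
  linarith

lemma psi_anti : StrictAntiOn (fun x : ℝ => x + Real.log (1 - x)) (Ico 0 1) := by
  apply strictAntiOn_of_deriv_neg (convex_Ico 0 1)
  · apply ContinuousOn.add (by fun_prop)
    exact ContinuousOn.log (by fun_prop)
      (fun x hx => by obtain ⟨hx0, hx1⟩ := hx; intro h; linarith)
  · intro x hx
    rw [interior_Ico] at hx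
    obtain ⟨hx0, hx1⟩ := hx
    have h1' : (1:ℝ) - x ≠ 0 := by intro h; linarith
    have hd : HasDerivAt (fun x : ℝ => x + Real.log (1 - x)) (1 + (-(1/(1 - x)))) x := by
      apply (hasDerivAt_id' x).add
      have := ((hasDerivAt_id' x).const_sub 1).log h1'
      refine this.congr_deriv ?_; ring
    rw [hd.deriv]
    have h1'' : (0:ℝ) < 1 - x := by linarith
    have : 1 + (-(1/(1 - x))) = -x/(1-x) := by field_simp; ring
    rw [this]
    apply div_neg_of_neg_of_pos (by linarith) h1''


section
variable (a η : ℕ → ℝ)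

lemma step_lemma (k : ℕ) (hA : 0 < a k) (hE : 0 < η k)
    (hη1 : η (k + 1) ∈ Ioo 0 (η k))
    (heq : (2 / (2 + a k)) * Real.log (η k / η (k + 1)) - 1 + η (k + 1) / η k = 0)
    (hak : a (k + 1) = 2 - (η (k + 1) / η k) * (2 + a k)) :
    0 < a (k + 1) ∧ a (k + 1) < 2 ∧
    (a (k+1)/2 + Real.log (1 - a (k+1)/2) = Real.log (1 + a k/2) - a k/2) ∧
    Real.log (η (k+1)) = Real.log (η k) - (a k + a (k+1))/2 := by
  obtain ⟨hE'0, hE'⟩ := hη1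
  set r := η (k + 1) / η k with hrdef
  have hr0 : 0 < r := div_pos hE'0 hE
  have hr1 : r < 1 := (div_lt_one hE).2 hE'
  have h2A : (0:ℝ) < 2 + a k := by linarith
  have hinv : η k / η (k + 1) = r⁻¹ := by
    rw [hrdef]; field_simp
  have hlogflip : Real.log (η k / η (k + 1)) = -Real.log r := by
    rw [hinv, Real.log_inv]
  -- log r = (r - 1) * (2 + a k) / 2
  have hlr : Real.log r = (r - 1) * (2 + a k) / 2 := by
    rw [hlogflip] at heq
    have h2A' : (2 + a k) ≠ 0 := ne_of_gt h2A
    field_simp at heq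
    linarith
  -- positivity : r * (2 + a k) < 2
  have hkey : r * (2 + a k) < 2 := by
    have hx : Real.log r⁻¹ < r⁻¹ - 1 :=
      Real.log_lt_sub_one_of_pos (by positivity) (by
        intro h
        rw [inv_eq_one] at h
        linarith)
    rw [Real.log_inv] at hx
    -- -log r < r⁻¹ - 1 ; multiply by r :
    have hx2 : (-Real.log r) * r < (r⁻¹ - 1) * r := by
      exact mul_lt_mul_of_pos_right hx hr0
    rw [sub_mul, inv_mul_cancel₀ (ne_of_gt hr0)] at hx2
    rw [hlr] at hx2
    nlinarith [sub_pos.2 hr1]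
  have hApos : 0 < a (k + 1) := by rw [hak]; linarith
  have hAlt2 : a (k + 1) < 2 := by
    rw [hak]; nlinarith [mul_pos hr0 h2A]
  -- rewrite r in terms of a(k+1), a k
  have hr_eq : r = (1 - a (k+1)/2)/(1 + a k/2) := by
    rw [hak]; field_simp; ring
  have hv1 : a (k+1)/2 < 1 := by linarith
  have hu0 : (0:ℝ) < 1 + a k/2 := by linarith
  have hlog_split : Real.log r = Real.log (1 - a (k+1)/2) - Real.log (1 + a k/2) := by
    rw [hr_eq, Real.log_div (by linarith) (by linarith)]
  have hrhs : (r - 1) * (2 + a k) / 2 = -(a k/2 + a (k+1)/2) := by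
    rw [hr_eq]; field_simp; ring
  have hident : a (k+1)/2 + Real.log (1 - a (k+1)/2) = Real.log (1 + a k/2) - a k/2 := by
    have := hlr
    rw [hlog_split, hrhs] at this
    linarith
  have hlogeta : Real.log (η (k+1)) = Real.log (η k) - (a k + a (k+1))/2 := by
    have hlogr2 : Real.log r = Real.log (η (k+1)) - Real.log (η k) := by
      rw [hrdef, Real.log_div (ne_of_gt hE'0) (ne_of_gt hE)]
    rw [hlogr2, hrhs] at hlr
    linarith
  exact ⟨hApos, hAlt2, hident, hlogeta⟩

end

lemma dec_lemma (u v : ℝ) (hu0 : 0 < u) (hu1 : u ≤ 1) (hv0 : 0 ≤ v) (hv1 : v < 1)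
    (hid : v + Real.log (1 - v) = Real.log (1 + u) - u) : v ≤ u - u^2/12 := by
  set s := u * Real.sqrt (1 - 2*u/3 + u^2/2) with hsdef
  have harg : (0:ℝ) < 1 - 2*u/3 + u^2/2 := by nlinarith
  have hs0 : 0 ≤ s := mul_nonneg hu0.le (Real.sqrt_nonneg _)
  have hfac0 : (0:ℝ) ≤ 1 - u/3 + u^2/4 := by nlinarith [sq_nonneg (u/2 - 1/3)]
  have hsqrt_le : Real.sqrt (1 - 2*u/3 + u^2/2) ≤ 1 - u/3 + u^2/4 := by
    rw [show (1 - u/3 + u^2/4) = Real.sqrt ((1 - u/3 + u^2/4)^2) from (Real.sqrt_sq hfac0).symm]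
    exact Real.sqrt_le_sqrt (by nlinarith [sq_nonneg (u/3 - u^2/4)])
  have hs_le : s ≤ u - u^2/12 := by
    have h1 : s ≤ u * (1 - u/3 + u^2/4) :=
      mul_le_mul_of_nonneg_left hsqrt_le hu0.le
    nlinarith
  have hs1 : s < 1 := lt_of_le_of_lt hs_le (by nlinarith)
  have hs2 : s^2 = u^2 * (1 - 2*u/3 + u^2/2) := by
    rw [hsdef, mul_pow, Real.sq_sqrt harg.le]
  -- ψ(s) ≤ χ(u) = ψ(v)
  have hpsis : s + Real.log (1 - s) ≤ v + Real.log (1 - v) := by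
    have h1 : Real.log (1 - s) ≤ -s - s^2/2 := log1m_le s hs0 hs1
    have h2 : u - u^2/2 + u^3/3 - u^4/4 ≤ Real.log (1 + u) := log1p_ge u hu0.le
    have h3 : s + Real.log (1 - s) ≤ -(s^2)/2 := by linarith
    rw [hid]
    nlinarith
  -- conclude v ≤ s
  by_contra hcon
  push_neg at hcon
  have hlt : s < v := by linarith
  have := psi_anti (mem_Ico.2 ⟨hs0, hs1⟩) (mem_Ico.2 ⟨hv0, hv1⟩) hlt
  simp only at this
  linarith

lemma inc_lemma (u v : ℝ) (hu0 : 0 < u) (hu1 : u ≤ 1/3) (hv0 : 0 ≤ v) (hv1 : v < 1)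
    (hid : v + Real.log (1 - v) = Real.log (1 + u) - u) : u - 2*u^2 ≤ v := by
  set t := u - 2*u^2 with htdef
  have ht0 : 0 ≤ t := by nlinarith
  have ht23 : t ≤ 2/3 := by nlinarith
  have ht1 : t < 1 := by nlinarith
  have hpsit : v + Real.log (1 - v) ≤ t + Real.log (1 - t) := by
    have h1 : -t - t^2/2 - t^3 ≤ Real.log (1 - t) := log1m_ge t ht0 ht23
    have h2 : Real.log (1 + u) ≤ u - u^2/2 + u^3/3 := log1p_le u hu0.le
    rw [hid]
    nlinarith [sq_nonneg u, pow_pos hu0 3, pow_pos hu0 4]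
  by_contra hcon
  push_neg at hcon
  have := psi_anti (mem_Ico.2 ⟨hv0, hv1⟩) (mem_Ico.2 ⟨ht0, ht1⟩) hcon
  simp only at this
  linarith

theorem stmt_9 (a η : ℕ → ℝ) (ha0 : a 0 = 2) (hη0 : η 0 = 1)
    (hη : ∀ k, η (k + 1) ∈ Ioo 0 (η k) ∧
      (2 / (2 + a k)) * Real.log (η k / η (k + 1)) - 1 + η (k + 1) / η k = 0)
    (hηu : ∀ k, ∀ y ∈ Ioo 0 (η k),
      (2 / (2 + a k)) * Real.log (η k / y) - 1 + y / η k = 0 → y = η (k + 1))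
    (hak : ∀ k, a (k + 1) = 2 - (η (k + 1) / η k) * (2 + a k)) :
    (∀ k, a k ∈ Ioc (0 : ℝ) 2) ∧ (∀ k, η k ∈ Ioc (0 : ℝ) 1) ∧
    StrictAnti a ∧ StrictAnti η ∧
    Filter.Tendsto a Filter.atTop (nhds 0) ∧ Filter.Tendsto η Filter.atTop (nhds 0) ∧
    Filter.Tendsto (fun n => ∑ k ∈ Finset.range n, a k) Filter.atTop Filter.atTop := by
  -- basic positivity / bounds
  have pos : ∀ k, 0 < a k ∧ a k ≤ 2 ∧ 0 < η k ∧ η k ≤ 1 := by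
    intro k
    induction k with
    | zero => refine ⟨by rw [ha0]; norm_num, by rw [ha0], by rw [hη0]; norm_num, by rw [hη0]⟩
    | succ n ih =>
      obtain ⟨h1, h2, h3, h4⟩ := ih
      have st := step_lemma a η n h1 h3 (hη n).1 (hη n).2 (hak n)
      exact ⟨st.1, st.2.1.le, (hη n).1.1, le_trans (hη n).1.2.le h4⟩
  have ident : ∀ k, a (k+1)/2 + Real.log (1 - a (k+1)/2) = Real.log (1 + a k/2) - a k/2 :=
    fun k => (step_lemma a η k (pos k).1 (pos k).2.2.1 (hη k).1 (hη k).2 (hak k)).2.2.1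
  have logeta : ∀ k, Real.log (η (k+1)) = Real.log (η k) - (a k + a (k+1))/2 :=
    fun k => (step_lemma a η k (pos k).1 (pos k).2.2.1 (hη k).1 (hη k).2 (hak k)).2.2.2
  have hAlt2 : ∀ k, a (k+1) < 2 :=
    fun k => (step_lemma a η k (pos k).1 (pos k).2.2.1 (hη k).1 (hη k).2 (hak k)).2.1
  -- quantitative decrease
  have dec : ∀ k, a (k+1) ≤ a k - (a k)^2/24 := by
    intro k
    have h := dec_lemma (a k / 2) (a (k+1) / 2) (by linarith [(pos k).1])
      (by linarith [(pos k).2.1]) (by linarith [(pos (k+1)).1]) (by linarith [hAlt2 k])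
      (ident k)
    nlinarith [h]
  have adec : ∀ k, a (k+1) < a k := by
    intro k
    have := dec k
    nlinarith [(pos k).1]
  have hanti : StrictAnti a := strictAnti_nat_of_succ_lt adec
  -- a gets below any ε
  have hsmall : ∀ ε : ℝ, 0 < ε → ∃ K, a K < ε := by
    intro ε hε
    by_contra h
    push_neg at h
    have key : ∀ n : ℕ, a n ≤ 2 - n * (ε^2/24) := by
      intro n
      induction n with
      | zero => simp [ha0]
      | succ m ihm =>
        have h1 := dec m
        have h2 : ε ≤ a m := h m
        have h3 : ε^2 ≤ (a m)^2 := by nlinarith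
        push_cast
        push_cast at ihm
        nlinarith
    obtain ⟨n, hn⟩ := exists_nat_gt (48/ε^2)
    have h1 := key n
    have h2 : (0:ℝ) < a n := (pos n).1
    have h3 : 48/ε^2 * (ε^2/24) = 2 := by field_simp; ring
    nlinarith [mul_lt_mul_of_pos_right hn (show (0:ℝ) < ε^2/24 by positivity)]
  have haten : Tendsto a atTop (nhds 0) := by
    rw [Metric.tendsto_atTop]
    intro ε hε
    obtain ⟨K, hK⟩ := hsmall ε hε
    refine ⟨K, fun n hn => ?_⟩
    have h1 : a n ≤ a K := hanti.antitone hn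
    have h2 : 0 < a n := (pos n).1
    rw [Real.dist_eq]
    rw [abs_sub_lt_iff]
    constructor <;> linarith
  -- divergence of the sum
  obtain ⟨K, hK⟩ := hsmall (1/2) (by norm_num)
  have haK : 0 < a K := (pos K).1
  set M : ℝ := 1 / a K + 2 with hMdef
  have hM : 0 < M := by positivity
  have hhalf : ∀ n : ℕ, a (K + n) ≤ 1/2 :=
    fun n => le_trans (hanti.antitone (Nat.le_add_right K n)) hK.le
  have hinc : ∀ n : ℕ, a (K+n) - (a (K+n))^2 ≤ a (K+n+1) := by
    intro n
    have h := inc_lemma (a (K+n) / 2) (a (K+n+1) / 2) (by linarith [(pos (K+n)).1])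
      (by linarith [hhalf n]) (by linarith [(pos (K+n+1)).1]) (by linarith [hAlt2 (K+n)])
      (ident (K+n))
    nlinarith [h]
  have hrecip : ∀ n : ℕ, 1 / a (K + n) ≤ 1 / a K + 2 * n := by
    intro n
    induction n with
    | zero => simp
    | succ m ihm =>
      have hpos : 0 < a (K+m) := (pos (K+m)).1
      have hle : a (K+m) ≤ 1/2 := hhalf m
      have hprodpos : 0 < a (K+m) - (a (K+m))^2 := by nlinarith
      have h1 : 1 / a (K+m+1) ≤ 1 / (a (K+m) - (a (K+m))^2) :=
        one_div_le_one_div_of_le hprodpos (hinc m)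
      have h2 : 1 / (a (K+m) - (a (K+m))^2) ≤ 1 / a (K+m) + 2 := by
        rw [div_le_iff₀ hprodpos]
        have : (1 / a (K+m) + 2) * (a (K+m) - (a (K+m))^2)
            = (1 + 2 * a (K+m)) * (1 - a (K+m)) := by
          field_simp
        rw [this]
        nlinarith
      have : (K + (m+1)) = (K + m + 1) := by ring
      rw [this]
      push_cast
      linarith
  have hlow : ∀ n : ℕ, 1 / (M * (n+1)) ≤ a (K + n) := by
    intro n
    have h1 : 1 / a (K + n) ≤ M * (n+1) := by
      have := hrecip n
      have hn0 : (0:ℝ) ≤ (n:ℝ) := Nat.cast_nonneg n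
      have hK0 : 0 < 1 / a K := by positivity
      calc 1 / a (K + n) ≤ 1 / a K + 2 * n := hrecip n
        _ ≤ M * (n+1) := by rw [hMdef]; nlinarith
    have hpos : 0 < a (K + n) := (pos (K+n)).1
    have hMn : 0 < M * (n+1) := by positivity
    rw [div_le_iff₀ hMn]
    rw [div_le_iff₀ hpos] at h1
    nlinarith
  have Hlim : Tendsto (fun n => ∑ i ∈ Finset.range n, (1 / (i + 1) : ℝ)) atTop atTop :=
    Real.tendsto_sum_range_one_div_nat_succ_atTop
  have Tlim : Tendsto (fun n => ∑ j ∈ Finset.range n, a (K + j)) atTop atTop := by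
    apply tendsto_atTop_mono (f := fun n => (1/M) * ∑ i ∈ Finset.range n, (1 / (i + 1) : ℝ))
    · intro n
      rw [Finset.mul_sum]
      apply Finset.sum_le_sum
      intro i _
      have := hlow i
      rw [show (1/M) * (1/((i:ℝ)+1)) = 1/(M*((i:ℝ)+1)) by rw [div_mul_div_comm]; ring_nf]
      exact this
    · exact Tendsto.const_mul_atTop (by positivity) Hlim
  have Slim : Tendsto (fun n => ∑ k ∈ Finset.range n, a k) atTop atTop := by
    rw [← tendsto_add_atTop_iff_nat K]
    apply tendsto_atTop_mono _ Tlim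
    intro n
    have hsplit : ∑ k ∈ Finset.range (n + K), a k
        = ∑ k ∈ Finset.range K, a k + ∑ j ∈ Finset.range n, a (K + j) := by
      rw [add_comm n K, Finset.sum_range_add]
    rw [hsplit]
    have : (0:ℝ) ≤ ∑ k ∈ Finset.range K, a k :=
      Finset.sum_nonneg (fun k _ => (pos k).1.le)
    linarith
  -- η tends to 0
  have logsum : ∀ n, Real.log (η n) ≤ -(1/2) * ∑ k ∈ Finset.range n, a k := by
    intro n
    induction n with
    | zero => simp [hη0]
    | succ m ihm =>
      rw [Finset.sum_range_succ, logeta m]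
      have := (pos (m+1)).1
      linarith
  have hetale : ∀ n, η n ≤ Real.exp (-(1/2) * ∑ k ∈ Finset.range n, a k) := by
    intro n
    have h1 : η n = Real.exp (Real.log (η n)) := (Real.exp_log (pos n).2.2.1).symm
    rw [h1]
    exact Real.exp_le_exp.2 (logsum n)
  have hexplim : Tendsto (fun n => Real.exp (-(1/2) * ∑ k ∈ Finset.range n, a k)) atTop (nhds 0) := by
    apply Real.tendsto_exp_atBot.comp
    have h1 : Tendsto (fun n => (1/2) * ∑ k ∈ Finset.range n, a k) atTop atTop :=
      Tendsto.const_mul_atTop (by norm_num) Slim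
    have h2 := tendsto_neg_atTop_atBot.comp h1
    apply h2.congr
    intro n
    simp only [Function.comp_apply]
    ring
  have hetaten : Tendsto η atTop (nhds 0) :=
    squeeze_zero (fun n => (pos n).2.2.1.le) hetale hexplim
  exact ⟨fun k => ⟨(pos k).1, (pos k).2.1⟩, fun k => ⟨(pos k).2.2.1, (pos k).2.2.2⟩,
    hanti, strictAnti_nat_of_succ_lt (fun n => (hη n).1.2), haten, hetaten, Slim⟩
end

section
/- Let p > 1 and define sequences (a_k) ⊂ (0,2] and (δ_k) ⊂ (0,1] by a_1 = 2, δ_1 = 1, and for each k: δ_{k+1} ∈ (0, δ_k) is the unique solution of (2p/(2+a_k))(1 − δ_{k+1}/δ_k) − 1 + (δ_{k+1}/δ_k)^p = 0, and a_{k+1} = 2 − (δ_{k+1}/δ_k)^{p−1}(2+a_k). Suppose also p > 2. Then both (a_k) and (δ_k) are strictly decreasing and converge to 0, and Σ_{k=1}^∞ a_k = ∞. -/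
open Real Set Filter
-- assume p1,p2 compiled separately; for test, inline them

lemma aux_nonneg {F F' : ℝ → ℝ} {r : ℝ} (hr1 : r ≤ 1)
    (hF : ∀ x ∈ Icc r 1, HasDerivAt F (F' x) x)
    (hF' : ∀ x ∈ Ioo r 1, F' x ≤ 0)
    (h1 : F 1 = 0) : 0 ≤ F r := by
  have hanti : AntitoneOn F (Icc r 1) := by
    apply antitoneOn_of_deriv_nonpos (convex_Icc r 1)
    · exact fun x hx => (hF x hx).continuousAt.continuousWithinAt
    · intro x hx
      rw [interior_Icc] at hx
      exact (hF x (Ioo_subset_Icc_self hx)).differentiableAt.differentiableWithinAt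
    · intro x hx
      rw [interior_Icc] at hx
      rw [(hF x (Ioo_subset_Icc_self hx)).deriv]
      exact hF' x hx
  have := hanti (left_mem_Icc.2 hr1) (right_mem_Icc.2 hr1) hr1
  rw [h1] at this; exact this

lemma aux_pos {F F' : ℝ → ℝ} {r : ℝ} (hr1 : r < 1)
    (hF : ∀ x ∈ Icc r 1, HasDerivAt F (F' x) x)
    (hF' : ∀ x ∈ Ioo r 1, F' x < 0)
    (h1 : F 1 = 0) : 0 < F r := by
  have hanti : StrictAntiOn F (Icc r 1) := by
    apply strictAntiOn_of_deriv_neg (convex_Icc r 1)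
    · exact fun x hx => (hF x hx).continuousAt.continuousWithinAt
    · intro x hx
      rw [interior_Icc] at hx
      rw [(hF x (Ioo_subset_Icc_self hx)).deriv]
      exact hF' x hx
  have := hanti (left_mem_Icc.2 hr1.le) (right_mem_Icc.2 hr1.le) hr1
  rw [h1] at this; exact this

noncomputable def rr (p : ℝ) : ℝ := 1 - 2/p
noncomputable def KK1 (p : ℝ) : ℝ := p*(p-1)/2 * (rr p)^(p-2)
noncomputable def KK2 (p : ℝ) : ℝ := p*(p-1)/2
noncomputable def mmn (p : ℝ) : ℝ := min ((rr p)^(p-3)) 1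
noncomputable def mmx (p : ℝ) : ℝ := max ((rr p)^(p-3)) 1
noncomputable def GG1 (p : ℝ) : ℝ := p*(p-1)*(p-2)*(mmn p)/6
noncomputable def GG2 (p : ℝ) : ℝ := p*(p-1)*(p-2)*(mmx p)/6

lemma rr_pos {p : ℝ} (hp : 2 < p) : 0 < rr p := by
  have hp0 : (0:ℝ) < p := by linarith
  have : 2/p < 1 := (div_lt_one hp0).2 hp
  unfold rr; linarith

lemma rr_lt_one {p : ℝ} (hp : 2 < p) : rr p < 1 := by
  have hp0 : (0:ℝ) < p := by linarith
  have : 0 < 2/p := by positivity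
  unfold rr; linarith

lemma KK1_pos {p : ℝ} (hp : 2 < p) : 0 < KK1 p := by
  have := rr_pos hp
  have : (0:ℝ) < (rr p)^(p-2) := rpow_pos_of_pos this _
  have hA : 0 < p*(p-1)/2 := by nlinarith
  unfold KK1; exact mul_pos hA this

lemma mmn_pos {p : ℝ} (hp : 2 < p) : 0 < mmn p := by
  have := rr_pos hp
  have : (0:ℝ) < (rr p)^(p-3) := rpow_pos_of_pos this _
  unfold mmn; rw [lt_min_iff]; exact ⟨this, one_pos⟩

lemma GG1_pos {p : ℝ} (hp : 2 < p) : 0 < GG1 p := by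
  have := mmn_pos hp
  have hA : 0 < p*(p-1)*(p-2) := mul_pos (mul_pos (show (0:ℝ)<p by linarith)
    (show (0:ℝ)<p-1 by linarith)) (show (0:ℝ)<p-2 by linarith)
  unfold GG1; have := mul_pos hA this; linarith

lemma GG2_pos {p : ℝ} (hp : 2 < p) : 0 < GG2 p := by
  have h := mmn_pos hp
  have h2 : mmn p ≤ mmx p := min_le_max
  have hx : 0 < mmx p := lt_of_lt_of_le h h2
  have hA : 0 < p*(p-1)*(p-2) := mul_pos (mul_pos (show (0:ℝ)<p by linarith)
    (show (0:ℝ)<p-1 by linarith)) (show (0:ℝ)<p-2 by linarith)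
  unfold GG2; have := mul_pos hA hx; linarith

lemma pow2_bounds {p x : ℝ} (hp : 2 < p) (hx : x ∈ Icc (rr p) 1) :
    (rr p)^(p-2) ≤ x^(p-2) ∧ x^(p-2) ≤ 1 := by
  have h0 := rr_pos hp
  constructor
  · exact rpow_le_rpow h0.le hx.1 (by linarith)
  · exact rpow_le_one (by linarith [hx.1]) hx.2 (by linarith)

lemma pow3_bounds {p x : ℝ} (hp : 2 < p) (hx : x ∈ Icc (rr p) 1) :
    mmn p ≤ x^(p-3) ∧ x^(p-3) ≤ mmx p := by
  have h0 := rr_pos hp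
  have hx0 : 0 < x := lt_of_lt_of_le h0 hx.1
  rcases le_or_gt 0 (p-3) with h3 | h3
  · constructor
    · exact le_trans (min_le_left _ _) (rpow_le_rpow h0.le hx.1 h3)
    · exact le_trans (rpow_le_one hx0.le hx.2 h3) (le_max_right _ _)
  · constructor
    · refine le_trans (min_le_right _ _) ?_
      rw [← Real.one_rpow (p-3)]
      exact rpow_le_rpow_of_nonpos hx0 hx.2 h3.le
    · exact le_trans (rpow_le_rpow_of_nonpos h0 hx.1 h3.le) (le_max_left _ _)

lemma calc_f {p r : ℝ} (hp : 2 < p) (h0 : 0 < r) (h1 : r < 1) :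
    0 < 1 - r^p - p*r^(p-1)*(1-r) := by
  apply aux_pos (F := fun x => 1 - x^p - p*x^(p-1)*(1-x))
    (F' := fun x => -(p*x^(p-1)) - ((p*((p-1)*x^(p-1-1)))*(1-x) + (p*x^(p-1))*(-1))) h1
  · intro x hx
    have hx0 : (0:ℝ) < x := lt_of_lt_of_le h0 hx.1
    have A : HasDerivAt (fun y:ℝ => y^p) (p*x^(p-1)) x :=
      Real.hasDerivAt_rpow_const (Or.inl hx0.ne')
    have B : HasDerivAt (fun y:ℝ => y^(p-1)) ((p-1)*x^(p-1-1)) x :=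
      Real.hasDerivAt_rpow_const (Or.inl hx0.ne')
    have C : HasDerivAt (fun y:ℝ => 1-y) (-1) x := (hasDerivAt_id x).const_sub 1
    exact (A.const_sub 1).sub ((B.const_mul p).mul C)
  · intro x hx
    have hx0 : (0:ℝ) < x := lt_trans h0 hx.1
    have hxp : 0 < x^(p-1-1) := rpow_pos_of_pos hx0 _
    have hkey : -(p*x^(p-1)) - ((p*((p-1)*x^(p-1-1)))*(1-x) + (p*x^(p-1))*(-1))
        = -(p*(p-1)*x^(p-1-1)*(1-x)) := by ring
    rw [hkey, neg_lt_zero]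
    exact mul_pos (mul_pos (mul_pos (by linarith) (by linarith)) hxp) (by linarith [hx.2])
  · norm_num

lemma calc_phi_ub {p r : ℝ} (hp : 2 < p) (h0 : 0 < r) (h1 : r ≤ 1) :
    r^p - 1 + p*(1-r) ≤ KK2 p * ((1-r)*(1-r)) := by
  have key : (0:ℝ) ≤ (fun x => KK2 p * ((1-x)*(1-x)) - (x^p - 1 + p*(1-x))) r := by
    apply aux_nonneg (F' := fun x => KK2 p * ((-1)*(1-x) + (1-x)*(-1)) - (p*x^(p-1) + p*(-1))) h1
    · intro x hx
      have hx0 : (0:ℝ) < x := lt_of_lt_of_le h0 hx.1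
      have A : HasDerivAt (fun y:ℝ => y^p) (p*x^(p-1)) x :=
        Real.hasDerivAt_rpow_const (Or.inl hx0.ne')
      have C : HasDerivAt (fun y:ℝ => 1-y) (-1) x := (hasDerivAt_id x).const_sub 1
      exact ((C.mul C).const_mul (KK2 p)).sub ((A.sub_const 1).add (C.const_mul p))
    · intro x hx
      have hx0 : (0:ℝ) < x := lt_trans h0 hx.1
      have hb := one_add_mul_self_le_rpow_one_add (show (-1:ℝ) ≤ x-1 by linarith)
        (show (1:ℝ) ≤ p-1 by linarith)
      rw [show (1:ℝ)+(x-1) = x by ring] at hb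
      have hb' : 1 - x^(p-1) ≤ (p-1)*(1-x) := by nlinarith
      have hp0 : (0:ℝ) < p := by linarith
      have := mul_le_mul_of_nonneg_left hb' hp0.le
      unfold KK2; nlinarith
    · norm_num
  simpa using key

lemma calc_E {p r : ℝ} (hp : 2 < p) (hr : rr p ≤ r) (h1 : r ≤ 1) :
    (p-1)*(rr p)^(p-2)*(1-r) ≤ 1 - r^(p-1) := by
  have h0 : (0:ℝ) < r := lt_of_lt_of_le (rr_pos hp) hr
  have key : (0:ℝ) ≤ (fun x => (1 - x^(p-1)) - (p-1)*(rr p)^(p-2)*(1-x)) r := by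
    apply aux_nonneg (F' := fun x => -((p-1)*x^(p-1-1)) - ((p-1)*(rr p)^(p-2))*(-1)) h1
    · intro x hx
      have hx0 : (0:ℝ) < x := lt_of_lt_of_le h0 hx.1
      have B : HasDerivAt (fun y:ℝ => y^(p-1)) ((p-1)*x^(p-1-1)) x :=
        Real.hasDerivAt_rpow_const (Or.inl hx0.ne')
      have C : HasDerivAt (fun y:ℝ => 1-y) (-1) x := (hasDerivAt_id x).const_sub 1
      exact (B.const_sub 1).sub (C.const_mul ((p-1)*(rr p)^(p-2)))
    · intro x hx
      have hxmem : x ∈ Icc (rr p) 1 := ⟨le_trans hr hx.1.le, hx.2.le⟩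
      have hb := (pow2_bounds hp hxmem).1
      rw [show p-1-1 = p-2 by ring]
      nlinarith
    · norm_num
  simp only at key; linarith [key]

lemma calc_phi_lb {p r : ℝ} (hp : 2 < p) (hr : rr p ≤ r) (h1 : r ≤ 1) :
    KK1 p * ((1-r)*(1-r)) ≤ r^p - 1 + p*(1-r) := by
  have h0 : (0:ℝ) < r := lt_of_lt_of_le (rr_pos hp) hr
  have key : (0:ℝ) ≤ (fun x => (x^p - 1 + p*(1-x)) - KK1 p * ((1-x)*(1-x))) r := by
    apply aux_nonneg (F' := fun x => (p*x^(p-1) + p*(-1)) - KK1 p * ((-1)*(1-x) + (1-x)*(-1))) h1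
    · intro x hx
      have hx0 : (0:ℝ) < x := lt_of_lt_of_le h0 hx.1
      have A : HasDerivAt (fun y:ℝ => y^p) (p*x^(p-1)) x :=
        Real.hasDerivAt_rpow_const (Or.inl hx0.ne')
      have C : HasDerivAt (fun y:ℝ => 1-y) (-1) x := (hasDerivAt_id x).const_sub 1
      exact ((A.sub_const 1).add (C.const_mul p)).sub ((C.mul C).const_mul (KK1 p))
    · intro x hx
      have hE := calc_E hp (le_trans hr hx.1.le) hx.2.le
      have hp0 : (0:ℝ) < p := by linarith
      have := mul_le_mul_of_nonneg_left hE hp0.le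
      unfold KK1; nlinarith
    · norm_num
  simp only at key; linarith [key]

lemma calc_u_lb {p r : ℝ} (hp : 2 < p) (hr : rr p ≤ r) (h1 : r ≤ 1) :
    (p-1)*(p-2)*(mmn p)/2 * ((1-r)*(1-r)) ≤ 1 - r^(p-1) - (p-1)*(1-r)*r^(p-2) := by
  have h0 : (0:ℝ) < r := lt_of_lt_of_le (rr_pos hp) hr
  have key : (0:ℝ) ≤ (fun x => 1 - x^(p-1) - (p-1)*((1-x)*x^(p-2))
      - (p-1)*(p-2)*(mmn p)/2 * ((1-x)*(1-x))) r := by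
    apply aux_nonneg (F' := fun x => (p-1)*(p-2)*(1-x)*(mmn p - x^(p-3))) h1
    · intro x hx
      have hx0 : (0:ℝ) < x := lt_of_lt_of_le h0 hx.1
      have B : HasDerivAt (fun y:ℝ => y^(p-1)) ((p-1)*x^(p-1-1)) x :=
        Real.hasDerivAt_rpow_const (Or.inl hx0.ne')
      have B2 : HasDerivAt (fun y:ℝ => y^(p-2)) ((p-2)*x^(p-2-1)) x :=
        Real.hasDerivAt_rpow_const (Or.inl hx0.ne')
      have C : HasDerivAt (fun y:ℝ => 1-y) (-1) x := (hasDerivAt_id x).const_sub 1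
      have D := ((B.const_sub 1).sub ((C.mul B2).const_mul (p-1))).sub
        ((C.mul C).const_mul ((p-1)*(p-2)*(mmn p)/2))
      refine D.congr_deriv ?_
      rw [show p-1-1 = p-2 by ring, show p-2-1 = p-3 by ring]; ring
    · intro x hx
      have hxmem : x ∈ Icc (rr p) 1 := ⟨le_trans hr hx.1.le, hx.2.le⟩
      have hb := (pow3_bounds hp hxmem).1
      have h2 : (0:ℝ) < p-1 := by linarith
      have h3 : (0:ℝ) < p-2 := by linarith
      have h4 : (0:ℝ) < 1-x := by linarith [hx.2]
      nlinarith [mul_nonneg (mul_nonneg (mul_nonneg h2.le h3.le) h4.le) (sub_nonneg.2 hb)]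
    · norm_num
  simp only at key; linarith [key]

lemma calc_u_ub {p r : ℝ} (hp : 2 < p) (hr : rr p ≤ r) (h1 : r ≤ 1) :
    1 - r^(p-1) - (p-1)*(1-r)*r^(p-2) ≤ (p-1)*(p-2)*(mmx p)/2 * ((1-r)*(1-r)) := by
  have h0 : (0:ℝ) < r := lt_of_lt_of_le (rr_pos hp) hr
  have key : (0:ℝ) ≤ (fun x => (p-1)*(p-2)*(mmx p)/2 * ((1-x)*(1-x))
      - (1 - x^(p-1) - (p-1)*((1-x)*x^(p-2)))) r := by
    apply aux_nonneg (F' := fun x => (p-1)*(p-2)*(1-x)*(x^(p-3) - mmx p)) h1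
    · intro x hx
      have hx0 : (0:ℝ) < x := lt_of_lt_of_le h0 hx.1
      have B : HasDerivAt (fun y:ℝ => y^(p-1)) ((p-1)*x^(p-1-1)) x :=
        Real.hasDerivAt_rpow_const (Or.inl hx0.ne')
      have B2 : HasDerivAt (fun y:ℝ => y^(p-2)) ((p-2)*x^(p-2-1)) x :=
        Real.hasDerivAt_rpow_const (Or.inl hx0.ne')
      have C : HasDerivAt (fun y:ℝ => 1-y) (-1) x := (hasDerivAt_id x).const_sub 1
      have D := (((C.mul C).const_mul ((p-1)*(p-2)*(mmx p)/2))).sub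
        ((B.const_sub 1).sub ((C.mul B2).const_mul (p-1)))
      refine D.congr_deriv ?_
      rw [show p-1-1 = p-2 by ring, show p-2-1 = p-3 by ring]; ring
    · intro x hx
      have hxmem : x ∈ Icc (rr p) 1 := ⟨le_trans hr hx.1.le, hx.2.le⟩
      have hb := (pow3_bounds hp hxmem).2
      have h2 : (0:ℝ) < p-1 := by linarith
      have h3 : (0:ℝ) < p-2 := by linarith
      have h4 : (0:ℝ) < 1-x := by linarith [hx.2]
      nlinarith [mul_nonneg (mul_nonneg (mul_nonneg h2.le h3.le) h4.le) (sub_nonneg.2 hb)]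
    · norm_num
  simp only at key; linarith [key]

lemma calc_g_lb {p r : ℝ} (hp : 2 < p) (hr : rr p ≤ r) (h1 : r ≤ 1) :
    GG1 p * ((1-r)*(1-r)*(1-r)) ≤ p*(1-r)*(1+r^(p-1)) - 2*(1-r^p) := by
  have h0 : (0:ℝ) < r := lt_of_lt_of_le (rr_pos hp) hr
  have key : (0:ℝ) ≤ (fun x => (p*(1-x)*(1+x^(p-1)) - 2*(1-x^p))
      - GG1 p * ((1-x)*(1-x)*(1-x))) r := by
    apply aux_nonneg (F' := fun x => -(p*(1 - x^(p-1) - (p-1)*(1-x)*x^(p-2)))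
      + 3*GG1 p*((1-x)*(1-x))) h1
    · intro x hx
      have hx0 : (0:ℝ) < x := lt_of_lt_of_le h0 hx.1
      have A : HasDerivAt (fun y:ℝ => y^p) (p*x^(p-1)) x :=
        Real.hasDerivAt_rpow_const (Or.inl hx0.ne')
      have B : HasDerivAt (fun y:ℝ => y^(p-1)) ((p-1)*x^(p-1-1)) x :=
        Real.hasDerivAt_rpow_const (Or.inl hx0.ne')
      have C : HasDerivAt (fun y:ℝ => 1-y) (-1) x := (hasDerivAt_id x).const_sub 1
      have D := (((C.const_mul p).mul (B.const_add 1)).sub ((A.const_sub 1).const_mul 2)).sub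
        (((C.mul C).mul C).const_mul (GG1 p))
      refine D.congr_deriv ?_
      rw [show p-1-1 = p-2 by ring, Pi.mul_apply]; ring
    · intro x hx
      have hu := calc_u_lb hp (le_trans hr hx.1.le) hx.2.le
      have hp0 : (0:ℝ) < p := by linarith
      have := mul_le_mul_of_nonneg_left hu hp0.le
      have hGG : 3*GG1 p = p*((p-1)*(p-2)*(mmn p)/2) := by unfold GG1; ring
      nlinarith
    · norm_num
  simp only at key; linarith [key]

lemma calc_g_ub {p r : ℝ} (hp : 2 < p) (hr : rr p ≤ r) (h1 : r ≤ 1) :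
    p*(1-r)*(1+r^(p-1)) - 2*(1-r^p) ≤ GG2 p * ((1-r)*(1-r)*(1-r)) := by
  have h0 : (0:ℝ) < r := lt_of_lt_of_le (rr_pos hp) hr
  have key : (0:ℝ) ≤ (fun x => GG2 p * ((1-x)*(1-x)*(1-x))
      - (p*(1-x)*(1+x^(p-1)) - 2*(1-x^p))) r := by
    apply aux_nonneg (F' := fun x => (p*(1 - x^(p-1) - (p-1)*(1-x)*x^(p-2)))
      - 3*GG2 p*((1-x)*(1-x))) h1
    · intro x hx
      have hx0 : (0:ℝ) < x := lt_of_lt_of_le h0 hx.1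
      have A : HasDerivAt (fun y:ℝ => y^p) (p*x^(p-1)) x :=
        Real.hasDerivAt_rpow_const (Or.inl hx0.ne')
      have B : HasDerivAt (fun y:ℝ => y^(p-1)) ((p-1)*x^(p-1-1)) x :=
        Real.hasDerivAt_rpow_const (Or.inl hx0.ne')
      have C : HasDerivAt (fun y:ℝ => 1-y) (-1) x := (hasDerivAt_id x).const_sub 1
      have D := ((((C.mul C).mul C).const_mul (GG2 p))).sub
        (((C.const_mul p).mul (B.const_add 1)).sub ((A.const_sub 1).const_mul 2))
      refine D.congr_deriv ?_
      rw [show p-1-1 = p-2 by ring, Pi.mul_apply]; ring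
    · intro x hx
      have hu := calc_u_ub hp (le_trans hr hx.1.le) hx.2.le
      have hp0 : (0:ℝ) < p := by linarith
      have := mul_le_mul_of_nonneg_left hu hp0.le
      have hGG : 3*GG2 p = p*((p-1)*(p-2)*(mmx p)/2) := by unfold GG2; ring
      nlinarith
    · norm_num
  simp only at key; linarith [key]

noncomputable def cc1 (p : ℝ) : ℝ := 1/(2*(p-1))
noncomputable def cc2 (p : ℝ) : ℝ := p/(2*KK1 p)
noncomputable def CC1 (p : ℝ) : ℝ := 2*GG1 p*(cc1 p)^2/p
noncomputable def CC2 (p : ℝ) : ℝ := 4*GG2 p*(cc2 p)^2/p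

lemma cc1_pos {p : ℝ} (hp : 2 < p) : 0 < cc1 p := by
  unfold cc1; have : (0:ℝ) < 2*(p-1) := by linarith
  positivity

lemma cc2_pos {p : ℝ} (hp : 2 < p) : 0 < cc2 p := by
  unfold cc2; have h := KK1_pos hp; have : (0:ℝ) < p := by linarith
  positivity

lemma CC1_pos {p : ℝ} (hp : 2 < p) : 0 < CC1 p := by
  unfold CC1; have h := GG1_pos hp; have h2 := cc1_pos hp; have : (0:ℝ) < p := by linarith
  positivity

lemma CC2_pos {p : ℝ} (hp : 2 < p) : 0 < CC2 p := by
  unfold CC2; have h := GG2_pos hp; have h2 := cc2_pos hp; have : (0:ℝ) < p := by linarith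
  positivity

lemma step {p a r : ℝ} (hp : 2 < p) (ha : 0 < a) (ha2 : a ≤ 2) (hr0 : 0 < r) (hr1 : r < 1)
    (heq : (2*p/(2+a))*(1-r) - 1 + r^p = 0) :
    0 < 2 - r^(p-1)*(2+a) ∧ cc1 p * a ≤ 1 - r ∧
    CC1 p * a^2 ≤ a - (2 - r^(p-1)*(2+a)) ∧ a - (2 - r^(p-1)*(2+a)) ≤ CC2 p * a^2 := by
  have hp0 : (0:ℝ) < p := by linarith
  have h2a : (0:ℝ) < 2+a := by linarith
  have hs : (0:ℝ) < 1-r := by linarith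
  have hrp : (0:ℝ) < r^p := rpow_pos_of_pos hr0 p
  have hrp1 : (0:ℝ) < r^(p-1) := rpow_pos_of_pos hr0 _
  -- the basic equation, cleared of denominators
  have key : 2*p*(1-r) = (1-r^p)*(2+a) := by
    have h1 : (2*p/(2+a))*(1-r) = 1 - r^p := by linarith
    field_simp at h1
    linarith
  -- r is at least rr p
  have s1 : rr p ≤ r := by
    have hb : (1-r^p)*(2+a) ≤ 1*4 :=
      mul_le_mul (by linarith) (by linarith) (by linarith) one_pos.le
    have hpr : p*(1-r) ≤ 2 := by linarith
    have : 1 - r ≤ 2/p := by rw [le_div_iff₀ hp0]; linarith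
    unfold rr; linarith
  -- positivity of a'
  have hf := calc_f hp hr0 hr1
  have hX : (p*(1-r))*(r^(p-1)*(2+a)) < (p*(1-r))*2 := by
    linarith [mul_pos hf h2a, key]
  have st1 : 0 < 2 - r^(p-1)*(2+a) := by
    have := lt_of_mul_lt_mul_left hX (mul_nonneg hp0.le hs.le)
    linarith
  -- phi identity
  have hphi : (r^p - 1 + p*(1-r))*(2+a) = p*a*(1-r) := by linear_combination key
  have hKK2 : (0:ℝ) < KK2 p := by unfold KK2; nlinarith
  have hKK1 := KK1_pos hp
  -- lower bound on 1 - r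
  have hub := calc_phi_ub hp hr0 hr1.le
  have h5a : (p*a)*(1-r) ≤ (4*KK2 p*(1-r))*(1-r) := by
    linarith [mul_nonneg (sub_nonneg.2 hub) h2a.le, hphi,
      mul_nonneg (mul_nonneg hKK2.le (mul_self_nonneg (1-r))) (show (0:ℝ) ≤ 2-a by linarith)]
  have h5b : p*a ≤ 4*KK2 p*(1-r) := le_of_mul_le_mul_right h5a hs
  have st2 : cc1 p * a ≤ 1 - r := by
    have hp1 : (0:ℝ) < 2*(p-1) := by linarith
    unfold cc1
    rw [one_div, inv_mul_le_iff₀ hp1]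
    unfold KK2 at h5b
    nlinarith
  -- upper bound on 1 - r
  have hlb := calc_phi_lb hp s1 hr1.le
  have h6a : (2*KK1 p*(1-r))*(1-r) ≤ (p*a)*(1-r) := by
    linarith [mul_nonneg (sub_nonneg.2 hlb) h2a.le, hphi,
      mul_nonneg (mul_nonneg hKK1.le (mul_self_nonneg (1-r))) ha.le]
  have h6b : 2*KK1 p*(1-r) ≤ p*a := le_of_mul_le_mul_right h6a hs
  have st2' : 1 - r ≤ cc2 p * a := by
    have hk : (0:ℝ) < 2*KK1 p := by linarith
    unfold cc2
    rw [div_mul_eq_mul_div, le_div_iff₀ hk]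
    linarith
  -- g identity
  have hgid : (p*(1-r)*(1+r^(p-1)) - 2*(1-r^p))*(2+a)
      = p*(1-r)*(a - (2 - r^(p-1)*(2+a))) := by linear_combination 2*key
  have hGG1 := GG1_pos hp
  have hGG2 := GG2_pos hp
  have hg1 := calc_g_lb hp s1 hr1.le
  have hg2 := calc_g_ub hp s1 hr1.le
  have hs3 : (0:ℝ) ≤ (1-r)*(1-r)*(1-r) := by positivity
  -- lower bound on decrease
  have e1 : 2*GG1 p*((1-r)*(1-r)*(1-r)) ≤ p*(1-r)*(a - (2 - r^(p-1)*(2+a))) := by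
    linarith [mul_nonneg (sub_nonneg.2 hg1) h2a.le, hgid,
      mul_nonneg (mul_nonneg hGG1.le hs3) ha.le]
  have e2 : 2*GG1 p*((1-r)*(1-r)) ≤ p*(a - (2 - r^(p-1)*(2+a))) := by
    apply le_of_mul_le_mul_right _ hs
    linarith [e1]
  have hsq : (cc1 p*a)*(cc1 p*a) ≤ (1-r)*(1-r) :=
    mul_le_mul st2 st2 (mul_pos (cc1_pos hp) ha).le hs.le
  have st3 : CC1 p * a^2 ≤ a - (2 - r^(p-1)*(2+a)) := by
    apply le_of_mul_le_mul_left _ hp0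
    have expand : p*(CC1 p*a^2) = 2*GG1 p*((cc1 p*a)*(cc1 p*a)) := by
      unfold CC1; field_simp
    rw [expand]
    linarith [mul_le_mul_of_nonneg_left hsq (by positivity : (0:ℝ) ≤ 2*GG1 p), e2]
  -- upper bound on decrease
  have e1' : p*(1-r)*(a - (2 - r^(p-1)*(2+a))) ≤ 4*GG2 p*((1-r)*(1-r)*(1-r)) := by
    linarith [mul_nonneg (sub_nonneg.2 hg2) h2a.le, hgid,
      mul_nonneg (mul_nonneg hGG2.le hs3) (show (0:ℝ) ≤ 2-a by linarith)]
  have e2' : p*(a - (2 - r^(p-1)*(2+a))) ≤ 4*GG2 p*((1-r)*(1-r)) := by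
    apply le_of_mul_le_mul_right _ hs
    linarith [e1']
  have hsq' : (1-r)*(1-r) ≤ (cc2 p*a)*(cc2 p*a) :=
    mul_le_mul st2' st2' hs.le (mul_pos (cc2_pos hp) ha).le
  have st4 : a - (2 - r^(p-1)*(2+a)) ≤ CC2 p * a^2 := by
    apply le_of_mul_le_mul_left _ hp0
    have expand : p*(CC2 p*a^2) = 4*GG2 p*((cc2 p*a)*(cc2 p*a)) := by
      unfold CC2; field_simp
    rw [expand]
    linarith [mul_le_mul_of_nonneg_left hsq' (by positivity : (0:ℝ) ≤ 4*GG2 p), e2']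
  exact ⟨st1, st2, st3, st4⟩

theorem stmt_10 (p : ℝ) (hp : 2 < p) (a δ : ℕ → ℝ) (ha0 : a 0 = 2) (hδ0 : δ 0 = 1)
    (hδ : ∀ k, δ (k + 1) ∈ Ioo 0 (δ k) ∧
      (2 * p / (2 + a k)) * (1 - δ (k + 1) / δ k) - 1 + (δ (k + 1) / δ k) ^ p = 0)
    (hδu : ∀ k, ∀ y ∈ Ioo 0 (δ k),
      (2 * p / (2 + a k)) * (1 - y / δ k) - 1 + (y / δ k) ^ p = 0 → y = δ (k + 1))
    (hak : ∀ k, a (k + 1) = 2 - (δ (k + 1) / δ k) ^ (p - 1) * (2 + a k)) :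
    (∀ k, a k ∈ Ioc (0 : ℝ) 2) ∧ (∀ k, δ k ∈ Ioc (0 : ℝ) 1) ∧
    StrictAnti a ∧ StrictAnti δ ∧
    Filter.Tendsto a Filter.atTop (nhds 0) ∧ Filter.Tendsto δ Filter.atTop (nhds 0) ∧
    Filter.Tendsto (fun n => ∑ k ∈ Finset.range n, a k) Filter.atTop Filter.atTop := by
  have hδpos : ∀ k, 0 < δ k := by
    intro k; cases k with
    | zero => rw [hδ0]; norm_num
    | succ n => exact (hδ n).1.1
  have hδanti : StrictAnti δ := strictAnti_nat_of_succ_lt (fun n => (hδ n).1.2)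
  have hr0 : ∀ k, 0 < δ (k+1) / δ k := fun k => div_pos (hδpos _) (hδpos _)
  have hr1 : ∀ k, δ (k+1) / δ k < 1 := fun k => (div_lt_one (hδpos k)).2 (hδ k).1.2
  have hmem : ∀ k, 0 < a k ∧ a k ≤ 2 := by
    intro k; induction k with
    | zero => rw [ha0]; norm_num
    | succ n ih =>
      have hstep := step hp ih.1 ih.2 (hr0 n) (hr1 n) (hδ n).2
      rw [hak n]
      refine ⟨hstep.1, ?_⟩
      linarith [hstep.2.2.1, mul_nonneg (CC1_pos hp).le (sq_nonneg (a n)), ih.2]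
  have hstepk := fun k => step hp (hmem k).1 (hmem k).2 (hr0 k) (hr1 k) (hδ k).2
  have hdec : ∀ k, CC1 p * (a k)^2 ≤ a k - a (k+1) := by
    intro k; rw [hak k]; exact (hstepk k).2.2.1
  have hdec' : ∀ k, a k - a (k+1) ≤ CC2 p * (a k)^2 := by
    intro k; rw [hak k]; exact (hstepk k).2.2.2
  have hgap : ∀ k, cc1 p * a k ≤ 1 - δ (k+1)/δ k := fun k => (hstepk k).2.1
  have haanti : StrictAnti a := strictAnti_nat_of_succ_lt (fun n => by
    linarith [hdec n, mul_pos (CC1_pos hp) (pow_pos (hmem n).1 2)])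
  have hbdd : BddBelow (range a) := ⟨0, by rintro x ⟨k, rfl⟩; exact (hmem k).1.le⟩
  have htaL : Tendsto a atTop (nhds (⨅ k, a k)) := tendsto_atTop_ciInf haanti.antitone hbdd
  have hL0 : 0 ≤ ⨅ k, a k := le_ciInf (fun k => (hmem k).1.le)
  have hLle : ∀ k, (⨅ k, a k) ≤ a k := fun k => ciInf_le hbdd k
  have htshift : Tendsto (fun k => a (k+1)) atTop (nhds (⨅ k, a k)) :=
    htaL.comp (tendsto_add_atTop_nat 1)
  have hdiff : Tendsto (fun k => a k - a (k+1)) atTop (nhds 0) := by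
    simpa using htaL.sub htshift
  have hLsq : CC1 p * (⨅ k, a k)^2 ≤ 0 := by
    refine ge_of_tendsto hdiff (Filter.Eventually.of_forall fun k => ?_)
    refine le_trans ?_ (hdec k)
    exact mul_le_mul_of_nonneg_left (pow_le_pow_left₀ hL0 (hLle k) 2) (CC1_pos hp).le
  have hLz : (⨅ k, a k) = 0 := by
    refine le_antisymm ?_ hL0
    by_contra h
    push_neg at h
    nlinarith [hLsq, mul_pos (CC1_pos hp) (mul_pos h h)]
  have hta0 : Tendsto a atTop (nhds 0) := hLz ▸ htaL
  -- divergence of the series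
  have hCC2 := CC2_pos hp
  obtain ⟨N, hN⟩ : ∃ N, a N < 1/(2*CC2 p) :=
    ((tendsto_order.1 hta0).2 (1/(2*CC2 p)) (one_div_pos.2 (by linarith))).exists
  have hsmall : ∀ j, a (N+j) ≤ a N := fun j => haanti.antitone (Nat.le_add_right N j)
  have hinv : ∀ j : ℕ, 1/(a (N+j)) ≤ 1/(a N) + 2*CC2 p*j := by
    intro j; induction j with
    | zero => simp
    | succ n ih =>
      have hb := (hmem (N+n)).1
      have hb' := (hmem (N+n+1)).1
      have hdd := hdec' (N+n)
      have hsm : a (N+n) < 1/(2*CC2 p) := lt_of_le_of_lt (hsmall n) hN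
      have h2b : 2*CC2 p * a (N+n) < 1 := by
        rw [lt_div_iff₀ (by linarith : (0:ℝ) < 2*CC2 p)] at hsm; linarith
      have hA : a (N+n) - CC2 p*(a (N+n))^2 ≤ a (N+n+1) := by linarith
      have h0' : (0:ℝ) ≤ 1 + 2*CC2 p*(a (N+n)) := by nlinarith
      have h1 : a (N+n) ≤ (1 + 2*CC2 p*(a (N+n)))*(a (N+n+1)) := by
        have hmm := mul_le_mul_of_nonneg_left hA h0'
        nlinarith [mul_nonneg (mul_nonneg hCC2.le (sq_nonneg (a (N+n))))
          (by linarith : (0:ℝ) ≤ 1 - 2*CC2 p*a (N+n))]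
      have key : 1/(a (N+n+1)) ≤ 1/(a (N+n)) + 2*CC2 p := by
        rw [div_le_iff₀ hb']
        have hrw : (1/(a (N+n)) + 2*CC2 p) = (1 + 2*CC2 p*(a (N+n)))/(a (N+n)) := by
          field_simp
        rw [hrw, div_mul_eq_mul_div, le_div_iff₀ hb]
        nlinarith [mul_le_mul_of_nonneg_right h1 hb'.le]
      have : (N + (n+1)) = (N + n + 1) := rfl
      rw [this]
      push_cast
      linarith [key, ih]
  have hEpos : 0 < 1/(a N) := one_div_pos.2 (hmem N).1
  have hpos2 : ∀ j : ℕ, 0 < 1/(a N) + 2*CC2 p*j := fun j =>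
    add_pos_of_pos_of_nonneg hEpos
      (mul_nonneg (by linarith : (0:ℝ) ≤ 2*CC2 p) (Nat.cast_nonneg j))
  have hlow : ∀ j : ℕ, 1/(1/(a N) + 2*CC2 p*j) ≤ a (N+j) := by
    intro j
    have h1 : 0 < a (N+j) := (hmem _).1
    have h2 : 0 < 1/(a N) + 2*CC2 p*j := hpos2 j
    rw [div_le_iff₀ h2]
    have h3 := hinv j
    rw [div_le_iff₀ h1] at h3
    linarith
  have hnotsum : ¬ Summable a := by
    intro hsum
    have hs1 : Summable (fun j => a (N+j)) := by
      have := (summable_nat_add_iff (f := a) N).2 hsum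
      refine this.congr (fun j => ?_)
      rw [Nat.add_comm]
    have hs2 : Summable (fun j : ℕ => 1/(1/(a N) + 2*CC2 p*j)) :=
      Summable.of_nonneg_of_le (fun j => (one_div_pos.2 (hpos2 j)).le) hlow hs1
    have hED : 0 < 1/(a N) + 2*CC2 p := by linarith
    have hs3 : Summable (fun j : ℕ => (1/(a N) + 2*CC2 p)⁻¹ * (1/((j:ℝ)+1))) := by
      refine Summable.of_nonneg_of_le (fun j => mul_nonneg (inv_nonneg.2 hED.le)
        (by positivity)) (fun j => ?_) hs2
      have hj : (0:ℝ) ≤ (j:ℝ) := Nat.cast_nonneg j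
      have hrw : (1/(a N) + 2*CC2 p)⁻¹ * (1/((j:ℝ)+1))
          = 1/((1/(a N) + 2*CC2 p)*((j:ℝ)+1)) := by
        rw [one_div, one_div, ← mul_inv, one_div]
      rw [hrw]
      apply one_div_le_one_div_of_le (hpos2 j)
      nlinarith [hEpos, hCC2]
    have hs4 : Summable (fun j : ℕ => 1/((j:ℝ)+1)) :=
      (summable_mul_left_iff (inv_ne_zero hED.ne')).1 hs3
    have hs5 : Summable (fun n : ℕ => 1/((n+1:ℕ):ℝ)) := by
      refine hs4.congr (fun n => ?_)
      push_cast; ring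
    exact Real.not_summable_one_div_natCast ((summable_nat_add_iff 1).1 hs5)
  have hsum_div : Tendsto (fun n => ∑ k ∈ Finset.range n, a k) atTop atTop :=
    (not_summable_iff_tendsto_nat_atTop_of_nonneg (fun k => (hmem k).1.le)).1 hnotsum
  -- δ tends to 0
  have hδbdd : BddBelow (range δ) := ⟨0, by rintro x ⟨k, rfl⟩; exact (hδpos k).le⟩
  have htdd : Tendsto δ atTop (nhds (⨅ k, δ k)) := tendsto_atTop_ciInf hδanti.antitone hδbdd
  have hdd0 : 0 ≤ ⨅ k, δ k := le_ciInf fun k => (hδpos k).le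
  have hddle : ∀ k, (⨅ k, δ k) ≤ δ k := fun k => ciInf_le hδbdd k
  have hddz : (⨅ k, δ k) = 0 := by
    by_contra hne
    have hddpos : 0 < ⨅ k, δ k := lt_of_le_of_ne hdd0 (Ne.symm hne)
    have hstep2 : ∀ k, (⨅ k, δ k)*(cc1 p*a k) ≤ δ k - δ (k+1) := by
      intro k
      have hcan : δ k * (δ (k+1)/δ k) = δ (k+1) := by
        field_simp
        exact mul_div_cancel_left₀ (δ (k+1)) (hδpos k).ne'
      have h2 : δ k - δ (k+1) = δ k * (1 - δ (k+1)/δ k) := by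
        rw [mul_sub, mul_one, hcan]
      rw [h2]
      calc (⨅ k, δ k)*(cc1 p * a k)
          ≤ δ k * (cc1 p * a k) :=
            mul_le_mul_of_nonneg_right (hddle k) (mul_pos (cc1_pos hp) (hmem k).1).le
        _ ≤ δ k * (1 - δ (k+1)/δ k) :=
            mul_le_mul_of_nonneg_left (hgap k) (hδpos k).le
    have hpos : 0 < (⨅ k, δ k)*cc1 p := mul_pos hddpos (cc1_pos hp)
    have hbound : ∀ n, ∑ k ∈ Finset.range n, a k ≤ 1/((⨅ k, δ k)*cc1 p) := by
      intro n
      have htel : ∑ k ∈ Finset.range n, (δ k - δ (k+1)) = δ 0 - δ n :=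
        Finset.sum_range_sub' δ n
      have h3 : ∑ k ∈ Finset.range n, (⨅ k, δ k)*(cc1 p*a k)
          ≤ ∑ k ∈ Finset.range n, (δ k - δ (k+1)) :=
        Finset.sum_le_sum (fun k _ => hstep2 k)
      have h5 : (⨅ k, δ k)*cc1 p * (∑ k ∈ Finset.range n, a k)
          = ∑ k ∈ Finset.range n, (⨅ k, δ k)*(cc1 p*a k) := by
        rw [Finset.mul_sum]; exact Finset.sum_congr rfl (fun k _ => by ring)
      have h4 : δ 0 - δ n ≤ 1 := by rw [hδ0]; linarith [hδpos n]
      rw [le_div_iff₀ hpos]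
      calc (∑ k ∈ Finset.range n, a k) * ((⨅ k, δ k)*cc1 p)
          = (⨅ k, δ k)*cc1 p * (∑ k ∈ Finset.range n, a k) := by ring
        _ ≤ 1 := by rw [h5]; linarith [h3, htel, h4]
    obtain ⟨n, hn⟩ := (tendsto_atTop.1 hsum_div (1/((⨅ k, δ k)*cc1 p) + 1)).exists
    linarith [hbound n]
  have htδ0 : Tendsto δ atTop (nhds 0) := hddz ▸ htdd
  refine ⟨fun k => ⟨(hmem k).1, (hmem k).2⟩, fun k => ⟨hδpos k, ?_⟩,
    haanti, hδanti, hta0, htδ0, hsum_div⟩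
  calc δ k ≤ δ 0 := hδanti.antitone (Nat.zero_le k)
    _ = 1 := hδ0
end

section
/- Let q ∈ [1,2), p ∈ (2,∞] with 1/p + 1/q = 1 (where 1/∞ = 0), let (a_k), (δ_k), (η_k) be the sequences from the recurrence formulas, and set η̃_k = η_k^{1/q}. Then for all k ∈ ℕ: η̃_k · Σ_{i=1}^k (2a_i / η̃_i) = 2 + a_k. -/
open Real Set Filter

theorem stmt_11 (q : ℝ) (hq : q ∈ Ico (1 : ℝ) 2) (a δ η : ℕ → ℝ)
    (ha0 : a 0 = 2) (hδ0 : δ 0 = 1) (hη0 : η 0 = 1)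
    (hcase :
      (q = 1 ∧ (∀ k, δ k = 1) ∧
        (∀ k, η (k + 1) ∈ Ioo 0 (η k) ∧
          (2 / (2 + a k)) * Real.log (η k / η (k + 1)) - 1 + η (k + 1) / η k = 0 ∧
          a (k + 1) = 2 - (η (k + 1) / η k) * (2 + a k))) ∨
      (1 < q ∧
        (∀ k, δ (k + 1) ∈ Ioo 0 (δ k) ∧
          (2 * (q / (q - 1)) / (2 + a k)) * (1 - δ (k + 1) / δ k) - 1
            + (δ (k + 1) / δ k) ^ (q / (q - 1)) = 0 ∧
          a (k + 1) = 2 - (δ (k + 1) / δ k) ^ (q / (q - 1) - 1) * (2 + a k)) ∧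
        (∀ k, η k = δ k ^ (q / (q - 1))))) :
    ∀ k : ℕ, (η k) ^ (1 / q) * ∑ i ∈ Finset.range (k + 1), 2 * a i / (η i) ^ (1 / q)
      = 2 + a k := by
  rcases hcase with ⟨hq1, hδ, hrec⟩ | ⟨hq1, hrec, hη⟩
  · -- case q = 1
    subst hq1
    simp only [one_div, inv_one, Real.rpow_one]
    have hpos : ∀ k, 0 < η k := by
      intro k
      cases k with
      | zero => rw [hη0]; norm_num
      | succ n => exact (hrec n).1.1
    intro k
    induction k with
    | zero => simp [Finset.sum_range_one, ha0, hη0]; norm_num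
    | succ n ih =>
      rw [Finset.sum_range_succ, mul_add]
      have hn := (hpos n).ne'
      have hn1 := (hpos (n + 1)).ne'
      have h1 : η (n + 1) * (2 * a (n + 1) / η (n + 1)) = 2 * a (n + 1) := by
        field_simp
      have h2 : η (n + 1) * ∑ i ∈ Finset.range (n + 1), 2 * a i / η i
          = (η (n + 1) / η n) * (η n * ∑ i ∈ Finset.range (n + 1), 2 * a i / η i) := by
        field_simp
      rw [h1, h2, ih, (hrec n).2.2]; ring
  · -- case 1 < q
    have hq0 : q ≠ 0 := by linarith
    have hqm1 : q - 1 ≠ 0 := by linarith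
    have hδpos : ∀ k, 0 < δ k := by
      intro k
      cases k with
      | zero => rw [hδ0]; norm_num
      | succ n => exact (hrec n).1.1
    set p : ℝ := q / (q - 1) with hp
    have hexp : p * (1 / q) = p - 1 := by
      rw [hp]; field_simp; ring
    have hkey : ∀ k, (η k) ^ (1 / q) = δ k ^ (p - 1) := by
      intro k
      rw [hη k, ← Real.rpow_mul (hδpos k).le, hexp]
    have htpos : ∀ k, 0 < δ k ^ (p - 1) := fun k => Real.rpow_pos_of_pos (hδpos k) _
    intro k
    induction k with
    | zero =>
      simp [Finset.sum_range_one, hkey, ha0, hδ0, Real.one_rpow]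
      rw [hη0, Real.one_rpow]
      norm_num
    | succ n ih =>
      simp only [hkey] at ih ⊢
      rw [Finset.sum_range_succ, mul_add]
      have hn := (htpos n).ne'
      have hn1 := (htpos (n + 1)).ne'
      have h1 : δ (n + 1) ^ (p - 1) * (2 * a (n + 1) / δ (n + 1) ^ (p - 1))
          = 2 * a (n + 1) := by field_simp
      have h2 : δ (n + 1) ^ (p - 1) * ∑ i ∈ Finset.range (n + 1), 2 * a i / δ i ^ (p - 1)
          = (δ (n + 1) / δ n) ^ (p - 1)
            * (δ n ^ (p - 1) * ∑ i ∈ Finset.range (n + 1), 2 * a i / δ i ^ (p - 1)) := by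
        rw [Real.div_rpow (hδpos (n + 1)).le (hδpos n).le]
        field_simp
      rw [h1, h2, ih, (hrec n).2.2]; ring
end

section
/- Let g : [t₀,∞) → ℝ be C² with g'(t) > 0 and g''(t) > 0 for all t ≥ t₀, and suppose g'(t)²/(g(t)g''(t)) → q and t·g'(t)/g(t) → p as t → ∞, where q ∈ (1,∞) and p ∈ (0,∞), with g(t) > 0 for large t. Then 1/p + 1/q = 1. -/
open Real Set Filter

private lemma mono_upper (f : ℝ → ℝ) (c a : ℝ) (ha : 0 < a)
    (hdiff : ∀ t ∈ Ici a, HasDerivAt f (deriv f t) t)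
    (hfpos : ∀ t ∈ Ici a, 0 < f t)
    (hle : ∀ t ∈ Ici a, deriv f t / f t ≤ c / t) :
    MonotoneOn (fun t => c * Real.log t - Real.log (f t)) (Ici a) := by
  have hD : ∀ t ∈ Ici a, HasDerivAt (fun t => c * Real.log t - Real.log (f t))
      (c * t⁻¹ - deriv f t / f t) t := by
    intro t ht
    have ht0 : 0 < t := lt_of_lt_of_le ha ht
    exact ((Real.hasDerivAt_log ht0.ne').const_mul c).sub
      ((hdiff t ht).log (hfpos t ht).ne')
  apply monotoneOn_of_deriv_nonneg (convex_Ici a)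
  · intro t ht
    exact (hD t ht).continuousAt.continuousWithinAt
  · intro t ht
    rw [interior_Ici] at ht
    exact (hD t (Ioi_subset_Ici_self ht)).differentiableAt.differentiableWithinAt
  · intro t ht
    rw [interior_Ici] at ht
    have ht0 : 0 < t := lt_trans ha ht
    rw [(hD t (Ioi_subset_Ici_self ht)).deriv]
    have := hle t (Ioi_subset_Ici_self ht)
    have : deriv f t / f t ≤ c * t⁻¹ := by
      rwa [div_eq_mul_inv] at this
    linarith

private lemma mono_lower (f : ℝ → ℝ) (c a : ℝ) (ha : 0 < a)
    (hdiff : ∀ t ∈ Ici a, HasDerivAt f (deriv f t) t)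
    (hfpos : ∀ t ∈ Ici a, 0 < f t)
    (hle : ∀ t ∈ Ici a, c / t ≤ deriv f t / f t) :
    MonotoneOn (fun t => Real.log (f t) - c * Real.log t) (Ici a) := by
  have hD : ∀ t ∈ Ici a, HasDerivAt (fun t => Real.log (f t) - c * Real.log t)
      (deriv f t / f t - c * t⁻¹) t := by
    intro t ht
    have ht0 : 0 < t := lt_of_lt_of_le ha ht
    exact ((hdiff t ht).log (hfpos t ht).ne').sub
      ((Real.hasDerivAt_log ht0.ne').const_mul c)
  apply monotoneOn_of_deriv_nonneg (convex_Ici a)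
  · intro t ht
    exact (hD t ht).continuousAt.continuousWithinAt
  · intro t ht
    rw [interior_Ici] at ht
    exact (hD t (Ioi_subset_Ici_self ht)).differentiableAt.differentiableWithinAt
  · intro t ht
    rw [interior_Ici] at ht
    have ht0 : 0 < t := lt_trans ha ht
    rw [(hD t (Ioi_subset_Ici_self ht)).deriv]
    have := hle t (Ioi_subset_Ici_self ht)
    have : c * t⁻¹ ≤ deriv f t / f t := by
      rwa [div_eq_mul_inv] at this
    linarith

/-- If `t f'(t)/f(t) → r` then `log f(t) / log t → r`. -/
private lemma log_ratio_tendsto (f : ℝ → ℝ) (r a₀ : ℝ)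
    (hdiff : ∀ t, a₀ < t → HasDerivAt f (deriv f t) t)
    (hpos : ∀ᶠ t in Filter.atTop, 0 < f t)
    (hlim : Filter.Tendsto (fun t => t * deriv f t / f t) Filter.atTop (nhds r)) :
    Filter.Tendsto (fun t => Real.log (f t) / Real.log t) Filter.atTop (nhds r) := by
  rw [tendsto_order]
  constructor
  · -- lower bound: for b < r, eventually b < log f t / log t
    intro b hb
    set δ := (r - b) / 2 with hδdef
    have hδ : 0 < δ := by simp only [hδdef]; linarith
    have hev : ∀ᶠ t in Filter.atTop,
        (0 < f t ∧ r - δ < t * deriv f t / f t) ∧ (a₀ < t ∧ 1 < t) := by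
      filter_upwards [hpos, hlim.eventually (eventually_gt_nhds (by linarith : r - δ < r)),
        eventually_gt_atTop a₀, eventually_gt_atTop 1] with t h1 h2 h3 h4
      exact ⟨⟨h1, h2⟩, h3, h4⟩
    obtain ⟨a, ha⟩ := hev.exists_forall_of_atTop
    have ha1 : 1 < a := (ha a le_rfl).2.2
    have ha0 : 0 < a := lt_trans one_pos ha1
    have hmono := mono_lower f (r - δ) a ha0
      (fun t ht => hdiff t (lt_of_lt_of_le (ha a le_rfl).2.1 ht))
      (fun t ht => (ha t ht).1.1)
      (fun t ht => by
        have htpos : 0 < t := lt_of_lt_of_le ha0 ht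
        have h2 := (lt_div_iff₀ (ha t ht).1.1).mp (ha t ht).1.2
        rw [div_le_div_iff₀ htpos (ha t ht).1.1]
        nlinarith)
    have hkey : ∀ t, a ≤ t →
        Real.log (f a) + (r - δ) * (Real.log t - Real.log a) ≤ Real.log (f t) := by
      intro t ht
      have := hmono (self_mem_Ici) (ht : t ∈ Ici a) ht
      simp only at this
      linarith
    have hlim2 : Filter.Tendsto
        (fun t => (Real.log (f a) - (r - δ) * Real.log a) / Real.log t + (r - δ))
        Filter.atTop (nhds (0 + (r - δ))) :=
      (tendsto_const_nhds.div_atTop Real.tendsto_log_atTop).add tendsto_const_nhds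
    have hbnd : ∀ᶠ t in Filter.atTop,
        b < (Real.log (f a) - (r - δ) * Real.log a) / Real.log t + (r - δ) :=
      hlim2.eventually (eventually_gt_nhds (by simp only [zero_add, hδdef]; linarith))
    filter_upwards [hbnd, eventually_ge_atTop a] with t h1 h2
    have ht1 : 1 < t := lt_of_lt_of_le ha1 h2
    have hlogt : 0 < Real.log t := Real.log_pos ht1
    have := hkey t h2
    calc b < (Real.log (f a) - (r - δ) * Real.log a) / Real.log t + (r - δ) := h1
      _ = (Real.log (f a) + (r - δ) * (Real.log t - Real.log a)) / Real.log t := by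
          field_simp; ring
      _ ≤ Real.log (f t) / Real.log t := by gcongr
  · -- upper bound
    intro b hb
    set δ := (b - r) / 2 with hδdef
    have hδ : 0 < δ := by simp only [hδdef]; linarith
    have hev : ∀ᶠ t in Filter.atTop,
        (0 < f t ∧ t * deriv f t / f t < r + δ) ∧ (a₀ < t ∧ 1 < t) := by
      filter_upwards [hpos, hlim.eventually (eventually_lt_nhds (by linarith : r < r + δ)),
        eventually_gt_atTop a₀, eventually_gt_atTop 1] with t h1 h2 h3 h4
      exact ⟨⟨h1, h2⟩, h3, h4⟩
    obtain ⟨a, ha⟩ := hev.exists_forall_of_atTop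
    have ha1 : 1 < a := (ha a le_rfl).2.2
    have ha0 : 0 < a := lt_trans one_pos ha1
    have hmono := mono_upper f (r + δ) a ha0
      (fun t ht => hdiff t (lt_of_lt_of_le (ha a le_rfl).2.1 ht))
      (fun t ht => (ha t ht).1.1)
      (fun t ht => by
        have htpos : 0 < t := lt_of_lt_of_le ha0 ht
        have h2 := (div_lt_iff₀ (ha t ht).1.1).mp (ha t ht).1.2
        rw [div_le_div_iff₀ (ha t ht).1.1 htpos]
        nlinarith)
    have hkey : ∀ t, a ≤ t →
        Real.log (f t) ≤ Real.log (f a) + (r + δ) * (Real.log t - Real.log a) := by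
      intro t ht
      have := hmono (self_mem_Ici) (ht : t ∈ Ici a) ht
      simp only at this
      linarith
    have hlim2 : Filter.Tendsto
        (fun t => (Real.log (f a) - (r + δ) * Real.log a) / Real.log t + (r + δ))
        Filter.atTop (nhds (0 + (r + δ))) :=
      (tendsto_const_nhds.div_atTop Real.tendsto_log_atTop).add tendsto_const_nhds
    have hbnd : ∀ᶠ t in Filter.atTop,
        (Real.log (f a) - (r + δ) * Real.log a) / Real.log t + (r + δ) < b :=
      hlim2.eventually (eventually_lt_nhds (by simp only [zero_add, hδdef]; linarith))
    filter_upwards [hbnd, eventually_ge_atTop a] with t h1 h2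
    have ht1 : 1 < t := lt_of_lt_of_le ha1 h2
    have hlogt : 0 < Real.log t := Real.log_pos ht1
    have := hkey t h2
    calc Real.log (f t) / Real.log t
        ≤ (Real.log (f a) + (r + δ) * (Real.log t - Real.log a)) / Real.log t := by gcongr
      _ = (Real.log (f a) - (r + δ) * Real.log a) / Real.log t + (r + δ) := by
          field_simp; ring
      _ < b := h1

theorem stmt_12 (t₀ q p : ℝ) (g : ℝ → ℝ)
    (hg : ContDiffOn ℝ 2 g (Ici t₀))
    (hg' : ∀ t ≥ t₀, 0 < deriv g t) (hg'' : ∀ t ≥ t₀, 0 < deriv (deriv g) t)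
    (hgpos : ∀ᶠ t in Filter.atTop, 0 < g t)
    (hq : 1 < q) (hp : 0 < p)
    (hlimq : Filter.Tendsto (fun t => (deriv g t) ^ 2 / (g t * deriv (deriv g) t))
      Filter.atTop (nhds q))
    (hlimp : Filter.Tendsto (fun t => t * deriv g t / g t) Filter.atTop (nhds p)) :
    1 / p + 1 / q = 1 := by
  have hq0 : (0 : ℝ) < q := lt_trans one_pos hq
  -- differentiability facts on Ioi t₀
  have hgIoi : ContDiffOn ℝ 2 g (Ioi t₀) := hg.mono Ioi_subset_Ici_self
  have hdiffg : ∀ t, t₀ < t → HasDerivAt g (deriv g t) t := by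
    intro t ht
    have : DifferentiableAt ℝ g t :=
      ((hgIoi.differentiableOn (by norm_num)).differentiableAt (Ioi_mem_nhds ht))
    exact this.hasDerivAt
  have hg'C1 : ContDiffOn ℝ 1 (deriv g) (Ioi t₀) :=
    hgIoi.deriv_of_isOpen isOpen_Ioi (by norm_num)
  have hdiffg' : ∀ t, t₀ < t → HasDerivAt (deriv g) (deriv (deriv g) t) t := by
    intro t ht
    have : DifferentiableAt ℝ (deriv g) t :=
      ((hg'C1.differentiableOn one_ne_zero).differentiableAt (Ioi_mem_nhds ht))
    exact this.hasDerivAt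
  -- log g t / log t → p
  have hA : Filter.Tendsto (fun t => Real.log (g t) / Real.log t) Filter.atTop (nhds p) :=
    log_ratio_tendsto g p t₀ hdiffg hgpos hlimp
  -- t * g''/g' → p / q
  have hlimpq : Filter.Tendsto (fun t => t * deriv (deriv g) t / deriv g t)
      Filter.atTop (nhds (p / q)) := by
    have h := hlimp.div hlimq hq0.ne'
    apply h.congr'
    filter_upwards [hgpos, eventually_ge_atTop t₀] with t h1 h2
    have h3 : 0 < deriv g t := hg' t h2
    have h4 : 0 < deriv (deriv g) t := hg'' t h2
    simp only [Pi.div_apply]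
    field_simp
  -- log g' t / log t → p / q
  have hB : Filter.Tendsto (fun t => Real.log (deriv g t) / Real.log t)
      Filter.atTop (nhds (p / q)) := by
    apply log_ratio_tendsto (deriv g) (p / q) t₀ hdiffg' _ hlimpq
    filter_upwards [eventually_ge_atTop t₀] with t ht using hg' t ht
  -- log (t g'/g) / log t → 0
  have hC : Filter.Tendsto (fun t => Real.log (t * deriv g t / g t) / Real.log t)
      Filter.atTop (nhds 0) :=
    (hlimp.log hp.ne').div_atTop Real.tendsto_log_atTop
  -- but log (t g'/g) / log t = 1 + log g'/log t - log g/log t eventually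
  have hD : Filter.Tendsto
      (fun t => 1 + Real.log (deriv g t) / Real.log t - Real.log (g t) / Real.log t)
      Filter.atTop (nhds (1 + p / q - p)) :=
    (tendsto_const_nhds.add hB).sub hA
  have hEq : (fun t => Real.log (t * deriv g t / g t) / Real.log t) =ᶠ[Filter.atTop]
      (fun t => 1 + Real.log (deriv g t) / Real.log t - Real.log (g t) / Real.log t) := by
    filter_upwards [hgpos, eventually_ge_atTop t₀, eventually_gt_atTop 1] with t h1 h2 h3
    have h4 : 0 < deriv g t := hg' t h2
    have ht0 : 0 < t := lt_trans one_pos h3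
    have hlogt : 0 < Real.log t := Real.log_pos h3
    rw [Real.log_div (by positivity) h1.ne', Real.log_mul ht0.ne' h4.ne']
    field_simp
  have hzero : 1 + p / q - p = 0 :=
    tendsto_nhds_unique (hD.congr' hEq.symm) hC
  field_simp at hzero ⊢
  linarith [hzero, mul_comm p q]
end

section
/- Let g : [t₀,∞) → ℝ be C² with g(t) > 0 for large t, g'(t) > 0, g''(t) > 0 for all t ≥ t₀, and g'(t)²/(g(t)g''(t)) → q ∈ [1,2) as t → ∞. Then g(t) → ∞ and g'(t) → ∞ as t → ∞, and (log g'(t))/g(t) → 0 as t → ∞. -/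
open Real Set Filter

theorem stmt_13 (t₀ q : ℝ) (g : ℝ → ℝ)
    (hg : ContDiffOn ℝ 2 g (Ici t₀))
    (hg' : ∀ t ≥ t₀, 0 < deriv g t) (hg'' : ∀ t ≥ t₀, 0 < deriv (deriv g) t)
    (hgpos : ∀ᶠ t in Filter.atTop, 0 < g t)
    (hq : q ∈ Ico (1 : ℝ) 2)
    (hlimq : Filter.Tendsto (fun t => (deriv g t) ^ 2 / (g t * deriv (deriv g) t))
      Filter.atTop (nhds q)) :
    Filter.Tendsto g Filter.atTop Filter.atTop ∧
    Filter.Tendsto (deriv g) Filter.atTop Filter.atTop ∧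
    Filter.Tendsto (fun t => Real.log (deriv g t) / g t) Filter.atTop (nhds 0) := by
  have hct : ∀ t, t₀ < t → ContDiffAt ℝ 2 g t := fun t ht => hg.contDiffAt (Ici_mem_nhds ht)
  have hdg : ∀ t, t₀ < t → DifferentiableAt ℝ g t := fun t ht =>
    (hct t ht).differentiableAt (by norm_num)
  have hdg' : ∀ t, t₀ < t → DifferentiableAt ℝ (deriv g) t := by
    intro t ht
    obtain ⟨u, hu, hcd⟩ := (hct t ht).contDiffOn le_rfl (by simp)
    obtain ⟨v, hvu, hvo, htv⟩ := mem_nhds_iff.1 hu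
    have h1 : ContDiffOn ℝ 1 (deriv g) v :=
      (hcd.mono hvu).deriv_of_isOpen hvo (by norm_num)
    exact ((h1.differentiableOn (by norm_num)) t htv).differentiableAt (hvo.mem_nhds htv)
  set t₁ := t₀ + 1 with ht₁def
  have ht₀₁ : t₀ < t₁ := lt_add_one t₀
  have hgt₀ : ∀ t, t₁ ≤ t → t₀ < t := fun t ht => lt_of_lt_of_le ht₀₁ ht
  -- deriv g is monotone on [t₁, ∞)
  have hg'mono : MonotoneOn (deriv g) (Ici t₁) := by
    apply monotoneOn_of_deriv_nonneg (convex_Ici t₁)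
    · exact fun t ht => ((hdg' t (hgt₀ t ht)).continuousAt.continuousWithinAt)
    · intro t ht
      rw [interior_Ici] at ht
      exact (hdg' t (hgt₀ t ht.le)).differentiableWithinAt
    · intro t ht
      rw [interior_Ici] at ht
      exact (hg'' t (hgt₀ t ht.le).le).le
  have hc : 0 < deriv g t₁ := hg' t₁ ht₀₁.le
  -- linear lower bound for g
  have hlin : ∀ t, t₁ ≤ t → g t₁ + deriv g t₁ * (t - t₁) ≤ g t := by
    intro t ht
    have hmono : MonotoneOn (fun s => g s - deriv g t₁ * s) (Ici t₁) := by
      apply monotoneOn_of_deriv_nonneg (convex_Ici t₁)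
      · intro s hs
        exact ((hdg s (hgt₀ s hs)).sub ((differentiableAt_fun_id).const_mul
          (deriv g t₁))).continuousAt.continuousWithinAt
      · intro s hs
        rw [interior_Ici] at hs
        exact ((hdg s (hgt₀ s hs.le)).sub
          ((differentiableAt_fun_id).const_mul (deriv g t₁))).differentiableWithinAt
      · intro s hs
        rw [interior_Ici] at hs
        have hd : HasDerivAt (fun s => g s - deriv g t₁ * s) (deriv g s - deriv g t₁ * 1) s :=
          ((hdg s (hgt₀ s hs.le)).hasDerivAt).sub ((hasDerivAt_id s).const_mul (deriv g t₁))
        rw [hd.deriv]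
        have h2 := hg'mono self_mem_Ici (mem_Ici.2 hs.le) hs.le
        linarith
    have h3 := hmono self_mem_Ici (mem_Ici.2 ht) ht
    simp only at h3
    have hexp : deriv g t₁ * (t - t₁) = deriv g t₁ * t - deriv g t₁ * t₁ := by ring
    linarith
  have hgtop : Tendsto g atTop atTop := by
    apply tendsto_atTop_mono' atTop (eventually_atTop.2 ⟨t₁, hlin⟩)
    apply tendsto_atTop_add_const_left
    exact (tendsto_const_mul_atTop_of_pos hc).2
      (tendsto_atTop_add_const_right _ _ tendsto_id)
  -- eventual bounds on the ratio
  have hev2 : ∀ᶠ t in atTop, (deriv g t) ^ 2 / (g t * deriv (deriv g) t) < 2 :=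
    hlimq.eventually_lt_const hq.2
  have hev1 : ∀ᶠ t in atTop, (1 : ℝ) / 2 < (deriv g t) ^ 2 / (g t * deriv (deriv g) t) :=
    hlimq.eventually_const_lt (by linarith [hq.1])
  -- deriv g → ∞
  obtain ⟨T, hT⟩ := eventually_atTop.1
    (((hgpos.and hev2).and hev1).and (eventually_ge_atTop t₁))
  have hTt₁ : t₁ ≤ T := (hT T le_rfl).2
  have hTt₀ : ∀ t, T ≤ t → t₀ < t := fun t ht => hgt₀ t (le_trans hTt₁ ht)
  have hTgpos : ∀ t, T ≤ t → 0 < g t := fun t ht => (hT t ht).1.1.1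
  have hvmono : MonotoneOn (fun s => Real.log (deriv g s) - 1 / 2 * Real.log (g s)) (Ici T) := by
    have hder : ∀ s, T ≤ s →
        HasDerivAt (fun x => Real.log (deriv g x) - 1 / 2 * Real.log (g x))
          (deriv (deriv g) s / deriv g s - 1 / 2 * (deriv g s / g s)) s := by
      intro s hs
      have h1 : HasDerivAt (fun x => Real.log (deriv g x))
          (deriv (deriv g) s / deriv g s) s :=
        HasDerivAt.log (hdg' s (hTt₀ s hs)).hasDerivAt (ne_of_gt (hg' s (hTt₀ s hs).le))
      have h2 : HasDerivAt (fun x => Real.log (g x)) (deriv g s / g s) s :=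
        HasDerivAt.log (hdg s (hTt₀ s hs)).hasDerivAt (ne_of_gt (hTgpos s hs))
      exact h1.sub (h2.const_mul (1 / 2))
    apply monotoneOn_of_deriv_nonneg (convex_Ici T)
    · exact fun s hs => (hder s hs).continuousAt.continuousWithinAt
    · intro s hs
      rw [interior_Ici] at hs
      exact (hder s hs.le).differentiableAt.differentiableWithinAt
    · intro s hs
      rw [interior_Ici] at hs
      rw [(hder s hs.le).deriv]
      have hG : 0 < g s := hTgpos s hs.le
      have hG' : 0 < deriv g s := hg' s (hTt₀ s hs.le).le
      have hG'' : 0 < deriv (deriv g) s := hg'' s (hTt₀ s hs.le).le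
      have hprod : 0 < g s * deriv (deriv g) s := mul_pos hG hG''
      have hlt := (hT s hs.le).1.1.2
      have hsq : (deriv g s) ^ 2 < 2 * (g s * deriv (deriv g) s) :=
        (div_lt_iff₀ hprod).1 hlt
      have heq : 1 / 2 * (deriv g s / g s) = deriv g s / (2 * g s) := by ring
      rw [heq, sub_nonneg, div_le_div_iff₀ (by positivity) (by positivity)]
      nlinarith [hsq]
  have hlogbound : ∀ t, T ≤ t →
      (Real.log (deriv g T) - 1 / 2 * Real.log (g T)) + 1 / 2 * Real.log (g t) ≤
        Real.log (deriv g t) := by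
    intro t ht
    have := hvmono self_mem_Ici (mem_Ici.2 ht) ht
    simp only at this
    linarith
  have hloggtop : Tendsto (fun t => Real.log (deriv g t)) atTop atTop := by
    apply tendsto_atTop_mono' atTop (eventually_atTop.2 ⟨T, hlogbound⟩)
    apply tendsto_atTop_add_const_left
    exact (tendsto_const_mul_atTop_of_pos (by norm_num : (0:ℝ) < 1/2)).2
      (Real.tendsto_log_atTop.comp hgtop)
  have hg'top : Tendsto (deriv g) atTop atTop := by
    have h := Real.tendsto_exp_atTop.comp hloggtop
    apply Tendsto.congr' _ h
    filter_upwards [eventually_ge_atTop t₁] with t ht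
    exact Real.exp_log (hg' t (hgt₀ t ht).le)
  refine ⟨hgtop, hg'top, ?_⟩
  -- third limit
  rw [NormedAddCommGroup.tendsto_nhds_zero]
  intro ε hε
  set δ := ε / 2 with hδdef
  have hδpos : 0 < δ := by positivity
  obtain ⟨S, hS⟩ := eventually_atTop.1
    ((((hgpos.and (hgtop.eventually_ge_atTop (2 / δ))).and
      (hg'top.eventually_ge_atTop 1)).and hev1).and (eventually_ge_atTop t₁))
  have hSt₁ : t₁ ≤ S := (hS S le_rfl).2
  have hSt₀ : ∀ t, S ≤ t → t₀ < t := fun t ht => hgt₀ t (le_trans hSt₁ ht)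
  have hSgpos : ∀ t, S ≤ t → 0 < g t := fun t ht => (hS t ht).1.1.1.1
  have hwanti : AntitoneOn (fun s => Real.log (deriv g s) - δ * g s) (Ici S) := by
    have hder : ∀ s, S ≤ s →
        HasDerivAt (fun x => Real.log (deriv g x) - δ * g x)
          (deriv (deriv g) s / deriv g s - δ * deriv g s) s := by
      intro s hs
      have h1 : HasDerivAt (fun x => Real.log (deriv g x))
          (deriv (deriv g) s / deriv g s) s :=
        HasDerivAt.log (hdg' s (hSt₀ s hs)).hasDerivAt (ne_of_gt (hg' s (hSt₀ s hs).le))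
      exact h1.sub (((hdg s (hSt₀ s hs)).hasDerivAt).const_mul δ)
    apply antitoneOn_of_deriv_nonpos (convex_Ici S)
    · exact fun s hs => (hder s hs).continuousAt.continuousWithinAt
    · intro s hs
      rw [interior_Ici] at hs
      exact (hder s hs.le).differentiableAt.differentiableWithinAt
    · intro s hs
      rw [interior_Ici] at hs
      rw [(hder s hs.le).deriv]
      have hG : 0 < g s := hSgpos s hs.le
      have hG' : 0 < deriv g s := hg' s (hSt₀ s hs.le).le
      have hG'' : 0 < deriv (deriv g) s := hg'' s (hSt₀ s hs.le).le
      have hprod : 0 < g s * deriv (deriv g) s := mul_pos hG hG''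
      have hgt := (hS s hs.le).1.2
      have hgbig : 2 / δ ≤ g s := (hS s hs.le).1.1.1.2
      have hmul : g s * deriv (deriv g) s < 2 * (deriv g s) ^ 2 := by
        have := (lt_div_iff₀ hprod).1 hgt
        linarith
      rw [sub_nonpos, div_le_iff₀ hG']
      have h2δ : 2 ≤ δ * g s := by
        rw [div_le_iff₀ hδpos] at hgbig
        linarith [mul_comm (g s) δ]
      nlinarith [hmul, h2δ, mul_pos hδpos hG', sq_nonneg (deriv g s)]
  have hbound : ∀ t, S ≤ t → Real.log (deriv g t) ≤
      (Real.log (deriv g S) - δ * g S) + δ * g t := by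
    intro t ht
    have := hwanti self_mem_Ici (mem_Ici.2 ht) ht
    simp only at this
    linarith
  have hdiv0 : Tendsto (fun t => (Real.log (deriv g S) - δ * g S) / g t) atTop (nhds 0) :=
    Tendsto.div_atTop tendsto_const_nhds hgtop
  filter_upwards [eventually_ge_atTop S, hdiv0.eventually_lt_const hδpos] with t ht hlt
  have hG : 0 < g t := hSgpos t ht
  have hG'1 : 1 ≤ deriv g t := (hS t ht).1.1.2
  have hlognn : 0 ≤ Real.log (deriv g t) := Real.log_nonneg hG'1
  have hquotnn : 0 ≤ Real.log (deriv g t) / g t := div_nonneg hlognn hG.le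
  have hquotle : Real.log (deriv g t) / g t ≤
      (Real.log (deriv g S) - δ * g S) / g t + δ := by
    have h1 : Real.log (deriv g t) / g t ≤
        ((Real.log (deriv g S) - δ * g S) + δ * g t) / g t :=
      (div_le_div_iff_of_pos_right hG).2 (hbound t ht)
    calc Real.log (deriv g t) / g t ≤
        ((Real.log (deriv g S) - δ * g S) + δ * g t) / g t := h1
      _ = (Real.log (deriv g S) - δ * g S) / g t + δ * g t / g t := add_div _ _ _
      _ = (Real.log (deriv g S) - δ * g S) / g t + δ := by
          rw [mul_div_assoc, div_self (ne_of_gt hG), mul_one]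
  rw [Real.norm_eq_abs, abs_of_nonneg hquotnn]
  have : δ + δ = ε := by rw [hδdef]; ring
  linarith
end

section
/- Let g be C³ on [t₀,∞) with g', g'', g''' positive, and suppose g'(t)²/(g(t)g''(t)) → q ∈ [1,2) and g''(t)²/(g'(t)g'''(t)) → q̂ ∈ [0,∞] as t → ∞, where g(t) > 0 and g(t) → ∞, g'(t) → ∞. Then q̂ = 1/(2−q). -/
open Real Set Filter

/-- Cesàro / easy l'Hôpital: if `deriv f → L` then `f t / t → L`. -/
lemma cesaro_aux {f : ℝ → ℝ} {L a : ℝ}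
    (hdiff : ∀ t ∈ Ioi a, DifferentiableAt ℝ f t)
    (hlim : Tendsto (deriv f) atTop (nhds L)) :
    Tendsto (fun t => f t / t) atTop (nhds L) := by
  rw [Metric.tendsto_atTop]
  intro ε hε
  have hε2 : 0 < ε / 2 := by linarith
  obtain ⟨A₀, hA₀⟩ := Metric.tendsto_atTop.mp hlim (ε / 2) hε2
  set A := max A₀ (max (a + 1) 0) with hA
  have hAa : a < A := lt_of_lt_of_le (by linarith) ((le_max_left _ _).trans (le_max_right _ _))
  have hA0 : (0 : ℝ) ≤ A := (le_max_right _ _).trans (le_max_right _ _)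
  have hAA₀ : A₀ ≤ A := le_max_left _ _
  have key : ∀ t, A < t → |f t - f A - L * (t - A)| ≤ ε / 2 * (t - A) := by
    intro t ht
    have hcont : ContinuousOn f (Icc A t) := fun x hx =>
      ((hdiff x (lt_of_lt_of_le hAa hx.1)).continuousAt).continuousWithinAt
    obtain ⟨c, hc, hceq⟩ := exists_hasDerivAt_eq_slope f (deriv f) ht hcont
      (fun x hx => (hdiff x (hAa.trans hx.1)).hasDerivAt)
    have hdc : |deriv f c - L| < ε / 2 := by
      have := hA₀ c (hAA₀.trans hc.1.le)
      rwa [Real.dist_eq] at this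
    have htA : 0 < t - A := by linarith
    have : f t - f A - L * (t - A) = (deriv f c - L) * (t - A) := by
      rw [hceq]; field_simp
    rw [this, abs_mul, abs_of_pos htA]
    exact mul_le_mul_of_nonneg_right hdc.le htA.le
  refine ⟨max (A + 1) (2 * |f A - L * A| / ε + 1), fun t ht => ?_⟩
  have htA : A < t := lt_of_lt_of_le (by linarith) ((le_max_left _ _).trans ht)
  have ht0 : 0 < t := lt_of_le_of_lt hA0 htA
  have h1 := key t htA
  have h3 : 2 * |f A - L * A| / ε + 1 ≤ t := (le_max_right _ _).trans ht
  have h3' : 2 * |f A - L * A| ≤ ε * (t - 1) := by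
    rw [div_add' _ _ _ (ne_of_gt hε)] at h3
    have := (div_le_iff₀ hε).mp h3
    nlinarith
  have heq : f t / t - L = (f t - f A - L * (t - A) + (f A - L * A)) / t := by
    field_simp; ring
  rw [Real.dist_eq, heq, abs_div, abs_of_pos ht0, div_lt_iff₀ ht0]
  have h2 : |f t - f A - L * (t - A) + (f A - L * A)| ≤ ε / 2 * (t - A) + |f A - L * A| :=
    (abs_add_le _ _).trans (by linarith)
  nlinarith [abs_nonneg (f A - L * A)]

theorem stmt_14 (t₀ q : ℝ) (qhat : EReal) (g : ℝ → ℝ)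
    (hg : ContDiffOn ℝ 3 g (Ici t₀))
    (hg' : ∀ t ≥ t₀, 0 < deriv g t) (hg'' : ∀ t ≥ t₀, 0 < deriv (deriv g) t)
    (hg''' : ∀ t ≥ t₀, 0 < deriv (deriv (deriv g)) t)
    (hgpos : ∀ᶠ t in Filter.atTop, 0 < g t)
    (hginf : Filter.Tendsto g Filter.atTop Filter.atTop)
    (hg'inf : Filter.Tendsto (deriv g) Filter.atTop Filter.atTop)
    (hq : q ∈ Ico (1 : ℝ) 2)
    (hlimq : Filter.Tendsto (fun t => (deriv g t) ^ 2 / (g t * deriv (deriv g) t))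
      Filter.atTop (nhds q))
    (hlimqhat : Filter.Tendsto
      (fun t => (((deriv (deriv g) t) ^ 2 / (deriv g t * deriv (deriv (deriv g)) t) : ℝ) : EReal))
      Filter.atTop (nhds qhat)) :
    qhat = ((1 / (2 - q) : ℝ) : EReal) := by
  have hq1 : (1 : ℝ) ≤ q := hq.1
  have hq2 : q < 2 := hq.2
  have hq0 : q ≠ 0 := by linarith
  have hO : IsOpen (Ioi t₀) := isOpen_Ioi
  have hC3 : ContDiffOn ℝ 3 g (Ioi t₀) := hg.mono Ioi_subset_Ici_self
  have hC2 : ContDiffOn ℝ 2 (deriv g) (Ioi t₀) := hC3.deriv_of_isOpen hO (by norm_num)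
  have hC1 : ContDiffOn ℝ 1 (deriv (deriv g)) (Ioi t₀) := hC2.deriv_of_isOpen hO (by norm_num)
  have hd0 : ∀ x ∈ Ioi t₀, DifferentiableAt ℝ g x := fun x hx =>
    ((hC3.differentiableOn (by norm_num)).differentiableAt (hO.mem_nhds hx))
  have hd1 : ∀ x ∈ Ioi t₀, DifferentiableAt ℝ (deriv g) x := fun x hx =>
    ((hC2.differentiableOn (by norm_num)).differentiableAt (hO.mem_nhds hx))
  have hd2 : ∀ x ∈ Ioi t₀, DifferentiableAt ℝ (deriv (deriv g)) x := fun x hx =>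
    ((hC1.differentiableOn (by norm_num)).differentiableAt (hO.mem_nhds hx))
  -- derivative formulas
  have hderiv1 : ∀ x ∈ Ioi t₀, deriv (fun t => g t / deriv g t) x
      = 1 - g x * deriv (deriv g) x / (deriv g x) ^ 2 := by
    intro x hx
    have hne : deriv g x ≠ 0 := ne_of_gt (hg' x (le_of_lt hx))
    rw [deriv_fun_div (hd0 x hx) (hd1 x hx) hne]
    field_simp
  have hderiv2 : ∀ x ∈ Ioi t₀, deriv (fun t => deriv g t / deriv (deriv g) t) x
      = 1 - deriv g x * deriv (deriv (deriv g)) x / (deriv (deriv g) x) ^ 2 := by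
    intro x hx
    have hne : deriv (deriv g) x ≠ 0 := ne_of_gt (hg'' x (le_of_lt hx))
    rw [deriv_fun_div (hd1 x hx) (hd2 x hx) hne]
    field_simp
  obtain ⟨a, ha⟩ := eventually_atTop.mp hgpos
  set b := max a (max (t₀ + 1) 1) with hb
  have hbt₀ : t₀ < b := by
    have : t₀ + 1 ≤ b := (le_max_left _ _).trans (le_max_right _ _)
    linarith
  have hb1 : (1 : ℝ) ≤ b := (le_max_right _ _).trans (le_max_right _ _)
  have hba : a ≤ b := le_max_left _ _
  -- step 1 : g * g'' / g'^2 → 1/q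
  have h1 : Tendsto (fun t => g t * deriv (deriv g) t / (deriv g t) ^ 2) atTop (nhds q⁻¹) :=
    (hlimq.inv₀ hq0).congr fun t => inv_div _ _
  -- step 2 : deriv (g/g') → 1 - 1/q
  have h2 : Tendsto (deriv (fun t => g t / deriv g t)) atTop (nhds (1 - q⁻¹)) := by
    refine (tendsto_const_nhds.sub h1).congr' ?_
    filter_upwards [eventually_ge_atTop b] with t htb
    exact (hderiv1 t (lt_of_lt_of_le hbt₀ htb)).symm
  -- step 3 : (g/g')/t → 1 - 1/q
  have h3 : Tendsto (fun t => g t / deriv g t / t) atTop (nhds (1 - q⁻¹)) :=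
    cesaro_aux (fun x hx => (hd0 x hx).div (hd1 x hx) (ne_of_gt (hg' x (le_of_lt hx)))) h2
  -- step 4 : (g'/g'')/t → q - 1
  have h4 : Tendsto (fun t => deriv g t / deriv (deriv g) t / t) atTop (nhds (q - 1)) := by
    have hmul := h3.mul hlimq
    have hval : (1 - q⁻¹) * q = q - 1 := by field_simp
    rw [hval] at hmul
    refine hmul.congr' ?_
    filter_upwards [eventually_ge_atTop b] with t htb
    have ht₀ : t₀ ≤ t := le_of_lt (lt_of_lt_of_le hbt₀ htb)
    have hgt : 0 < g t := ha t (hba.trans htb)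
    have hg't : 0 < deriv g t := hg' t ht₀
    have hg''t : 0 < deriv (deriv g) t := hg'' t ht₀
    have ht : 0 < t := lt_of_lt_of_le one_pos (hb1.trans htb)
    field_simp
  -- positivity of the qhat-ratio
  have hFpos : ∀ᶠ t in atTop, 0 < (deriv (deriv g) t) ^ 2 / (deriv g t * deriv (deriv (deriv g)) t) := by
    filter_upwards [eventually_ge_atTop t₀] with t ht
    exact div_pos (pow_pos (hg'' t ht) 2) (mul_pos (hg' t ht) (hg''' t ht))
  induction qhat using EReal.rec with
  | bot =>
    exfalso
    have hneg := (EReal.tendsto_nhds_bot_iff_real.mp hlimqhat 0)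
    obtain ⟨t, h1t, h2t⟩ := (hneg.and hFpos).exists
    have : ((deriv (deriv g) t) ^ 2 / (deriv g t * deriv (deriv (deriv g)) t) : ℝ) < 0 := by
      exact_mod_cast h1t
    linarith
  | coe r =>
    have hr : Tendsto (fun t => (deriv (deriv g) t) ^ 2 / (deriv g t * deriv (deriv (deriv g)) t))
        atTop (nhds r) := EReal.tendsto_coe.mp hlimqhat
    by_cases hr0 : r = 0
    · exfalso
      subst hr0
      -- F → 0 with F > 0, so F⁻¹ → ∞, so deriv (g'/g'') → -∞
      have hF0 : Tendsto (fun t => (deriv (deriv g) t) ^ 2 / (deriv g t * deriv (deriv (deriv g)) t))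
          atTop (nhdsWithin 0 (Ioi 0)) :=
        tendsto_nhdsWithin_of_tendsto_nhds_of_eventually_within _ hr hFpos
      have hFinv : Tendsto (fun t => ((deriv (deriv g) t) ^ 2 / (deriv g t * deriv (deriv (deriv g)) t))⁻¹)
          atTop atTop := tendsto_inv_nhdsGT_zero.comp hF0
      -- eventually deriv (g'/g'') ≤ -1
      have hev : ∀ᶠ t in atTop, deriv (fun s => deriv g s / deriv (deriv g) s) t ≤ -1 := by
        filter_upwards [hFinv.eventually_ge_atTop 2, eventually_gt_atTop t₀] with t h2t ht₀
        rw [hderiv2 t ht₀]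
        rw [inv_div] at h2t
        linarith
      obtain ⟨A₀, hA₀⟩ := eventually_atTop.mp hev
      set A := max A₀ (t₀ + 1) with hAdef
      have hAt₀ : t₀ < A := by
        have : t₀ + 1 ≤ A := le_max_right _ _
        linarith
      have hAA₀ : A₀ ≤ A := le_max_left _ _
      set φ : ℝ → ℝ := fun t => deriv g t / deriv (deriv g) t + t with hφ
      have hφdiff : ∀ x ∈ Ioi t₀, DifferentiableAt ℝ φ x := fun x hx =>
        ((hd1 x hx).div (hd2 x hx) (ne_of_gt (hg'' x (le_of_lt hx)))).add (differentiableAt_fun_id)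
      have hφanti : AntitoneOn φ (Ici A) := by
        refine antitoneOn_of_deriv_nonpos (convex_Ici A) ?_ ?_ ?_
        · exact fun x hx => ((hφdiff x (lt_of_lt_of_le hAt₀ hx)).continuousAt).continuousWithinAt
        · intro x hx
          rw [interior_Ici] at hx
          exact ((hφdiff x (hAt₀.trans hx)).differentiableWithinAt)
        · intro x hx
          rw [interior_Ici] at hx
          have hx₀ : t₀ < x := hAt₀.trans hx
          have : deriv φ x = deriv (fun s => deriv g s / deriv (deriv g) s) x + 1 := by
            rw [hφ]
            rw [deriv_fun_add ((hd1 x hx₀).fun_div (hd2 x hx₀) (ne_of_gt (hg'' x (le_of_lt hx₀)))) differentiableAt_fun_id]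
            simp
          rw [this]
          have := hA₀ x (hAA₀.trans hx.le)
          linarith
      set T := max A (φ A) + 1 with hT
      have hAT : A ≤ T := le_trans (le_max_left _ _) (by linarith)
      have hφT : φ A < T := lt_of_le_of_lt (le_max_right _ _) (by linarith)
      have hTA := hφanti (self_mem_Ici) hAT hAT
      have hTt₀ : t₀ ≤ T := (le_of_lt hAt₀).trans hAT
      have hpos : 0 < deriv g T / deriv (deriv g) T := div_pos (hg' T hTt₀) (hg'' T hTt₀)
      have h8 : deriv g T / deriv (deriv g) T + T ≤ φ A := hTA
      clear_value T φ A
      linarith [h8, hφT, hpos]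
    · -- main case: deriv (g'/g'') → 1 - 1/r, Cesàro, uniqueness
      have hFinv : Tendsto (fun t => deriv g t * deriv (deriv (deriv g)) t / (deriv (deriv g) t) ^ 2)
          atTop (nhds r⁻¹) := (hr.inv₀ hr0).congr fun t => inv_div _ _
      have h5 : Tendsto (deriv (fun t => deriv g t / deriv (deriv g) t)) atTop (nhds (1 - r⁻¹)) := by
        refine (tendsto_const_nhds.sub hFinv).congr' ?_
        filter_upwards [eventually_gt_atTop t₀] with t ht
        exact (hderiv2 t ht).symm
      have h6 : Tendsto (fun t => deriv g t / deriv (deriv g) t / t) atTop (nhds (1 - r⁻¹)) :=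
        cesaro_aux (fun x hx => (hd1 x hx).div (hd2 x hx) (ne_of_gt (hg'' x (le_of_lt hx)))) h5
      have huniq : 1 - r⁻¹ = q - 1 := tendsto_nhds_unique h6 h4
      have hrinv : r⁻¹ = 2 - q := by linarith
      have hrval : r = (2 - q)⁻¹ := by rw [← hrinv, inv_inv]
      rw [hrval, one_div]
  | top =>
    exfalso
    have hFtop : Tendsto (fun t => (deriv (deriv g) t) ^ 2 / (deriv g t * deriv (deriv (deriv g)) t))
        atTop atTop := by
      rw [tendsto_atTop]
      intro x
      filter_upwards [EReal.tendsto_nhds_top_iff_real.mp hlimqhat x] with t ht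
      exact_mod_cast le_of_lt ht
    have hFinv : Tendsto (fun t => deriv g t * deriv (deriv (deriv g)) t / (deriv (deriv g) t) ^ 2)
        atTop (nhds 0) := hFtop.inv_tendsto_atTop.congr fun t => by
          simp only [Pi.inv_apply, inv_div]
    have h5 : Tendsto (deriv (fun t => deriv g t / deriv (deriv g) t)) atTop (nhds (1 - 0)) := by
      refine (tendsto_const_nhds.sub hFinv).congr' ?_
      filter_upwards [eventually_gt_atTop t₀] with t ht
      exact (hderiv2 t ht).symm
    have h6 : Tendsto (fun t => deriv g t / deriv (deriv g) t / t) atTop (nhds (1 - 0)) :=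
      cesaro_aux (fun x hx => (hd1 x hx).div (hd2 x hx) (ne_of_gt (hg'' x (le_of_lt hx)))) h5
    have huniq : (1 : ℝ) - 0 = q - 1 := tendsto_nhds_unique h6 h4
    linarith
end

section
/- Let g be C² on [t₀,∞) with g' > 0, g'' > 0, g → ∞, g' → ∞, g'(t)²/(g(t)g''(t)) → q > 1, and t·g'(t)/g(t) → p ∈ (1,∞) with 1/p + 1/q = 1. Let (s_n), (t_n) be sequences with s_n < t_n, s_n → ∞, and s_n/t_n → x ∈ [0,1]. Then g(s_n)/g(t_n) → x^p and (g'(s_n)/g'(t_n))^q → x^p. -/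
open Real Set Filter

lemma mono_aux (h : ℝ → ℝ) (c T : ℝ) (hT : 0 < T)
    (hdiff : ∀ u, T ≤ u → DifferentiableAt ℝ h u)
    (hpos : ∀ u, T ≤ u → 0 < h u)
    (hder : ∀ u, T ≤ u → c * u⁻¹ ≤ (h u)⁻¹ * deriv h u) :
    MonotoneOn (fun u => Real.log (h u) - c * Real.log u) (Ici T) := by
  have hF : ∀ u, T ≤ u → HasDerivAt (fun v => Real.log (h v) - c * Real.log v)
      ((h u)⁻¹ * deriv h u - c * u⁻¹) u := by
    intro u hu
    have h1 : HasDerivAt (fun v => Real.log (h v)) ((h u)⁻¹ * deriv h u) u :=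
      (Real.hasDerivAt_log (hpos u hu).ne').comp u (hdiff u hu).hasDerivAt
    have h2 : HasDerivAt (fun v => c * Real.log v) (c * u⁻¹) u :=
      (Real.hasDerivAt_log (lt_of_lt_of_le hT hu).ne').const_mul c
    exact h1.sub h2
  apply monotoneOn_of_deriv_nonneg (convex_Ici T)
  · intro u hu
    exact ((hF u hu).differentiableAt.continuousAt).continuousWithinAt
  · intro u hu
    rw [interior_Ici] at hu
    exact ((hF u (le_of_lt hu)).differentiableAt).differentiableWithinAt
  · intro u hu
    rw [interior_Ici] at hu
    rw [(hF u (le_of_lt hu)).deriv]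
    have := hder u (le_of_lt hu)
    linarith

lemma anti_aux (h : ℝ → ℝ) (c T : ℝ) (hT : 0 < T)
    (hdiff : ∀ u, T ≤ u → DifferentiableAt ℝ h u)
    (hpos : ∀ u, T ≤ u → 0 < h u)
    (hder : ∀ u, T ≤ u → (h u)⁻¹ * deriv h u ≤ c * u⁻¹) :
    MonotoneOn (fun u => c * Real.log u - Real.log (h u)) (Ici T) := by
  have hF : ∀ u, T ≤ u → HasDerivAt (fun v => c * Real.log v - Real.log (h v))
      (c * u⁻¹ - (h u)⁻¹ * deriv h u) u := by
    intro u hu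
    have h1 : HasDerivAt (fun v => Real.log (h v)) ((h u)⁻¹ * deriv h u) u :=
      (Real.hasDerivAt_log (hpos u hu).ne').comp u (hdiff u hu).hasDerivAt
    have h2 : HasDerivAt (fun v => c * Real.log v) (c * u⁻¹) u :=
      (Real.hasDerivAt_log (lt_of_lt_of_le hT hu).ne').const_mul c
    exact h2.sub h1
  apply monotoneOn_of_deriv_nonneg (convex_Ici T)
  · intro u hu
    exact ((hF u hu).differentiableAt.continuousAt).continuousWithinAt
  · intro u hu
    rw [interior_Ici] at hu
    exact ((hF u (le_of_lt hu)).differentiableAt).differentiableWithinAt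
  · intro u hu
    rw [interior_Ici] at hu
    rw [(hF u (le_of_lt hu)).deriv]
    have := hder u (le_of_lt hu)
    linarith

lemma ratio_aux (α : ℝ) (hα : 0 < α) (h : ℝ → ℝ) (T₀ : ℝ) (hT₀ : 1 ≤ T₀)
    (hdiff : ∀ u, T₀ ≤ u → DifferentiableAt ℝ h u)
    (hpos : ∀ u, T₀ ≤ u → 0 < h u)
    (hlim : Tendsto (fun u => u * deriv h u / h u) atTop (nhds α))
    (s t : ℕ → ℝ) (x : ℝ) (hx0 : 0 ≤ x) (hx1 : x ≤ 1)
    (hst : ∀ n, s n < t n)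
    (hs : Tendsto s atTop atTop)
    (hr : Tendsto (fun n => s n / t n) atTop (nhds x)) :
    Tendsto (fun n => h (s n) / h (t n)) atTop (nhds (x ^ α)) := by
  -- the key two-sided eventual bound
  have bound : ∀ ε : ℝ, 0 < ε → ∀ᶠ n in atTop,
      (α - ε) * (Real.log (t n) - Real.log (s n)) ≤
        Real.log (h (t n)) - Real.log (h (s n)) ∧
      Real.log (h (t n)) - Real.log (h (s n)) ≤
        (α + ε) * (Real.log (t n) - Real.log (s n)) := by
    intro ε hε
    have hev : ∀ᶠ u in atTop, |u * deriv h u / h u - α| < ε := by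
      have := Metric.tendsto_nhds.mp hlim ε hε
      simpa [Real.dist_eq] using this
    obtain ⟨T, hT⟩ := eventually_atTop.mp hev
    set T' := max T T₀ with hT'def
    have hT'pos : 0 < T' := lt_of_lt_of_le zero_lt_one (le_trans hT₀ (le_max_right _ _))
    have hd' : ∀ u, T' ≤ u → DifferentiableAt ℝ h u :=
      fun u hu => hdiff u (le_trans (le_max_right _ _) hu)
    have hp' : ∀ u, T' ≤ u → 0 < h u :=
      fun u hu => hpos u (le_trans (le_max_right _ _) hu)
    have key : ∀ u, T' ≤ u → α - ε < u * deriv h u / h u ∧ u * deriv h u / h u < α + ε := by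
      intro u hu
      have hb := abs_lt.mp (hT u (le_trans (le_max_left _ _) hu))
      constructor <;> linarith [hb.1, hb.2]
    have eqn : ∀ u, T' ≤ u → u * deriv h u / h u / u = (h u)⁻¹ * deriv h u := by
      intro u hu
      have hu0 : u ≠ 0 := (lt_of_lt_of_le hT'pos hu).ne'
      have hh0 : h u ≠ 0 := (hp' u hu).ne'
      field_simp
    have hder_lo : ∀ u, T' ≤ u → (α - ε) * u⁻¹ ≤ (h u)⁻¹ * deriv h u := by
      intro u hu
      have hu0 : (0:ℝ) < u := lt_of_lt_of_le hT'pos hu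
      calc (α - ε) * u⁻¹ = (α - ε) / u := (div_eq_mul_inv _ _).symm
        _ ≤ (u * deriv h u / h u) / u := by
            gcongr
            exact (key u hu).1.le
        _ = (h u)⁻¹ * deriv h u := eqn u hu
    have hder_hi : ∀ u, T' ≤ u → (h u)⁻¹ * deriv h u ≤ (α + ε) * u⁻¹ := by
      intro u hu
      have hu0 : (0:ℝ) < u := lt_of_lt_of_le hT'pos hu
      calc (h u)⁻¹ * deriv h u = (u * deriv h u / h u) / u := (eqn u hu).symm
        _ ≤ (α + ε) / u := by
            gcongr
            exact (key u hu).2.le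
        _ = (α + ε) * u⁻¹ := div_eq_mul_inv _ _
    have m1 := mono_aux h (α - ε) T' hT'pos hd' hp' hder_lo
    have m2 := anti_aux h (α + ε) T' hT'pos hd' hp' hder_hi
    filter_upwards [hs.eventually_ge_atTop T'] with n hn
    have hsn : s n ∈ Ici T' := hn
    have htn : t n ∈ Ici T' := le_trans hn (hst n).le
    have e1 : Real.log (h (s n)) - (α - ε) * Real.log (s n) ≤
        Real.log (h (t n)) - (α - ε) * Real.log (t n) := m1 hsn htn (hst n).le
    have e2 : (α + ε) * Real.log (s n) - Real.log (h (s n)) ≤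
        (α + ε) * Real.log (t n) - Real.log (h (t n)) := m2 hsn htn (hst n).le
    constructor
    · rw [mul_sub]; linarith
    · rw [mul_sub]; linarith
  -- eventual rewriting of the ratio as an exponential
  have hratio_eq : ∀ᶠ n in atTop,
      Real.exp (Real.log (h (s n)) - Real.log (h (t n))) = h (s n) / h (t n) := by
    filter_upwards [hs.eventually_ge_atTop T₀] with n hn
    have h1 : 0 < h (s n) := hpos _ hn
    have h2 : 0 < h (t n) := hpos _ (le_trans hn (hst n).le)
    rw [Real.exp_sub, Real.exp_log h1, Real.exp_log h2]
  rcases eq_or_lt_of_le hx0 with hx0' | hxpos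
  · -- x = 0
    rw [← hx0', Real.zero_rpow hα.ne']
    have hrlog : Tendsto (fun n => Real.log (s n / t n)) atTop atBot := by
      apply Real.tendsto_log_nhdsGT_zero.comp
      rw [tendsto_nhdsWithin_iff]
      refine ⟨by rwa [← hx0'] at hr, ?_⟩
      filter_upwards [hs.eventually_gt_atTop 0] with n hn
      exact div_pos hn (lt_trans hn (hst n))
    have hrtop : Tendsto (fun n => Real.log (t n) - Real.log (s n)) atTop atTop := by
      apply Tendsto.congr' ?_ (tendsto_neg_atBot_atTop.comp hrlog)
      filter_upwards [hs.eventually_gt_atTop 0] with n hn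
      simp only [Function.comp_apply]
      rw [Real.log_div hn.ne' (lt_trans hn (hst n)).ne']
      ring
    have hD : Tendsto (fun n => Real.log (h (s n)) - Real.log (h (t n))) atTop atBot := by
      have hb := bound (α/2) (by positivity)
      have hg : Tendsto (fun n => -(α/2 * (Real.log (t n) - Real.log (s n)))) atTop atBot := by
        apply tendsto_neg_atTop_atBot.comp
        exact hrtop.const_mul_atTop (by positivity)
      apply tendsto_atBot_mono' atTop ?_ hg
      filter_upwards [hb] with n hn
      have h1 := hn.1
      have he : α - α/2 = α/2 := by ring
      rw [he] at h1
      linarith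
    have := Real.tendsto_exp_atBot.comp hD
    exact Tendsto.congr' hratio_eq this
  · -- 0 < x
    have hlogx : Tendsto (fun n => Real.log (s n / t n)) atTop (nhds (Real.log x)) :=
      ((Real.continuousAt_log hxpos.ne').tendsto).comp hr
    have hrn : Tendsto (fun n => Real.log (t n) - Real.log (s n)) atTop
        (nhds (-Real.log x)) := by
      apply Tendsto.congr' ?_ hlogx.neg
      filter_upwards [hs.eventually_gt_atTop 0] with n hn
      rw [Real.log_div hn.ne' (lt_trans hn (hst n)).ne']
      ring
    have hM : 0 < 1 - Real.log x := by
      have := Real.log_nonpos hx0 hx1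
      linarith
    have hdiff0 : Tendsto (fun n => (Real.log (h (t n)) - Real.log (h (s n))) -
        α * (Real.log (t n) - Real.log (s n))) atTop (nhds 0) := by
      rw [NormedAddCommGroup.tendsto_nhds_zero]
      intro δ hδ
      obtain ⟨M, hMdef⟩ : ∃ M : ℝ, M = 1 - Real.log x := ⟨_, rfl⟩
      have hM' : 0 < M := hMdef ▸ hM
      obtain ⟨ε, hεdef⟩ : ∃ ε : ℝ, ε = δ / (2 * M) := ⟨_, rfl⟩
      have hε : 0 < ε := by rw [hεdef]; positivity
      have h5 : ε * M = δ / 2 := by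
        rw [hεdef]; field_simp
      have h2 : ∀ᶠ n in atTop, Real.log (t n) - Real.log (s n) < M :=
        hrn.eventually_lt_const (by rw [hMdef]; linarith)
      have h3 : ∀ᶠ n in atTop, 0 ≤ Real.log (t n) - Real.log (s n) := by
        filter_upwards [hs.eventually_ge_atTop 1] with n hn
        have hsn : (0:ℝ) < s n := lt_of_lt_of_le one_pos hn
        have := Real.log_le_log hsn (hst n).le
        linarith
      filter_upwards [bound ε hε, h2, h3] with n hn1 hn2 hn3
      have hb1 := hn1.1
      have hb2 := hn1.2
      rw [sub_mul] at hb1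
      rw [add_mul] at hb2
      have h4 : ε * (Real.log (t n) - Real.log (s n)) ≤ ε * M :=
        mul_le_mul_of_nonneg_left hn2.le hε.le
      rw [Real.norm_eq_abs, abs_lt]
      constructor <;> linarith
    have hDlim : Tendsto (fun n => Real.log (h (t n)) - Real.log (h (s n))) atTop
        (nhds (α * -Real.log x)) := by
      have := hdiff0.add (hrn.const_mul α)
      simpa using this
    have h6 : Tendsto (fun n => Real.log (h (s n)) - Real.log (h (t n))) atTop
        (nhds (Real.log x * α)) := by
      have h7 := hDlim.neg
      have : -(α * -Real.log x) = Real.log x * α := by ring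
      rw [this] at h7
      apply h7.congr
      intro n; ring
    have h7 : Tendsto (fun n => Real.exp (Real.log (h (s n)) - Real.log (h (t n)))) atTop
        (nhds (x ^ α)) := by
      rw [Real.rpow_def_of_pos hxpos]
      exact Real.continuous_exp.continuousAt.tendsto.comp h6
    exact Tendsto.congr' hratio_eq h7

theorem stmt_15 (t₀ q p : ℝ) (g : ℝ → ℝ)
    (hg : ContDiffOn ℝ 2 g (Ici t₀))
    (hg' : ∀ t ≥ t₀, 0 < deriv g t) (hg'' : ∀ t ≥ t₀, 0 < deriv (deriv g) t)
    (hginf : Filter.Tendsto g Filter.atTop Filter.atTop)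
    (hg'inf : Filter.Tendsto (deriv g) Filter.atTop Filter.atTop)
    (hq : 1 < q) (hp : 1 < p) (hpq : 1 / p + 1 / q = 1)
    (hlimq : Filter.Tendsto (fun t => (deriv g t) ^ 2 / (g t * deriv (deriv g) t))
      Filter.atTop (nhds q))
    (hlimp : Filter.Tendsto (fun t => t * deriv g t / g t) Filter.atTop (nhds p))
    (s t : ℕ → ℝ) (x : ℝ) (hx : x ∈ Icc (0 : ℝ) 1)
    (hst : ∀ n, s n < t n)
    (hsinf : Filter.Tendsto s Filter.atTop Filter.atTop)
    (hratio : Filter.Tendsto (fun n => s n / t n) Filter.atTop (nhds x)) :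
    Filter.Tendsto (fun n => g (s n) / g (t n)) Filter.atTop (nhds (x ^ p)) ∧
    Filter.Tendsto (fun n => (deriv g (s n) / deriv g (t n)) ^ q) Filter.atTop
      (nhds (x ^ p)) := by
  obtain ⟨T₁, hT₁⟩ := eventually_atTop.mp (hginf.eventually_gt_atTop 0)
  set T₀ : ℝ := max (max (t₀ + 1) 1) T₁ with hT₀def
  have hT₀1 : 1 ≤ T₀ := le_trans (le_max_right _ _) (le_max_left _ _)
  have hT₀t₀ : t₀ < T₀ := by
    have : t₀ + 1 ≤ T₀ := le_trans (le_max_left _ _) (le_max_left _ _)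
    linarith
  have hT₀T₁ : T₁ ≤ T₀ := le_max_right _ _
  -- differentiability facts
  have h2 : (2 : WithTop ℕ∞) = 1 + 1 := by norm_num
  have hcd : ContDiffOn ℝ (1 + 1) g (Ioi t₀) := h2 ▸ hg.mono Ioi_subset_Ici_self
  obtain ⟨hdg, -, hdg'⟩ := (contDiffOn_succ_iff_deriv_of_isOpen isOpen_Ioi).mp hcd
  have hmem : ∀ u : ℝ, T₀ ≤ u → u ∈ Ioi t₀ := fun u hu => lt_of_lt_of_le hT₀t₀ hu
  have hdiffg : ∀ u, T₀ ≤ u → DifferentiableAt ℝ g u := fun u hu =>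
    (hdg u (hmem u hu)).differentiableAt (isOpen_Ioi.mem_nhds (hmem u hu))
  have hdiffg' : ∀ u, T₀ ≤ u → DifferentiableAt ℝ (deriv g) u := fun u hu =>
    ((hdg'.differentiableOn one_ne_zero) u (hmem u hu)).differentiableAt
      (isOpen_Ioi.mem_nhds (hmem u hu))
  have hposg : ∀ u, T₀ ≤ u → 0 < g u := fun u hu => hT₁ u (le_trans hT₀T₁ hu)
  have hposg' : ∀ u, T₀ ≤ u → 0 < deriv g u := fun u hu => hg' u (le_trans hT₀t₀.le hu)
  have hposg'' : ∀ u, T₀ ≤ u → 0 < deriv (deriv g) u := fun u hu =>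
    hg'' u (le_trans hT₀t₀.le hu)
  constructor
  · exact ratio_aux p (by linarith) g T₀ hT₀1 hdiffg hposg hlimp s t x hx.1 hx.2
      hst hsinf hratio
  · have hq0 : q ≠ 0 := by linarith
    have hlim' : Tendsto (fun u => u * deriv (deriv g) u / deriv g u) atTop
        (nhds (p / q)) := by
      have base := hlimp.div hlimq hq0
      apply Tendsto.congr' ?_ base
      filter_upwards [eventually_ge_atTop T₀] with u hu
      have h1 : g u ≠ 0 := (hposg u hu).ne'
      have h2 : deriv g u ≠ 0 := (hposg' u hu).ne'
      have h3 : deriv (deriv g) u ≠ 0 := (hposg'' u hu).ne'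
      simp only [Pi.div_apply]
      field_simp
    have hres := ratio_aux (p / q) (by positivity) (deriv g) T₀ hT₀1 hdiffg' hposg'
      hlim' s t x hx.1 hx.2 hst hsinf hratio
    have := hres.rpow_const (Or.inr (by linarith : (0:ℝ) ≤ q))
    have heq : (x ^ (p / q)) ^ q = x ^ p := by
      rw [← Real.rpow_mul hx.1, div_mul_cancel₀ _ hq0]
    rwa [heq] at this
end

section
/- Let u ∈ C²([0,1]) with u'(0) = 0 satisfy −u''(r) − (1/r)u'(r) = F(r) on (0,1) for a continuous function F ≥ 0. Then for all 0 < r < s ≤ 1: u(r) − u(s) = log(s/r)·∫₀^r F(t)·t dt + ∫_r^s F(t)·t·log(s/t) dt. -/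
open Real Set MeasureTheory intervalIntegral Filter Topology

theorem stmt_16 (u F : ℝ → ℝ)
    (hu : ContDiffOn ℝ 2 u (Icc 0 1))
    (hu0 : deriv u 0 = 0)
    (hF : ContinuousOn F (Icc 0 1)) (hFpos : ∀ r ∈ Icc (0 : ℝ) 1, 0 ≤ F r)
    (heq : ∀ r ∈ Ioo (0 : ℝ) 1, -(deriv (deriv u) r) - (1 / r) * deriv u r = F r) :
    ∀ r s : ℝ, 0 < r → r < s → s ≤ 1 →
      u r - u s = Real.log (s / r) * (∫ t in (0 : ℝ)..r, F t * t)
        + ∫ t in r..s, F t * t * Real.log (s / t) := by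
  set f : ℝ → ℝ := fun t => F t * t with hfdef
  have hfc : ContinuousOn f (Icc 0 1) := hF.mul continuousOn_id
  have hfint : IntegrableOn f (Icc (0:ℝ) 1) := hfc.integrableOn_compact isCompact_Icc
  have hfii : ∀ a b : ℝ, a ∈ Icc (0:ℝ) 1 → b ∈ Icc (0:ℝ) 1 → IntervalIntegrable f volume a b :=
    fun a b ha hb => (hfint.mono_set (uIcc_subset_Icc ha hb)).intervalIntegrable
  -- derivatives of u at interior points
  have hderiv_u : ∀ x ∈ Ioo (0:ℝ) 1, HasDerivAt u (deriv u x) x := by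
    intro x hx
    have h1 : Icc (0:ℝ) 1 ∈ 𝓝 x := Icc_mem_nhds hx.1 hx.2
    exact ((hu.differentiableOn (by norm_num)).differentiableAt h1).hasDerivAt
  have hdw : ContDiffOn ℝ 1 (derivWithin u (Icc 0 1)) (Icc 0 1) :=
    hu.derivWithin (uniqueDiffOn_Icc zero_lt_one) (by norm_num)
  have heqd : ∀ x ∈ Ioo (0:ℝ) 1, derivWithin u (Icc 0 1) x = deriv u x := by
    intro x hx
    exact derivWithin_of_mem_nhds (Icc_mem_nhds hx.1 hx.2)
  have hderiv_u' : ∀ x ∈ Ioo (0:ℝ) 1, HasDerivAt (deriv u) (deriv (deriv u) x) x := by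
    intro x hx
    have h1 : Icc (0:ℝ) 1 ∈ 𝓝 x := Icc_mem_nhds hx.1 hx.2
    have hD : DifferentiableAt ℝ (derivWithin u (Icc 0 1)) x :=
      (hdw.differentiableOn (by norm_num)).differentiableAt h1
    have hee : derivWithin u (Icc 0 1) =ᶠ[𝓝 x] deriv u := by
      filter_upwards [IsOpen.mem_nhds isOpen_Ioo hx] with y hy using heqd y hy
    have : DifferentiableAt ℝ (deriv u) x := hD.congr_of_eventuallyEq hee.symm
    exact this.hasDerivAt
  -- derivative of g t = t * u'(t)
  have hg : ∀ x ∈ Ioo (0:ℝ) 1, HasDerivAt (fun t => t * deriv u t) (-(f x)) x := by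
    intro x hx
    have h := (hasDerivAt_id x).mul (hderiv_u' x hx)
    have h2 : deriv (deriv u) x = -F x - (1 / x) * deriv u x := by
      have := heq x hx; linarith
    refine h.congr_deriv ?_
    rw [h2]; simp only [id, hfdef]
    rw [mul_sub, mul_neg, ← mul_assoc, mul_one_div_cancel hx.1.ne']; ring
  -- key identity: x * u'(x) = -∫₀ˣ f
  have hB : ∀ x ∈ Ioo (0:ℝ) 1, x * deriv u x = -∫ t in (0:ℝ)..x, f t := by
    intro x hx
    have hne : (𝓝[Ioo (0:ℝ) x] 0).NeBot := by
      apply mem_closure_iff_nhdsWithin_neBot.mp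
      rw [closure_Ioo hx.1.ne]
      exact ⟨le_rfl, hx.1.le⟩
    have hsub : Ioo (0:ℝ) x ⊆ Ioo 0 1 := Ioo_subset_Ioo le_rfl hx.2.le
    -- the eventually-constant function
    have key : ∀ ε ∈ Ioo (0:ℝ) x,
        x * deriv u x = ε * deriv u ε - ((∫ t in (0:ℝ)..x, f t) - ∫ t in (0:ℝ)..ε, f t) := by
      intro ε hε
      have hii : IntervalIntegrable (fun t => -(f t)) volume ε x :=
        (hfii ε x ⟨hε.1.le, (hε.2.trans hx.2).le⟩ ⟨hx.1.le, hx.2.le⟩).neg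
      have := intervalIntegral.integral_eq_sub_of_hasDerivAt (f := fun t => t * deriv u t)
        (f' := fun t => -(f t)) (a := ε) (b := x) ?_ hii
      · rw [intervalIntegral.integral_neg] at this
        have hsplit : (∫ t in ε..x, f t) = (∫ t in (0:ℝ)..x, f t) - ∫ t in (0:ℝ)..ε, f t :=
          (intervalIntegral.integral_interval_sub_left
            (hfii 0 x ⟨le_rfl, zero_le_one⟩ ⟨hx.1.le, hx.2.le⟩)
            (hfii 0 ε ⟨le_rfl, zero_le_one⟩ ⟨hε.1.le, (hε.2.trans hx.2).le⟩)).symm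
        rw [hsplit] at this
        linarith
      · intro t ht
        rw [uIcc_of_le hε.2.le] at ht
        exact hg t ⟨lt_of_lt_of_le hε.1 ht.1, lt_of_le_of_lt ht.2 hx.2⟩
    -- limits as ε → 0 within Ioo 0 x
    have t1 : Tendsto (fun ε => ε * deriv u ε) (𝓝[Ioo (0:ℝ) x] 0) (𝓝 0) := by
      have hc : ContinuousWithinAt (fun ε => ε * derivWithin u (Icc 0 1) ε) (Icc 0 1) 0 :=
        (continuousWithinAt_id.mul ((hdw.continuousOn) 0 ⟨le_rfl, zero_le_one⟩)).congr
          (fun y _ => rfl) rfl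
      have hc0 : Tendsto (fun ε => ε * derivWithin u (Icc 0 1) ε) (𝓝[Ioo (0:ℝ) x] 0)
          (𝓝 (0 * derivWithin u (Icc 0 1) 0)) := by
        have := hc.tendsto.mono_left (nhdsWithin_mono 0 (hsub.trans Ioo_subset_Icc_self))
        simpa using this
      rw [zero_mul] at hc0
      refine hc0.congr' ?_
      filter_upwards [self_mem_nhdsWithin] with y hy
      rw [heqd y (hsub hy)]
    have t2 : Tendsto (fun ε => ∫ t in (0:ℝ)..ε, f t) (𝓝[Ioo (0:ℝ) x] 0) (𝓝 0) := by
      have hc : ContinuousOn (fun b => ∫ t in (0:ℝ)..b, f t) (uIcc 0 1) := by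
        apply intervalIntegral.continuousOn_primitive_interval
        rwa [uIcc_of_le zero_le_one]
      rw [uIcc_of_le zero_le_one] at hc
      have := (hc 0 ⟨le_rfl, zero_le_one⟩).tendsto.mono_left
        (nhdsWithin_mono 0 (hsub.trans Ioo_subset_Icc_self))
      simpa using this
    have t3 : Tendsto (fun ε => ε * deriv u ε - ((∫ t in (0:ℝ)..x, f t) - ∫ t in (0:ℝ)..ε, f t))
        (𝓝[Ioo (0:ℝ) x] 0) (𝓝 (0 - ((∫ t in (0:ℝ)..x, f t) - 0))) :=
      t1.sub (tendsto_const_nhds.sub t2)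
    have t4 : Tendsto (fun _ : ℝ => x * deriv u x) (𝓝[Ioo (0:ℝ) x] 0) (𝓝 (x * deriv u x)) :=
      tendsto_const_nhds
    have := tendsto_nhds_unique (t4.congr' ?_) t3
    · rw [this]; ring
    · filter_upwards [self_mem_nhdsWithin] with ε hε using key ε hε
  intro r s hr hrs hs1
  have hr1 : r < 1 := lt_of_lt_of_le hrs hs1
  have hs0 : 0 < s := hr.trans hrs
  have hsubIcc : Icc r s ⊆ Icc (0:ℝ) 1 := Icc_subset_Icc hr.le hs1
  set G : ℝ → ℝ := fun x => ∫ t in (0:ℝ)..x, f t with hGdef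
  set f2 : ℝ → ℝ := fun t => f t * (Real.log s - Real.log t) with hf2def
  set Φ : ℝ → ℝ := fun x => u x - (Real.log s - Real.log x) * G x - ∫ t in x..s, f2 t with hPdef
  have hf2c : ContinuousOn f2 (Icc r s) := by
    apply (hfc.mono hsubIcc).mul
    apply continuousOn_const.sub
    exact Real.continuousOn_log.mono (fun t ht => ne_of_gt (lt_of_lt_of_le hr ht.1))
  have hf2int : IntegrableOn f2 (Icc r s) := hf2c.integrableOn_compact isCompact_Icc
  have hf2ii : ∀ a b : ℝ, a ∈ Icc r s → b ∈ Icc r s → IntervalIntegrable f2 volume a b :=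
    fun a b ha hb => (hf2int.mono_set (uIcc_subset_Icc ha hb)).intervalIntegrable
  -- derivative of Φ on (r,s)
  have hPderiv : ∀ x ∈ Ioo r s, HasDerivWithinAt Φ 0 (Ioi x) x := by
    intro x hx
    have hx01 : x ∈ Ioo (0:ℝ) 1 := ⟨hr.trans hx.1, lt_of_lt_of_le hx.2 hs1⟩
    have hnx : Icc (0:ℝ) 1 ∈ 𝓝 x := Icc_mem_nhds hx01.1 hx01.2
    have hU := hderiv_u x hx01
    have hL : HasDerivAt (fun y => Real.log s - Real.log y) (-x⁻¹) x :=
      (Real.hasDerivAt_log hx01.1.ne').const_sub (Real.log s)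
    have hfcx : ContinuousAt f x := hfc.continuousAt hnx
    have hmeas : StronglyMeasurableAtFilter f (𝓝 x) volume := by
      refine ContinuousAt.stronglyMeasurableAtFilter isOpen_Ioo ?_ x hx01
      intro y hy
      exact hfc.continuousAt (Icc_mem_nhds hy.1 hy.2)
    have hG : HasDerivAt G (f x) x :=
      intervalIntegral.integral_hasDerivAt_right
        (hfii 0 x ⟨le_rfl, zero_le_one⟩ ⟨hx01.1.le, hx01.2.le⟩) hmeas hfcx
    have hf2cx : ContinuousAt f2 x := by
      apply hfcx.mul
      exact continuousAt_const.sub (Real.continuousAt_log hx01.1.ne')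
    have hmeas2 : StronglyMeasurableAtFilter f2 (𝓝 x) volume := by
      refine ContinuousAt.stronglyMeasurableAtFilter (isOpen_Ioo (a := r) (b := s)) ?_ x hx
      intro y hy
      have hy01 : y ∈ Ioo (0:ℝ) 1 := ⟨hr.trans hy.1, lt_of_lt_of_le hy.2 hs1⟩
      exact (hfc.continuousAt (Icc_mem_nhds hy01.1 hy01.2)).mul
        (continuousAt_const.sub (Real.continuousAt_log hy01.1.ne'))
    have h1 : HasDerivAt (fun y => ∫ t in r..y, f2 t) (f2 x) x :=
      intervalIntegral.integral_hasDerivAt_right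
        (hf2ii r x ⟨le_rfl, hrs.le⟩ ⟨hx.1.le, hx.2.le⟩) hmeas2 hf2cx
    have h2 : HasDerivAt (fun y => (∫ t in r..s, f2 t) - ∫ t in r..y, f2 t) (-(f2 x)) x :=
      h1.const_sub _
    have hH : HasDerivAt (fun y => ∫ t in y..s, f2 t) (-(f2 x)) x := by
      apply h2.congr_of_eventuallyEq
      filter_upwards [IsOpen.mem_nhds isOpen_Ioo hx] with y hy
      have := intervalIntegral.integral_add_adjacent_intervals
        (hf2ii r y ⟨le_rfl, hrs.le⟩ ⟨hy.1.le, hy.2.le⟩)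
        (hf2ii y s ⟨hy.1.le, hy.2.le⟩ ⟨hrs.le, le_rfl⟩)
      linarith
    have hcomb := (hU.sub (hL.mul hG)).sub hH
    have hval : deriv u x - (-x⁻¹ * G x + (Real.log s - Real.log x) * f x) - -(f2 x) = 0 := by
      have hBx := hB x hx01
      have hGx : G x = -(x * deriv u x) := by rw [hBx]; ring
      have : f2 x = f x * (Real.log s - Real.log x) := rfl
      rw [this, hGx]
      field_simp [hx01.1.ne']
      ring
    rw [hval] at hcomb
    exact hcomb.hasDerivWithinAt
  -- continuity of Φ on [r,s]
  have hPcont : ContinuousOn Φ (Icc r s) := by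
    have h1 : ContinuousOn u (Icc r s) := hu.continuousOn.mono hsubIcc
    have h2 : ContinuousOn (fun x => Real.log s - Real.log x) (Icc r s) :=
      continuousOn_const.sub (Real.continuousOn_log.mono
        (fun t ht => ne_of_gt (lt_of_lt_of_le hr ht.1)))
    have h3 : ContinuousOn G (Icc r s) := by
      have : ContinuousOn G (uIcc (0:ℝ) 1) := by
        apply intervalIntegral.continuousOn_primitive_interval
        rwa [uIcc_of_le zero_le_one]
      rw [uIcc_of_le zero_le_one] at this
      exact this.mono hsubIcc
    have h4 : ContinuousOn (fun x => ∫ t in x..s, f2 t) (Icc r s) := by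
      have : ContinuousOn (fun x => ∫ t in x..s, f2 t) (uIcc r s) := by
        apply intervalIntegral.continuousOn_primitive_interval_left
        rwa [uIcc_of_le hrs.le]
      rwa [uIcc_of_le hrs.le] at this
    exact (h1.sub (h2.mul h3)).sub h4
  -- Φ r = Φ s
  have hkey : ∫ x in r..s, (0:ℝ) = Φ s - Φ r :=
    intervalIntegral.integral_eq_sub_of_hasDeriv_right_of_le hrs.le hPcont hPderiv
      intervalIntegrable_const
  have hPr : Φ r = Φ s := by
    have : (∫ x in r..s, (0:ℝ)) = 0 := by simp
    rw [this] at hkey; linarith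
  have hPs : Φ s = u s := by
    simp [hPdef]
  have hfinal : u r - u s = (Real.log s - Real.log r) * G r + ∫ t in r..s, f2 t := by
    have := hPr
    rw [hPs] at this
    simp only [hPdef] at this
    linarith
  rw [hfinal]
  have hlog : Real.log (s / r) = Real.log s - Real.log r := Real.log_div hs0.ne' hr.ne'
  rw [hlog]
  congr 1
  apply intervalIntegral.integral_congr
  intro t ht
  rw [uIcc_of_le hrs.le] at ht
  have ht0 : 0 < t := lt_of_lt_of_le hr ht.1
  simp only [hf2def, hfdef]
  rw [Real.log_div hs0.ne' ht0.ne']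
end

section
/- Suppose V̄ ∈ C²((0,R̄]) satisfies −V̄'' − (1/r)V̄' = f(V̄) > 0 on (0,R̄] with V̄(r) → ∞ as r → 0⁺ and V̄'(R̄) < 0, where f : [0,∞) → [0,∞) is continuously differentiable and nonnegative. Then the solution V of the initial value problem −V'' − (1/r)V' = f(V), V(R̄) = V̄(R̄), V'(R̄) = V̄'(R̄) on [R̄,∞) is strictly decreasing as long as it stays positive, and there exists a finite R* > R̄ such that V(r) → 0 as r → (R*)⁻; i.e., extending V̄ by V yields a singular solution on (0,R*] vanishing at R*. -/
open Real Set Filter Metric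

lemma glue_ode {E : Type*} [NormedAddCommGroup E] [NormedSpace ℝ E]
    (ψ : ℝ → E → E) (u v : ℝ → E) (a b c : ℝ) (hac : a ≤ c) (hcb : c ≤ b) (huv : u c = v c)
    (hu : ∀ t ∈ Icc a c, HasDerivWithinAt u (ψ t (u t)) (Icc a c) t)
    (hv : ∀ t ∈ Icc c b, HasDerivWithinAt v (ψ t (v t)) (Icc c b) t) :
    ∃ G : ℝ → E, (∀ t ∈ Icc a c, G t = u t) ∧ (∀ t ∈ Icc c b, G t = v t) ∧
      ∀ t ∈ Icc a b, HasDerivWithinAt G (ψ t (G t)) (Icc a b) t := by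
  set G : ℝ → E := fun t => if t ≤ c then u t else v t with hG
  have hGu : ∀ t ∈ Icc a c, G t = u t := fun t ht => by simp [hG, ht.2]
  have hGv : ∀ t ∈ Icc c b, G t = v t := by
    intro t ht
    rcases eq_or_lt_of_le ht.1 with h | h
    · simp [hG, ← h, huv]
    · simp [hG, not_le.mpr h]
  refine ⟨G, hGu, hGv, ?_⟩
  intro t ht
  rcases lt_trichotomy t c with h | h | h
  · have htac : t ∈ Icc a c := ⟨ht.1, h.le⟩
    have hmem : Icc a c ∈ nhdsWithin t (Icc a b) := by
      refine Filter.mem_of_superset (inter_mem_nhdsWithin _ (Iio_mem_nhds h)) ?_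
      rintro x ⟨hx1, hx2⟩
      exact ⟨hx1.1, le_of_lt hx2⟩
    have h1 : HasDerivWithinAt u (ψ t (u t)) (Icc a b) t :=
      (hu t htac).mono_of_mem_nhdsWithin hmem
    have heq : G =ᶠ[nhdsWithin t (Icc a b)] u := by
      filter_upwards [nhdsWithin_le_nhds (Iio_mem_nhds h)] with x hx
      simp [hG, le_of_lt (mem_Iio.mp hx)]
    have := h1.congr_of_eventuallyEq heq (hGu t htac)
    rwa [hGu t htac]
  · subst h
    have h1 : HasDerivWithinAt G (ψ t (u t)) (Icc a t) t :=
      (hu t ⟨hac, le_refl t⟩).congr (fun x hx => hGu x hx) (hGu t ⟨hac, le_refl t⟩)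
    have h2 : HasDerivWithinAt G (ψ t (u t)) (Icc t b) t := by
      have := (hv t ⟨le_refl t, hcb⟩).congr (fun x hx => hGv x hx) (hGv t ⟨le_refl t, hcb⟩)
      rwa [← huv] at this
    have := h1.union h2
    rw [Set.Icc_union_Icc_eq_Icc hac hcb] at this
    rwa [hGu t ⟨hac, le_refl t⟩]
  · have htcb : t ∈ Icc c b := ⟨h.le, ht.2⟩
    have hmem : Icc c b ∈ nhdsWithin t (Icc a b) := by
      refine Filter.mem_of_superset (inter_mem_nhdsWithin _ (Ioi_mem_nhds h)) ?_
      rintro x ⟨hx1, hx2⟩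
      exact ⟨le_of_lt hx2, hx1.2⟩
    have h1 : HasDerivWithinAt v (ψ t (v t)) (Icc a b) t :=
      (hv t htcb).mono_of_mem_nhdsWithin hmem
    have heq : G =ᶠ[nhdsWithin t (Icc a b)] v := by
      filter_upwards [nhdsWithin_le_nhds (Ioi_mem_nhds h)] with x hx
      simp [hG, not_le.mpr (mem_Ioi.mp hx)]
    have := h1.congr_of_eventuallyEq heq (hGv t htcb)
    rwa [hGv t htcb]

lemma local_step {E : Type*} [NormedAddCommGroup E] [NormedSpace ℝ E] [CompleteSpace E]
    (F : ℝ → E → E) (K : NNReal) (hK : 1 ≤ (K : ℝ)) (B : ℝ)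
    (c c' : ℝ) (hcc : c ≤ c') (hlen : c' - c ≤ 1 / (2 * K))
    (hlip : ∀ t ∈ Icc c c', LipschitzWith K (F t))
    (hcont : ∀ x, ContinuousOn (fun t => F t x) (Icc c c'))
    (hB : ∀ t ∈ Icc c c', ∀ x : E, ‖F t x‖ ≤ B + K * ‖x‖)
    (x₀ : E) :
    ∃ g : ℝ → E, g c = x₀ ∧ ∀ t ∈ Icc c c', HasDerivWithinAt g (F t (g t)) (Icc c c') t := by
  have hK0 : (0 : ℝ) < K := lt_of_lt_of_le one_pos hK
  have hB0 : (0 : ℝ) ≤ B := by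
    have := hB c ⟨le_refl c, hcc⟩ 0
    simp at this
    linarith [norm_nonneg (F c 0)]
  set R : ℝ := B + K * ‖x₀‖ + 1 with hR
  have hRpos : 0 < R := by positivity
  set C : ℝ := B + K * (‖x₀‖ + R) with hC
  have hCpos0 : 0 ≤ C := by positivity
  have hpl : IsPicardLindelof F (tmin := c) (tmax := c') ⟨c, ⟨le_refl c, hcc⟩⟩ x₀
      R.toNNReal 0 C.toNNReal K :=
    { lipschitzOnWith := fun t ht => (hlip t ht).lipschitzOnWith
      continuousOn := fun x _ => hcont x
      norm_le := fun t ht x hx => by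
        rw [Real.coe_toNNReal _ hRpos.le] at hx
        rw [Real.coe_toNNReal _ hCpos0]
        have hxn : ‖x‖ ≤ ‖x₀‖ + R := by
          have := mem_closedBall_iff_norm.mp hx
          have h2 : ‖x‖ ≤ ‖x - x₀‖ + ‖x₀‖ := (norm_le_norm_add_norm_sub' x x₀).trans (by linarith [norm_nonneg (x - x₀), norm_nonneg x₀])
          linarith
        have := hB t ht x
        have h3 : (K : ℝ) * ‖x‖ ≤ K * (‖x₀‖ + R) := by
          apply mul_le_mul_of_nonneg_left hxn hK0.le
        simp only [hC]; linarith
      mul_max_le := by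
        rw [Real.coe_toNNReal _ hCpos0, Real.coe_toNNReal _ hRpos.le, NNReal.coe_zero, sub_zero]
        have hmax : max (c' - c) (c - c) = c' - c :=
          max_eq_left (by linarith : c - c ≤ c' - c)
        rw [hmax]
        have hCpos : 0 ≤ C := by positivity
        have h1 : C * (c' - c) ≤ C * (1 / (2 * K)) :=
          mul_le_mul_of_nonneg_left hlen hCpos
        have h2 : C ≤ 2 * K * R := by
          have : B + K * ‖x₀‖ ≤ K * R := by nlinarith [norm_nonneg x₀]
          simp only [hC]; nlinarith
        calc C * (c' - c) ≤ C * (1 / (2 * K)) := h1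
          _ ≤ (2 * K * R) * (1 / (2 * K)) := by
              apply mul_le_mul_of_nonneg_right h2; positivity
          _ = R := by field_simp }
  exact hpl.exists_eq_forall_mem_Icc_hasDerivWithinAt₀

lemma fwd_global {E : Type*} [NormedAddCommGroup E] [NormedSpace ℝ E] [CompleteSpace E]
    (F : ℝ → E → E) (K : NNReal) (hK : 1 ≤ (K : ℝ)) (B : ℝ)
    (t₀ b : ℝ) (ht₀b : t₀ ≤ b)
    (hlip : ∀ t ∈ Icc t₀ b, LipschitzWith K (F t))
    (hcont : ∀ x, ContinuousOn (fun t => F t x) (Icc t₀ b))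
    (hB : ∀ t ∈ Icc t₀ b, ∀ x : E, ‖F t x‖ ≤ B + K * ‖x‖)
    (x₀ : E) :
    ∃ g : ℝ → E, g t₀ = x₀ ∧ ∀ t ∈ Icc t₀ b, HasDerivWithinAt g (F t (g t)) (Icc t₀ b) t := by
  have hK0 : (0 : ℝ) < K := lt_of_lt_of_le one_pos hK
  set δ : ℝ := 1 / (2 * K) with hδ
  have hδ0 : 0 < δ := by positivity
  have key : ∀ n : ℕ, ∃ g : ℝ → E, g t₀ = x₀ ∧
      ∀ t ∈ Icc t₀ (min b (t₀ + n * δ)),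
        HasDerivWithinAt g (F t (g t)) (Icc t₀ (min b (t₀ + n * δ))) t := by
    intro n
    induction n with
    | zero =>
      refine ⟨fun _ => x₀, rfl, ?_⟩
      have : min b (t₀ + (0 : ℕ) * δ) = t₀ := by simp [min_eq_right ht₀b]
      rw [this]
      intro t ht
      rw [Icc_self] at ht
      rw [ht, Icc_self]
      exact hasDerivWithinAt_iff_tendsto_slope.mpr (by simp)
    | succ n ih =>
      obtain ⟨g, hg0, hg⟩ := ih
      set c : ℝ := min b (t₀ + n * δ) with hc
      set c' : ℝ := min b (t₀ + (n + 1 : ℕ) * δ) with hc'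
      have ht₀c : t₀ ≤ c := le_min ht₀b (le_add_of_nonneg_right (by positivity))
      have hcc' : c ≤ c' := min_le_min (le_refl b) (by push_cast; nlinarith)
      have hc'b : c' ≤ b := min_le_left _ _
      have hsub : Icc c c' ⊆ Icc t₀ b := fun x hx => ⟨ht₀c.trans hx.1, hx.2.trans hc'b⟩
      have hlen : c' - c ≤ δ := by
        rcases le_total b (t₀ + n * δ) with h | h
        · have : c = b := min_eq_left h
          have h2 : c' = b := min_eq_left (by push_cast; nlinarith)
          rw [this, h2]; linarith
        · have : c = t₀ + n * δ := min_eq_right h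
          have h2 : c' ≤ t₀ + (n + 1 : ℕ) * δ := min_le_right _ _
          push_cast at h2 ⊢
          rw [this]; push_cast; linarith
      obtain ⟨h, hh0, hh⟩ := local_step F K hK B c c' hcc' (by rw [hδ] at hlen; exact hlen)
        (fun t ht => hlip t (hsub ht)) (fun x => (hcont x).mono hsub)
        (fun t ht x => hB t (hsub ht) x) (g c)
      obtain ⟨G, hGu, _, hG⟩ := glue_ode F g h t₀ c' c ht₀c hcc' hh0.symm hg hh
      exact ⟨G, by rw [hGu t₀ ⟨le_refl t₀, ht₀c⟩, hg0], hG⟩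
  obtain ⟨n, hn⟩ := exists_nat_ge ((b - t₀) / δ)
  obtain ⟨g, hg0, hg⟩ := key n
  have : min b (t₀ + n * δ) = b := by
    apply min_eq_left
    rw [div_le_iff₀ hδ0] at hn
    linarith
  rw [this] at hg
  exact ⟨g, hg0, hg⟩

lemma global_ode {E : Type*} [NormedAddCommGroup E] [NormedSpace ℝ E] [CompleteSpace E]
    (F : ℝ → E → E) (K : NNReal) (hK : 1 ≤ (K : ℝ)) (B : ℝ)
    (a b : ℝ) (t₀ : ℝ) (ht₀ : t₀ ∈ Icc a b)
    (hlip : ∀ t ∈ Icc a b, LipschitzWith K (F t))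
    (hcont : ∀ x, ContinuousOn (fun t => F t x) (Icc a b))
    (hB : ∀ t ∈ Icc a b, ∀ x : E, ‖F t x‖ ≤ B + K * ‖x‖)
    (x₀ : E) :
    ∃ g : ℝ → E, g t₀ = x₀ ∧ ∀ t ∈ Icc a b, HasDerivWithinAt g (F t (g t)) (Icc a b) t := by
  have hsub1 : Icc t₀ b ⊆ Icc a b := fun x hx => ⟨ht₀.1.trans hx.1, hx.2⟩
  have hsub2 : Icc a t₀ ⊆ Icc a b := fun x hx => ⟨hx.1, hx.2.trans ht₀.2⟩
  -- forward piece
  obtain ⟨gf, hgf0, hgf⟩ := fwd_global F K hK B t₀ b ht₀.2 (fun t ht => hlip t (hsub1 ht))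
    (fun x => (hcont x).mono hsub1) (fun t ht x => hB t (hsub1 ht) x) x₀
  -- backward piece via time reversal
  set G : ℝ → E → E := fun s x => -F (-s) x with hGdef
  have hmapsneg : ∀ s ∈ Icc (-t₀) (-a), -s ∈ Icc a t₀ := by
    intro s hs; constructor <;> [linarith [hs.2]; linarith [hs.1]]
  obtain ⟨h, hh0, hh⟩ := fwd_global G K hK B (-t₀) (-a) (by linarith [ht₀.1])
    (fun s hs => (hlip (-s) (hsub2 (hmapsneg s hs))).neg)
    (fun x => ((hcont x).mono hsub2 |>.comp continuous_neg.continuousOn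
        (fun s hs => hmapsneg s hs)).neg)
    (fun s hs x => by
      rw [hGdef]; simp only [norm_neg]
      exact hB (-s) (hsub2 (hmapsneg s hs)) x)
    x₀
  set gb : ℝ → E := fun t => h (-t) with hgbdef
  have hgb0 : gb t₀ = x₀ := by simp [hgbdef, hh0]
  have hgb : ∀ t ∈ Icc a t₀, HasDerivWithinAt gb (F t (gb t)) (Icc a t₀) t := by
    intro t ht
    have hmem : -t ∈ Icc (-t₀) (-a) := ⟨by linarith [ht.2], by linarith [ht.1]⟩
    have hneg : HasDerivWithinAt (fun s : ℝ => -s) (-1 : ℝ) (Icc a t₀) t :=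
      (hasDerivAt_neg t).hasDerivWithinAt
    have hmapsTo : MapsTo (fun s : ℝ => -s) (Icc a t₀) (Icc (-t₀) (-a)) :=
      fun s hs => ⟨by simp; linarith [hs.2], by simp; linarith [hs.1]⟩
    have hcomp : HasDerivWithinAt (h ∘ fun s : ℝ => -s) ((-1 : ℝ) • G (-t) (h (-t)))
        (Icc a t₀) t := (hh (-t) hmem).scomp_of_eq t hneg hmapsTo rfl
    have heq : ((-1 : ℝ) • G (-t) (h (-t))) = F t (gb t) := by
      simp [hGdef, hgbdef]
    rwa [heq] at hcomp
  obtain ⟨Gg, hGu, _, hG⟩ := glue_ode F gb gf a b t₀ ht₀.1 ht₀.2 (by rw [hgb0, hgf0]) hgb hgf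
  exact ⟨Gg, by rw [hGu t₀ ⟨ht₀.1, le_refl t₀⟩, hgb0], hG⟩

theorem stmt_18 (Rbar : ℝ) (hRbar : 0 < Rbar) (f : ℝ → ℝ) (hf : ContDiff ℝ 1 f)
    (hfnonneg : ∀ t, 0 ≤ f t) (Vbar : ℝ → ℝ)
    (hVbar : ContDiffOn ℝ 2 Vbar (Ioc 0 Rbar))
    (hVbarpos : ∀ r ∈ Ioc (0 : ℝ) Rbar, 0 < Vbar r)
    (hVbareq : ∀ r ∈ Ioc (0 : ℝ) Rbar,
      -(deriv (deriv Vbar) r) - (1 / r) * deriv Vbar r = f (Vbar r))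
    (hVbarf : ∀ r ∈ Ioc (0 : ℝ) Rbar, 0 < f (Vbar r))
    (hVbarinf : Filter.Tendsto Vbar (nhdsWithin 0 (Ioi 0)) Filter.atTop)
    (hVbar' : deriv Vbar Rbar < 0) :
    ∃ (Rstar : ℝ) (V : ℝ → ℝ), Rbar < Rstar ∧
      V Rbar = Vbar Rbar ∧ deriv V Rbar = deriv Vbar Rbar ∧
      ContDiffOn ℝ 2 V (Ico Rbar Rstar) ∧
      (∀ r ∈ Ico Rbar Rstar, 0 < V r) ∧
      (∀ r ∈ Ioo Rbar Rstar, -(deriv (deriv V) r) - (1 / r) * deriv V r = f (V r)) ∧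
      StrictAntiOn V (Ico Rbar Rstar) ∧
      Filter.Tendsto V (nhdsWithin Rstar (Iio Rstar)) (nhds 0) := by
  set A : ℝ := Vbar Rbar with hAdef
  have hA : 0 < A := hVbarpos Rbar ⟨hRbar, le_refl Rbar⟩
  set d₀ : ℝ := deriv Vbar Rbar with hd₀def
  set m : ℝ := -(Rbar * d₀) with hmdef
  have hm : 0 < m := by rw [hmdef]; nlinarith
  set a0 : ℝ := Rbar / 2 with ha0def
  have ha0 : 0 < a0 := by positivity
  set R1 : ℝ := Rbar * Real.exp (A / m) with hR1def
  have hR1gt : Rbar < R1 := by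
    rw [hR1def]
    nlinarith [Real.one_lt_exp_iff.mpr (by positivity : (0:ℝ) < A / m)]
  set b0 : ℝ := R1 + 1 with hb0def
  have hab : a0 < Rbar := by rw [ha0def]; linarith
  have hRb0 : Rbar < b0 := by rw [hb0def]; linarith
  have hRmem : Rbar ∈ Icc a0 b0 := ⟨hab.le, hRb0.le⟩
  -- the clamp and truncated nonlinearity
  set clamp : ℝ → ℝ := fun t => max 0 (min t A) with hclampdef
  have hclamp_mem : ∀ t, clamp t ∈ Icc 0 A := fun t =>
    ⟨le_max_left _ _, max_le hA.le (min_le_right t A)⟩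
  have hclamp_id : ∀ t, 0 ≤ t → t ≤ A → clamp t = t := by
    intro t h1 h2
    rw [hclampdef]; simp only [min_eq_left h2, max_eq_right h1]
  have hclamp_lip : LipschitzWith 1 clamp := by
    apply LipschitzWith.of_dist_le_mul
    intro x y
    rw [NNReal.coe_one, one_mul, Real.dist_eq, Real.dist_eq, hclampdef]
    calc |max 0 (min x A) - max 0 (min y A)| = |max (min x A) 0 - max (min y A) 0| := by
          rw [max_comm 0 (min x A), max_comm 0 (min y A)]
      _ ≤ |min x A - min y A| := abs_max_sub_max_le_abs _ _ _
      _ = |min x A - min y A| := rfl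
      _ ≤ max |x - y| |A - A| := abs_min_sub_min_le_max _ _ _ _
      _ ≤ |x - y| := by simp
  have hclamp_cont : Continuous clamp := continuous_const.max (continuous_id.min continuous_const)
  set ftil : ℝ → ℝ := fun t => f (clamp t) with hftildef
  -- Lipschitz bound for f on [0, A]
  have hfC : Continuous (deriv f) := hf.continuous_deriv le_rfl
  obtain ⟨Cf, hCf⟩ := isCompact_Icc.exists_bound_of_continuousOn (s := Icc (0:ℝ) A)
    hfC.continuousOn
  set Lf : NNReal := Real.toNNReal Cf with hLfdef
  have hflip : LipschitzOnWith Lf f (Icc 0 A) := by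
    apply (convex_Icc (0:ℝ) A).lipschitzOnWith_of_nnnorm_deriv_le
      (fun x _ => hf.differentiable one_ne_zero x)
    intro x hx
    rw [← NNReal.coe_le_coe, coe_nnnorm, hLfdef, Real.coe_toNNReal']
    exact le_trans (hCf x hx) (le_max_left _ _)
  have hftil_lip : LipschitzWith Lf ftil := by
    have := hflip.comp (lipschitzOnWith_univ.mpr hclamp_lip)
      (fun t _ => hclamp_mem t)
    rw [mul_one] at this
    exact lipschitzOnWith_univ.mp this
  have hftil_nonneg : ∀ t, 0 ≤ ftil t := fun t => hfnonneg _
  obtain ⟨Mf, hMf⟩ := isCompact_Icc.exists_bound_of_continuousOn (s := Icc (0:ℝ) A)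
    hf.continuous.continuousOn
  have hftil_bdd : ∀ t, ftil t ≤ max Mf 0 := by
    intro t
    calc ftil t = ‖f (clamp t)‖ := (Real.norm_of_nonneg (hfnonneg _)).symm
      _ ≤ Mf := hMf _ (hclamp_mem t)
      _ ≤ max Mf 0 := le_max_left _ _
  -- the vector field
  set F : ℝ → ℝ × ℝ → ℝ × ℝ := fun t x => (x.2 / t, -(t * ftil x.1)) with hFdef
  set Kr : ℝ := max (max (1 / a0) (b0 * Lf)) 1 with hKrdef
  have hKr1 : 1 ≤ Kr := le_max_right _ _
  set K : NNReal := Real.toNNReal Kr with hKdef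
  have hKco : (K : ℝ) = Kr := Real.coe_toNNReal _ (by linarith)
  have hK1 : 1 ≤ (K : ℝ) := by rw [hKco]; exact hKr1
  have hb0pos : 0 < b0 := lt_trans (lt_trans ha0 hab) hRb0
  have hlipF : ∀ t ∈ Icc a0 b0, LipschitzWith K (F t) := by
    intro t ht
    have ht0 : 0 < t := lt_of_lt_of_le ha0 ht.1
    apply LipschitzWith.of_dist_le_mul
    intro x y
    have hd1 : dist x.1 y.1 ≤ dist x y := by rw [Prod.dist_eq]; exact le_max_left _ _
    have hd2 : dist x.2 y.2 ≤ dist x y := by rw [Prod.dist_eq]; exact le_max_right _ _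
    have hdnn : 0 ≤ dist x y := dist_nonneg
    rw [Prod.dist_eq]
    have hKge1 : 1 / a0 ≤ Kr := le_trans (le_max_left _ _) (le_max_left _ _)
    have hKge2 : b0 * Lf ≤ Kr := le_trans (le_max_right _ _) (le_max_left _ _)
    rw [hKco]
    apply max_le
    · have h1 : dist ((F t x).1) ((F t y).1) = |x.2 - y.2| / t := by
        simp only [hFdef, Real.dist_eq, div_sub_div_same, abs_div, abs_of_pos ht0]
      rw [h1]
      have h2 : |x.2 - y.2| / t ≤ |x.2 - y.2| / a0 := by
        apply div_le_div_of_nonneg_left (abs_nonneg _) ha0 ht.1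
      have h3 : |x.2 - y.2| = dist x.2 y.2 := (Real.dist_eq _ _).symm
      have h4 : (0:ℝ) < a0 := ha0
      calc |x.2 - y.2| / t ≤ |x.2 - y.2| / a0 := h2
        _ = (1 / a0) * |x.2 - y.2| := by ring
        _ ≤ Kr * dist x y := by
            rw [h3]
            apply mul_le_mul hKge1 hd2 dist_nonneg (by linarith)
    · have h1 : dist ((F t x).2) ((F t y).2) = |t| * |ftil x.1 - ftil y.1| := by
        simp only [hFdef]
        rw [dist_neg_neg, Real.dist_eq, ← mul_sub, abs_mul]
      rw [h1]
      have h2 : dist (ftil x.1) (ftil y.1) ≤ Lf * dist x.1 y.1 := hftil_lip.dist_le_mul x.1 y.1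
      rw [Real.dist_eq, Real.dist_eq] at h2
      have h3 : |t| ≤ b0 := by rw [abs_of_pos ht0]; exact ht.2
      have hLfnn : (0:ℝ) ≤ Lf := Lf.coe_nonneg
      calc |t| * |ftil x.1 - ftil y.1| ≤ b0 * (Lf * |x.1 - y.1|) := by
            apply mul_le_mul h3 h2 (abs_nonneg _) hb0pos.le
        _ = (b0 * Lf) * |x.1 - y.1| := by ring
        _ ≤ Kr * dist x y := by
            have h5 : |x.1 - y.1| ≤ dist x y := by rw [← Real.dist_eq]; exact hd1
            apply mul_le_mul hKge2 h5 (abs_nonneg _) (by linarith)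
  set B0 : ℝ := b0 * max Mf 0 with hB0def
  have hB0nn : 0 ≤ B0 := by positivity
  have hBF : ∀ t ∈ Icc a0 b0, ∀ x : ℝ × ℝ, ‖F t x‖ ≤ B0 + K * ‖x‖ := by
    intro t ht x
    have ht0 : 0 < t := lt_of_lt_of_le ha0 ht.1
    have hKge1 : 1 / a0 ≤ Kr := le_trans (le_max_left _ _) (le_max_left _ _)
    have hxn : ‖x.2‖ ≤ ‖x‖ := norm_snd_le x
    rw [Prod.norm_def]
    apply max_le
    · have h1 : ‖(F t x).1‖ = |x.2| / t := by
        simp only [hFdef, Real.norm_eq_abs, abs_div, abs_of_pos ht0]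
      rw [h1]
      calc |x.2| / t ≤ |x.2| / a0 := div_le_div_of_nonneg_left (abs_nonneg _) ha0 ht.1
        _ = (1 / a0) * |x.2| := by ring
        _ ≤ Kr * ‖x‖ := by
            apply mul_le_mul hKge1 (by rw [← Real.norm_eq_abs]; exact hxn) (abs_nonneg _)
              (by rw [← hKco]; exact K.coe_nonneg)
        _ ≤ B0 + K * ‖x‖ := by rw [hKco]; linarith
    · have h1 : ‖(F t x).2‖ = t * ftil x.1 := by
        simp only [hFdef, Real.norm_eq_abs, abs_neg, abs_mul, abs_of_pos ht0,
          abs_of_nonneg (hftil_nonneg x.1)]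
      rw [h1]
      have h2 : t * ftil x.1 ≤ b0 * max Mf 0 := by
        apply mul_le_mul ht.2 (hftil_bdd x.1) (hftil_nonneg x.1) hb0pos.le
      have h3 : (0:ℝ) ≤ (K : ℝ) * ‖x‖ := by positivity
      rw [← hB0def] at h2
      linarith
  have hcontF : ∀ x : ℝ × ℝ, ContinuousOn (fun t => F t x) (Icc a0 b0) := by
    intro x
    apply ContinuousOn.prodMk
    · exact continuousOn_const.div continuousOn_id
        (fun t ht => ne_of_gt (lt_of_lt_of_le ha0 ht.1))
    · exact (continuousOn_id.mul continuousOn_const).neg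
  -- solve the ODE globally on [a0, b0]
  obtain ⟨g, hg0, hg⟩ := global_ode F K hK1 B0 a0 b0 Rbar hRmem hlipF hcontF hBF
    (A, Rbar * d₀)
  set V1 : ℝ → ℝ := fun t => (g t).1 with hV1def
  set W : ℝ → ℝ := fun t => (g t).2 with hWdef
  have hV1R : V1 Rbar = A := by rw [hV1def]; simp [hg0]
  have hWR : W Rbar = Rbar * d₀ := by rw [hWdef]; simp [hg0]
  have hgc : ContinuousOn g (Icc a0 b0) := fun t ht => (hg t ht).continuousWithinAt
  have hgd : ∀ t ∈ Ioo a0 b0, HasDerivAt g (F t (g t)) t := fun t ht =>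
    (hg t (Ioo_subset_Icc_self ht)).hasDerivAt (Icc_mem_nhds ht.1 ht.2)
  have hV1d : ∀ t ∈ Ioo a0 b0, HasDerivAt V1 (W t / t) t := by
    intro t ht
    have h1 : HasDerivAt (fun s => (g s).1) ((F t (g t)).1) t :=
      (ContinuousLinearMap.fst ℝ ℝ ℝ).hasFDerivAt.comp_hasDerivAt t (hgd t ht)
    exact h1
  have hWd : ∀ t ∈ Ioo a0 b0, HasDerivAt W (-(t * ftil (V1 t))) t := by
    intro t ht
    have h1 : HasDerivAt (fun s => (g s).2) ((F t (g t)).2) t :=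
      (ContinuousLinearMap.snd ℝ ℝ ℝ).hasFDerivAt.comp_hasDerivAt t (hgd t ht)
    exact h1
  have hV1c : ContinuousOn V1 (Icc a0 b0) := hgc.fst
  have hWc : ContinuousOn W (Icc a0 b0) := hgc.snd
  have hsubI : Icc Rbar b0 ⊆ Icc a0 b0 := fun x hx => ⟨hab.le.trans hx.1, hx.2⟩
  have hIooI : Ioo Rbar b0 ⊆ Ioo a0 b0 := fun x hx => ⟨lt_trans hab hx.1, hx.2⟩
  -- W is antitone hence bounded by its value at Rbar
  have hWanti : AntitoneOn W (Icc Rbar b0) := by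
    apply antitoneOn_of_deriv_nonpos (convex_Icc _ _) (hWc.mono hsubI)
    · intro t ht
      rw [interior_Icc] at ht
      exact (hWd t (hIooI ht)).differentiableAt.differentiableWithinAt
    · intro t ht
      rw [interior_Icc] at ht
      rw [(hWd t (hIooI ht)).deriv]
      have ht0 : 0 < t := lt_trans hRbar ht.1
      have := hftil_nonneg (V1 t)
      nlinarith
  have hWle : ∀ t ∈ Icc Rbar b0, W t ≤ Rbar * d₀ := by
    intro t ht
    have := hWanti ⟨le_refl Rbar, hRb0.le⟩ ht ht.1
    rwa [hWR] at this
  have hWneg : ∀ t ∈ Icc Rbar b0, W t < 0 := fun t ht =>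
    lt_of_le_of_lt (hWle t ht) (by nlinarith)
  -- V1 is strictly decreasing on [Rbar, b0]
  have hV1anti : StrictAntiOn V1 (Icc Rbar b0) := by
    apply strictAntiOn_of_deriv_neg (convex_Icc _ _) (hV1c.mono hsubI)
    intro t ht
    rw [interior_Icc] at ht
    rw [(hV1d t (hIooI ht)).deriv]
    exact div_neg_of_neg_of_pos (hWneg t (Ioo_subset_Icc_self ht)) (lt_trans hRbar ht.1)
  -- logarithmic upper bound : V1 r ≤ A - m * (log r - log Rbar)
  have hlog : ∀ r ∈ Icc Rbar b0, V1 r ≤ A - m * (Real.log r - Real.log Rbar) := by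
    have hψ : AntitoneOn (fun r => V1 r - (A - m * (Real.log r - Real.log Rbar)))
        (Icc Rbar b0) := by
      apply antitoneOn_of_deriv_nonpos (convex_Icc _ _)
      · apply ContinuousOn.sub (hV1c.mono hsubI)
        apply ContinuousOn.sub continuousOn_const
        apply ContinuousOn.mul continuousOn_const
        apply ContinuousOn.sub _ continuousOn_const
        exact Real.continuousOn_log.mono (fun x hx => ne_of_gt (lt_of_lt_of_le hRbar hx.1))
      all_goals {
        intro t ht
        rw [interior_Icc] at ht
        have ht0 : 0 < t := lt_trans hRbar ht.1
        have hder : HasDerivAt (fun r => V1 r - (A - m * (Real.log r - Real.log Rbar)))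
            (W t / t - (0 - m * (t⁻¹ - 0))) t := by
          apply (hV1d t (hIooI ht)).sub
          apply HasDerivAt.sub (hasDerivAt_const t A)
          apply HasDerivAt.const_mul
          exact (Real.hasDerivAt_log (ne_of_gt ht0)).sub (hasDerivAt_const t (Real.log Rbar))
        first
        | exact hder.differentiableAt.differentiableWithinAt
        | { rw [hder.deriv]
            have h1 : W t ≤ -m := by
              have := hWle t (Ioo_subset_Icc_self ht)
              rw [hmdef]; linarith
            rw [sub_eq_add_neg, zero_sub, sub_zero, neg_neg]
            have h2 : W t / t + m * t⁻¹ = (W t + m) / t := by field_simp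
            rw [h2]
            apply div_nonpos_of_nonpos_of_nonneg (by linarith) ht0.le }
      }
    intro r hr
    have := hψ ⟨le_refl Rbar, hRb0.le⟩ hr hr.1
    dsimp only at this
    rw [hV1R] at this
    simp only [sub_self, mul_zero, sub_zero] at this
    linarith
  -- V1 is nonpositive at R1
  have hR1mem : R1 ∈ Icc Rbar b0 := ⟨hR1gt.le, by rw [hb0def]; linarith⟩
  have hV1R1 : V1 R1 ≤ 0 := by
    have h1 := hlog R1 hR1mem
    have h2 : Real.log R1 - Real.log Rbar = A / m := by
      rw [hR1def, Real.log_mul (ne_of_gt hRbar) (Real.exp_ne_zero _), Real.log_exp]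
      ring
    rw [h2] at h1
    have h3 : m * (A / m) = A := by field_simp
    rw [h3] at h1
    linarith
  -- definition of Rstar
  set S : Set ℝ := Icc Rbar R1 ∩ V1 ⁻¹' (Iic 0) with hSdef
  have hSne : S.Nonempty := ⟨R1, ⟨hR1gt.le, le_refl R1⟩, hV1R1⟩
  have hSbdd : BddBelow S := ⟨Rbar, fun x hx => hx.1.1⟩
  have hSclosed : IsClosed S := by
    apply ContinuousOn.preimage_isClosed_of_isClosed _ isClosed_Icc isClosed_Iic
    exact hV1c.mono (fun x hx => ⟨hab.le.trans hx.1, hx.2.trans hR1mem.2⟩)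
  set Rstar : ℝ := sInf S with hRstardef
  have hRstarS : Rstar ∈ S := hSclosed.csInf_mem hSne hSbdd
  have hRstar_le_R1 : Rstar ≤ R1 := hRstarS.1.2
  have hRstar_ge : Rbar ≤ Rstar := hRstarS.1.1
  have hV1Rstar_le : V1 Rstar ≤ 0 := hRstarS.2
  have hRstar_gt : Rbar < Rstar := by
    rcases eq_or_lt_of_le hRstar_ge with h | h
    · exfalso; rw [← h, hV1R] at hV1Rstar_le; linarith
    · exact h
  have hRstar_lt_b0 : Rstar < b0 := lt_of_le_of_lt hRstar_le_R1 (by rw [hb0def]; linarith)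
  have hRstarIoo : Rstar ∈ Ioo a0 b0 := ⟨lt_trans hab hRstar_gt, hRstar_lt_b0⟩
  -- positivity on [Rbar, Rstar)
  have hpos : ∀ r ∈ Ico Rbar Rstar, 0 < V1 r := by
    intro r hr
    by_contra h
    push_neg at h
    have hrS : r ∈ S := ⟨⟨hr.1, hr.2.le.trans hRstar_le_R1⟩, h⟩
    exact absurd (csInf_le hSbdd hrS) (not_le.mpr hr.2)
  -- V1 vanishes at Rstar
  have hV1Rstar : V1 Rstar = 0 := by
    refine le_antisymm hV1Rstar_le ?_
    have htend : Tendsto V1 (nhdsWithin Rstar (Iio Rstar)) (nhds (V1 Rstar)) :=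
      ((hV1d Rstar hRstarIoo).continuousAt.tendsto).mono_left nhdsWithin_le_nhds
    apply ge_of_tendsto htend
    filter_upwards [nhdsWithin_le_nhds (Ioi_mem_nhds hRstar_gt),
      self_mem_nhdsWithin] with x hx1 hx2
    exact (hpos x ⟨le_of_lt hx1, hx2⟩).le
  -- upper bound V1 r ≤ A for r in [Rbar, b0]
  have hV1le : ∀ r ∈ Icc Rbar b0, Rbar < r → V1 r < A := by
    intro r hr h
    have := hV1anti ⟨le_refl Rbar, hRb0.le⟩ hr h
    rwa [hV1R] at this
  -- the final function V, extended linearly to the left of Rbar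
  set V : ℝ → ℝ := fun t => if t < Rbar then A + (t - Rbar) * d₀ else V1 t with hVdef
  have hVeqV1 : ∀ t, Rbar ≤ t → V t = V1 t := by
    intro t ht
    rw [hVdef]; simp [not_lt.mpr ht]
  have hVR : V Rbar = A := by rw [hVeqV1 Rbar (le_refl _), hV1R]
  -- derivative of V at Rbar equals d₀
  have hWRd : W Rbar / Rbar = d₀ := by rw [hWR]; field_simp
  have hVdRbar : HasDerivAt V d₀ Rbar := by
    have hleft : HasDerivWithinAt V d₀ (Iic Rbar) Rbar := by
      have hl : HasDerivAt (fun t => A + (t - Rbar) * d₀) d₀ Rbar := by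
        have := (((hasDerivAt_id Rbar).sub_const Rbar).mul_const d₀).const_add A
        simpa using this
      apply hl.hasDerivWithinAt.congr
      · intro x hx
        rcases lt_or_eq_of_le (mem_Iic.mp hx) with h | h
        · rw [hVdef]; simp [h]
        · rw [h, hVR]; simp
      · rw [hVR]; simp
    have hright : HasDerivWithinAt V d₀ (Ici Rbar) Rbar := by
      have hr : HasDerivAt V1 d₀ Rbar := by
        have := hV1d Rbar ⟨hab, hRb0⟩
        rwa [hWRd] at this
      exact hr.hasDerivWithinAt.congr (fun x hx => hVeqV1 x hx) (hVeqV1 Rbar (le_refl _))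
    have := hleft.union hright
    rw [Iic_union_Ici] at this
    exact hasDerivWithinAt_univ.mp this
  -- eventual equality of V and V1 to the right of Rbar
  have hev : ∀ t, Rbar < t → V =ᶠ[nhds t] V1 := fun t ht =>
    eventually_of_mem (Ioi_mem_nhds ht) (fun x hx => hVeqV1 x (le_of_lt hx))
  have hderivV : ∀ t ∈ Ioo Rbar b0, deriv V t = W t / t := fun t ht => by
    rw [(hev t ht.1).deriv_eq, (hV1d t (hIooI ht)).deriv]
  -- the ODE holds on (Rbar, Rstar)
  have hODE : ∀ r ∈ Ioo Rbar Rstar, -(deriv (deriv V) r) - (1 / r) * deriv V r = f (V r) := by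
    intro r hr
    have hrb0 : r ∈ Ioo Rbar b0 := ⟨hr.1, lt_trans hr.2 hRstar_lt_b0⟩
    have hrIoo : r ∈ Ioo a0 b0 := hIooI hrb0
    have hr0 : 0 < r := lt_trans hRbar hr.1
    have hfV1 : ftil (V1 r) = f (V1 r) := by
      rw [hftildef]
      dsimp only
      rw [hclamp_id (V1 r) (hpos r ⟨hr.1.le, hr.2⟩).le
        (hV1le r ⟨hr.1.le, hrb0.2.le⟩ hr.1).le]
    have hdd : deriv (deriv V) r = deriv (fun t => W t / t) r := by
      have heq : deriv V =ᶠ[nhds r] (fun t => W t / t) :=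
        eventually_of_mem (Ioo_mem_nhds hrb0.1 hrb0.2) hderivV
      exact heq.deriv_eq
    have hdiv : HasDerivAt (fun t => W t / t)
        ((-(r * ftil (V1 r)) * r - W r * 1) / r ^ 2) r :=
      (hWd r hrIoo).div (hasDerivAt_id r) (ne_of_gt hr0)
    rw [hdd, hdiv.deriv, hderivV r hrb0, hVeqV1 r hr.1.le, ← hfV1]
    field_simp
    ring
  -- C² regularity of V1 on the open interval
  have hV1C2 : ContDiffOn ℝ 2 V1 (Ioo a0 b0) := by
    rw [show (2 : WithTop ℕ∞) = 1 + 1 by norm_num]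
    refine (contDiffOn_succ_iff_deriv_of_isOpen isOpen_Ioo).mpr ⟨?_, ?_, ?_⟩
    · exact fun t ht => (hV1d t ht).differentiableAt.differentiableWithinAt
    · intro h; simp at h
    · have hWC1 : ContDiffOn ℝ 1 W (Ioo a0 b0) := by
        rw [show (1 : WithTop ℕ∞) = 0 + 1 by norm_num]
        refine (contDiffOn_succ_iff_deriv_of_isOpen isOpen_Ioo).mpr ⟨?_, ?_, ?_⟩
        · exact fun t ht => (hWd t ht).differentiableAt.differentiableWithinAt
        · intro h; simp at h
        · rw [contDiffOn_zero]
          apply ContinuousOn.congr (f := fun t => -(t * ftil (V1 t)))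
          · apply ContinuousOn.neg
            apply continuousOn_id.mul
            exact (hf.continuous.comp hclamp_cont).comp_continuousOn
              (hV1c.mono Ioo_subset_Icc_self)
          · exact fun t ht => (hWd t ht).deriv
      have hdivC1 : ContDiffOn ℝ 1 (fun t => W t / t) (Ioo a0 b0) :=
        hWC1.div contDiffOn_id (fun t ht => ne_of_gt (lt_trans ha0 ht.1))
      exact hdivC1.congr (fun t ht => (hV1d t ht).deriv)
  have hIcoSub : Ico Rbar Rstar ⊆ Ioo a0 b0 := fun x hx =>
    ⟨lt_of_lt_of_le hab hx.1, lt_trans hx.2 hRstar_lt_b0⟩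
  have hVC2 : ContDiffOn ℝ 2 V (Ico Rbar Rstar) :=
    (hV1C2.mono hIcoSub).congr (fun x hx => hVeqV1 x hx.1)
  -- conclusion
  refine ⟨Rstar, V, hRstar_gt, hVR, ?_, hVC2, ?_, hODE, ?_, ?_⟩
  · rw [hVdRbar.deriv, hd₀def]
  · intro r hr
    rw [hVeqV1 r hr.1]
    exact hpos r hr
  · intro x hx y hy hxy
    rw [hVeqV1 x hx.1, hVeqV1 y hy.1]
    exact hV1anti ⟨hx.1, (lt_trans hx.2 hRstar_lt_b0).le⟩
      ⟨hy.1, (lt_trans hy.2 hRstar_lt_b0).le⟩ hxy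
  · have htendV1 : Tendsto V1 (nhdsWithin Rstar (Iio Rstar)) (nhds 0) := by
      have := (hV1d Rstar hRstarIoo).continuousAt.tendsto.mono_left
        (nhdsWithin_le_nhds (s := Iio Rstar))
      rwa [hV1Rstar] at this
    apply Tendsto.congr' _ htendV1
    filter_upwards [nhdsWithin_le_nhds (Ioi_mem_nhds hRstar_gt)] with x hx
    exact (hVeqV1 x (le_of_lt hx)).symm
end
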